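/- arXiv:1902.08760 — 15 statements merged into one kernel-verified Lean document; each statement's English description precedes it below -/
import Mathlib

section
/- Let X be a set and ℓ : dom(ℓ) → X a function on dom(ℓ) ⊆ X^ω. The topology τ_ℓ satisfies the separation axiom T₁ if and only if ℓ is T₁-separating, i.e., for every s ∈ dom(ℓ) and every x ∈ X with x ≠ ℓ(s), the set {n ∈ ω : s_n = x} is finite. -/
/-- The topology `τ_ℓ` satisfies the separation axiom `T₁` (all finite sets are closed) if and
only if `ℓ` is `T₁`-separating: for every `s ∈ dom ℓ` and every `x ≠ ℓ s` the set
`{n | s n = x}` is finite. -/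
theorem stmt3 {X : Type*} (D : Set (ℕ → X)) (ℓ : (ℕ → X) → X)
    (τℓ : TopologicalSpace X)
    (hτℓ : ∀ U : Set X, τℓ.IsOpen U ↔ ∀ s ∈ D, ℓ s ∈ U → {n : ℕ | s n ∉ U}.Finite) :
    (∀ F : Set X, F.Finite → @IsClosed X τℓ F) ↔
      (∀ s ∈ D, ∀ x : X, x ≠ ℓ s → {n : ℕ | s n = x}.Finite) := by
  constructor
  · intro h s hs x hx
    have hc := h {x} (Set.finite_singleton x)
    have ho : τℓ.IsOpen ({x}ᶜ) := hc.isOpen_compl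
    have := (hτℓ ({x}ᶜ)).mp ho s hs (by simpa using hx.symm)
    simpa using this
  · intro h F hF
    refine (@isOpen_compl_iff X F τℓ).mp ((hτℓ Fᶜ).mpr ?_)
    intro s hs hls
    have : {n : ℕ | s n ∉ Fᶜ} = ⋃ x ∈ F, {n : ℕ | s n = x} := by
      ext n; simp
    rw [this]
    exact Set.Finite.biUnion hF fun x hx => h s hs x (fun e => hls (e ▸ hx))
end

section
/- Let X be a set and ℓ : dom(ℓ) → X a function on dom(ℓ) ⊆ X^ω. If the topology τ_ℓ is Hausdorff, then ℓ is T₂-separating: ℓ is T₁-separating, and for any s, t ∈ dom(ℓ) with ℓ(s) ≠ ℓ(t) there exists a finite set F ⊆ ω such that s_n ≠ t_m for all n, m ∈ ω \ F. -/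
/-- If the topology `τ_ℓ` is Hausdorff, then `ℓ` is `T₂`-separating: it is `T₁`-separating and
for any `s, t ∈ dom ℓ` with `ℓ s ≠ ℓ t` there is a finite `F ⊆ ω` with `s n ≠ t m` for all
`n, m ∉ F`. -/
theorem stmt4 {X : Type*} (D : Set (ℕ → X)) (ℓ : (ℕ → X) → X)
    (τℓ : TopologicalSpace X)
    (hτℓ : ∀ U : Set X, τℓ.IsOpen U ↔ ∀ s ∈ D, ℓ s ∈ U → {n : ℕ | s n ∉ U}.Finite)
    (h2 : @T2Space X τℓ) :
    (∀ s ∈ D, ∀ x : X, x ≠ ℓ s → {n : ℕ | s n = x}.Finite) ∧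
    (∀ s ∈ D, ∀ t ∈ D, ℓ s ≠ ℓ t →
      ∃ F : Set ℕ, F.Finite ∧ ∀ n ∉ F, ∀ m ∉ F, s n ≠ t m) := by
  letI := τℓ
  constructor
  · intro s hs x hx
    have hopen : IsOpen ({x}ᶜ : Set X) := isOpen_compl_singleton
    have := (hτℓ _).mp hopen s hs (by simpa using hx.symm)
    simpa using this
  · intro s hs t ht hst
    obtain ⟨U, V, hU, hV, hsU, htV, hUV⟩ := t2_separation hst
    have h1 := (hτℓ U).mp hU s hs hsU
    have h2' := (hτℓ V).mp hV t ht htV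
    refine ⟨{n | s n ∉ U} ∪ {m | t m ∉ V}, h1.union h2', ?_⟩
    intro n hn m hm heq
    simp only [Set.mem_union, Set.mem_setOf_eq, not_or, not_not] at hn hm
    exact hUV.ne_of_mem hn.1 hm.2 heq
end

section
/- Let X be a set and ℓ : dom(ℓ) → X a T₂-separating function on dom(ℓ) ⊆ X^ω. For any s ∈ dom(ℓ) and any I ⊆ ω, the set s[I]* = {s_n : n ∈ I} ∪ {ℓ(s)} is closed in (X, τ_ℓ). -/
/-- If `ℓ` is `T₂`-separating, then for any `s ∈ dom ℓ` and `I ⊆ ω` the set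
`s[I]* = {s n : n ∈ I} ∪ {ℓ s}` is closed in `(X, τ_ℓ)`. -/
theorem stmt5 {X : Type*} (D : Set (ℕ → X)) (ℓ : (ℕ → X) → X)
    (hT1 : ∀ s ∈ D, ∀ x : X, x ≠ ℓ s → {n : ℕ | s n = x}.Finite)
    (hT2 : ∀ s ∈ D, ∀ t ∈ D, ℓ s ≠ ℓ t →
      ∃ F : Set ℕ, F.Finite ∧ ∀ n ∉ F, ∀ m ∉ F, s n ≠ t m)
    (τℓ : TopologicalSpace X)
    (hτℓ : ∀ U : Set X, τℓ.IsOpen U ↔ ∀ s ∈ D, ℓ s ∈ U → {n : ℕ | s n ∉ U}.Finite)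
    (s : ℕ → X) (hs : s ∈ D) (I : Set ℕ) :
    @IsClosed X τℓ (s '' I ∪ {ℓ s}) := by
  set A := s '' I ∪ {ℓ s} with hA
  rw [← @isOpen_compl_iff X A τℓ]
  refine (hτℓ Aᶜ).mpr ?_
  intro t ht hlt
  have hltA : ℓ t ∉ A := hlt
  have hne : ℓ s ≠ ℓ t := by
    intro h
    exact hltA (Or.inr (by simp [h]))
  obtain ⟨F, hF, hsep⟩ := hT2 s hs t ht hne
  have h1 : {m : ℕ | t m = ℓ s}.Finite :=
    hT1 t ht (ℓ s) hne
  have h2 : {m : ℕ | t m ∈ s '' I}.Finite := by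
    have hcov : {m : ℕ | t m ∈ s '' I} ⊆
        F ∪ ⋃ n ∈ {n ∈ F | s n ≠ ℓ t}, {m : ℕ | t m = s n} := by
      intro m hm
      obtain ⟨n, hnI, hn⟩ := hm
      by_cases hmF : m ∈ F
      · exact Or.inl hmF
      · by_cases hnF : n ∈ F
        · have hsn : s n ≠ ℓ t := by
            intro h
            exact hltA (h ▸ Or.inl ⟨n, hnI, rfl⟩)
          exact Or.inr (Set.mem_biUnion ⟨hnF, hsn⟩ hn.symm)
        · exact absurd hn.symm (Ne.symm (hsep n hnF m hmF))
    refine Set.Finite.subset (hF.union ?_) hcov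
    refine Set.Finite.biUnion (hF.subset (Set.sep_subset _ _)) ?_
    intro n hn
    exact hT1 t ht (s n) hn.2
  refine (h2.union h1).subset ?_
  intro m hm
  have : t m ∈ A := not_not.mp hm
  rcases this with h | h
  · exact Or.inl h
  · exact Or.inr h
end

section
/- Let X be a set and ℓ : dom(ℓ) → X a T₂-separating function on dom(ℓ) ⊆ X^ω. For any s ∈ dom(ℓ) and I ⊆ ω, the subspace s[I]* = {s_n : n ∈ I} ∪ {ℓ(s)} of (X, τ_ℓ) is compact and Hausdorff. -/
/-- If `ℓ` is `T₂`-separating, then for any `s ∈ dom ℓ` and `I ⊆ ω`, the subspace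
`s[I]* = {s n : n ∈ I} ∪ {ℓ s}` of `(X, τ_ℓ)` is compact and Hausdorff. -/
theorem stmt7 {X : Type*} (D : Set (ℕ → X)) (ℓ : (ℕ → X) → X)
    (hT1 : ∀ s ∈ D, ∀ x : X, x ≠ ℓ s → {n : ℕ | s n = x}.Finite)
    (hT2 : ∀ s ∈ D, ∀ t ∈ D, ℓ s ≠ ℓ t →
      ∃ F : Set ℕ, F.Finite ∧ ∀ n ∉ F, ∀ m ∉ F, s n ≠ t m)
    (τℓ : TopologicalSpace X)
    (hτℓ : ∀ U : Set X, τℓ.IsOpen U ↔ ∀ s ∈ D, ℓ s ∈ U → {n : ℕ | s n ∉ U}.Finite)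
    (s : ℕ → X) (hs : s ∈ D) (I : Set ℕ) :
    @IsCompact X τℓ (s '' I ∪ {ℓ s}) ∧
      @T2Space (↥(s '' I ∪ {ℓ s})) (τℓ.induced Subtype.val) := by
  classical
  letI := τℓ
  set S : Set X := s '' I ∪ {ℓ s} with hS
  have hℓS : ℓ s ∈ S := Or.inr rfl
  -- complements of singletons are open (T1)
  have hco : ∀ x : X, IsOpen ({x}ᶜ : Set X) := by
    intro x
    refine (hτℓ _).mpr ?_
    intro t ht hxt
    simp only [Set.mem_compl_iff, Set.mem_singleton_iff] at hxt
    have : {n : ℕ | t n ∉ ({x}ᶜ : Set X)} = {n : ℕ | t n = x} := by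
      ext n; simp
    rw [this]
    exact hT1 t ht x (Ne.symm hxt)
  -- key open sets: for x ≠ ℓ s, {x} ∪ Sᶜ is open
  have hkey : ∀ x : X, x ≠ ℓ s → IsOpen (({x} ∪ Sᶜ : Set X)) := by
    intro x hx
    refine (hτℓ _).mpr ?_
    intro t ht hlt
    have hlts : ℓ t ≠ ℓ s := by
      rcases hlt with h | h
      · rw [Set.mem_singleton_iff] at h; exact h ▸ hx
      · intro he; exact h (he ▸ hℓS)
    obtain ⟨F, hF, hFne⟩ := hT2 t ht s hs hlts
    have hsub : {m : ℕ | t m ∉ ({x} ∪ Sᶜ : Set X)} ⊆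
        (F ∪ {m | t m = ℓ s}) ∪ ⋃ n ∈ F, {m | t m = s n ∧ s n ≠ ℓ t} := by
      intro m hm
      simp only [Set.mem_setOf_eq, Set.mem_union, Set.mem_singleton_iff,
        Set.mem_compl_iff, not_or, not_not] at hm
      obtain ⟨hmx, hmS⟩ := hm
      have hmlt : t m ≠ ℓ t := by
        intro he
        rcases hlt with h | h
        · rw [Set.mem_singleton_iff] at h; exact hmx (he.trans h)
        · exact h (he ▸ hmS)
      rcases hmS with ⟨n, hnI, hn⟩ | hmls
      · -- t m = s n
        by_cases hnF : n ∈ F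
        · right
          refine Set.mem_biUnion hnF ?_
          exact ⟨hn.symm, fun he => hmlt (hn.symm.trans he)⟩
        · left; left
          by_contra hmF
          exact hFne m hmF n hnF hn.symm
      · left; right
        exact hmls
    refine Set.Finite.subset ?_ hsub
    refine Set.Finite.union (Set.Finite.union hF (hT1 t ht (ℓ s) hlts.symm)) ?_
    refine Set.Finite.biUnion hF ?_
    intro n _
    by_cases h : s n = ℓ t
    · have : {m | t m = s n ∧ s n ≠ ℓ t} = ∅ := by
        ext m; simp [h]
      rw [this]; exact Set.finite_empty
    · exact (hT1 t ht (s n) h).subset (fun m hm => hm.1)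
  constructor
  · -- compactness
    rw [isCompact_iff_finite_subcover]
    intro ι U hU hcov
    have hℓ : ℓ s ∈ ⋃ i, U i := hcov hℓS
    obtain ⟨i₀, hi₀⟩ := Set.mem_iUnion.mp hℓ
    have hN : {n : ℕ | s n ∉ U i₀}.Finite := (hτℓ (U i₀)).mp (hU i₀) s hs hi₀
    set f : ℕ → ι := fun n => if h : ∃ i, s n ∈ U i then h.choose else i₀ with hf
    refine ⟨insert i₀ (hN.toFinset.image f), ?_⟩
    intro z hz
    rcases hz with ⟨n, hnI, rfl⟩ | hz
    · by_cases h : s n ∈ U i₀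
      · exact Set.mem_biUnion (Finset.mem_insert_self _ _) h
      · have hex : ∃ i, s n ∈ U i := Set.mem_iUnion.mp (hcov (Or.inl ⟨n, hnI, rfl⟩))
        have hfn : s n ∈ U (f n) := by
          rw [hf]; simp only [dif_pos hex]; exact hex.choose_spec
        refine Set.mem_biUnion ?_ hfn
        exact Finset.mem_insert_of_mem
          (Finset.mem_image_of_mem f (hN.mem_toFinset.mpr h))
    · rw [Set.mem_singleton_iff] at hz
      exact hz ▸ Set.mem_biUnion (Finset.mem_insert_self _ _) hi₀
  · -- Hausdorff
    constructor
    intro a b hab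
    have hab' : (a : X) ≠ (b : X) := fun h => hab (Subtype.ext h)
    by_cases ha : (a : X) = ℓ s
    · have hb : (b : X) ≠ ℓ s := fun h => hab' (ha.trans h.symm)
      refine ⟨Subtype.val ⁻¹' ({(b : X)}ᶜ), Subtype.val ⁻¹' ({(b : X)} ∪ Sᶜ),
        (hco _).preimage continuous_subtype_val,
        (hkey _ hb).preimage continuous_subtype_val,
        hab', Or.inl rfl, ?_⟩
      rw [Set.disjoint_left]
      rintro z hz1 (hz2 | hz2)
      · exact hz1 hz2
      · exact hz2 z.2
    · by_cases hb : (b : X) = ℓ s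
      · refine ⟨Subtype.val ⁻¹' ({(a : X)} ∪ Sᶜ), Subtype.val ⁻¹' ({(a : X)}ᶜ),
          (hkey _ ha).preimage continuous_subtype_val,
          (hco _).preimage continuous_subtype_val,
          Or.inl rfl, Ne.symm hab', ?_⟩
        rw [Set.disjoint_left]
        rintro z (hz1 | hz1) hz2
        · exact hz2 hz1
        · exact hz1 z.2
      · refine ⟨Subtype.val ⁻¹' ({(a : X)} ∪ Sᶜ), Subtype.val ⁻¹' ({(b : X)} ∪ Sᶜ),
          (hkey _ ha).preimage continuous_subtype_val,
          (hkey _ hb).preimage continuous_subtype_val,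
          Or.inl rfl, Or.inl rfl, ?_⟩
        rw [Set.disjoint_left]
        rintro z (hz1 | hz1) (hz2 | hz2)
        · simp only [Set.mem_singleton_iff] at hz1 hz2
          exact hab' (hz1.symm.trans hz2)
        · exact hz2 z.2
        · exact hz1 z.2
        · exact hz1 z.2
end

section
/- If A and B are closed subsets of a topological space T such that the subspaces A and B are each Hausdorff, then the subspace A ∪ B is Hausdorff. -/
/-! A space is Hausdorff iff its diagonal is closed. The diagonal of `A ∪ B` is the trace of
`(Δ ∩ A × A) ∪ (Δ ∩ B × B)`, and each piece is closed in `T × T`, being the image of the closed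
diagonal of a Hausdorff subspace under the closed embedding `A × A ↪ T × T`. -/

open Set Topology

theorem isClosed_diagonal_inter_prod_self {X : Type*} [TopologicalSpace X] {s : Set X}
    (hs : IsClosed s) [T2Space s] : IsClosed (diagonal X ∩ s ×ˢ s) := by
  have himage : diagonal X ∩ s ×ˢ s = Prod.map (↑) (↑) '' diagonal s := by
    ext ⟨x, y⟩
    simp only [mem_inter_iff, mem_diagonal_iff, mem_prod, mem_image, Prod.map, Prod.mk.injEq]
    constructor
    · rintro ⟨rfl, hx, -⟩
      exact ⟨(⟨x, hx⟩, ⟨x, hx⟩), rfl, rfl, rfl⟩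
    · rintro ⟨⟨a, b⟩, rfl : a = b, rfl, rfl⟩
      exact ⟨rfl, a.2, a.2⟩
  rw [himage]
  exact (hs.isClosedEmbedding_subtypeVal.prodMap hs.isClosedEmbedding_subtypeVal).isClosedMap _
    isClosed_diagonal

/-- The union of two closed Hausdorff subspaces of a topological space is Hausdorff. -/
theorem stmt8 {T : Type*} [TopologicalSpace T] (A B : Set T)
    (hA : IsClosed A) (hB : IsClosed B)
    (hAT2 : T2Space ↥A) (hBT2 : T2Space ↥B) :
    T2Space ↥(A ∪ B) := by
  have hdiag : diagonal ↥(A ∪ B) =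
      Prod.map (↑) (↑) ⁻¹' (diagonal T ∩ A ×ˢ A ∪ diagonal T ∩ B ×ˢ B) := by
    ext ⟨⟨x, hx⟩, ⟨y, hy⟩⟩
    simp only [mem_diagonal_iff, mem_preimage, Prod.map, Subtype.mk.injEq, mem_union,
      mem_inter_iff, mem_prod]
    constructor
    · rintro rfl
      rcases hx with hx | hx <;> simp [hx]
    · rintro (⟨rfl, -⟩ | ⟨rfl, -⟩) <;> rfl
  rw [t2_iff_isClosed_diagonal, hdiag]
  exact ((isClosed_diagonal_inter_prod_self hA).union
    (isClosed_diagonal_inter_prod_self hB)).preimage (by fun_prop)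
end

section
/- Let X be a set and ℓ : dom(ℓ) → X a T₂-separating function defined on a countable subset dom(ℓ) ⊆ X^ω. Then the topology τ_ℓ is Hausdorff and normal. -/
open Set

/-- A set `A` is "small" for `(D, ℓ)` if every sequence in `D` whose limit lies outside `A`
meets `A` only finitely often. -/
private def IsSmall {X : Type*} (D : Set (ℕ → X)) (ℓ : (ℕ → X) → X) (A : Set X) : Prop :=
  ∀ s ∈ D, ℓ s ∉ A → {n | s n ∈ A}.Finite

private lemma small_union_tail {X : Type*} {D : Set (ℕ → X)} {ℓ : (ℕ → X) → X}
    (hT1 : ∀ s ∈ D, ∀ x : X, x ≠ ℓ s → {n : ℕ | s n = x}.Finite)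
    (hT2 : ∀ s ∈ D, ∀ t ∈ D, ℓ s ≠ ℓ t →
      ∃ F : Set ℕ, F.Finite ∧ ∀ n ∉ F, ∀ m ∉ F, s n ≠ t m)
    {A : Set X} (hA : IsSmall D ℓ A) {s : ℕ → X} (hs : s ∈ D) (hℓ : ℓ s ∈ A) (N : ℕ) :
    IsSmall D ℓ (A ∪ {x | ∃ n, N ≤ n ∧ s n = x}) := by
  intro t ht hlt
  set T : Set X := {x | ∃ n, N ≤ n ∧ s n = x} with hT
  have hltA : ℓ t ∉ A := fun h => hlt (Or.inl h)
  have hltT : ℓ t ∉ T := fun h => hlt (Or.inr h)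
  have h1 : {n | t n ∈ A}.Finite := hA t ht hltA
  have hne : ℓ s ≠ ℓ t := fun h => hltA (h ▸ hℓ)
  obtain ⟨F, hF, hFsep⟩ := hT2 s hs t ht hne
  have h2 : {m | t m ∈ T} ⊆ F ∪ ⋃ n ∈ F, {m | t m = s n ∧ t m ∈ T} := by
    intro m hm
    by_cases hmF : m ∈ F
    · exact Or.inl hmF
    · obtain ⟨n, hn, hsn⟩ := hm
      have hnF : n ∈ F := by
        by_contra hnF
        exact hFsep n hnF m hmF hsn
      exact Or.inr (mem_biUnion hnF ⟨hsn.symm, ⟨n, hn, hsn⟩⟩)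
  have h3 : (F ∪ ⋃ n ∈ F, {m | t m = s n ∧ t m ∈ T}).Finite := by
    refine hF.union (hF.biUnion fun n hn => ?_)
    by_cases hx : s n = ℓ t
    · have : {m | t m = s n ∧ t m ∈ T} = ∅ := by
        ext m
        simp only [mem_setOf_eq, mem_empty_iff_false, iff_false, not_and]
        intro hm hmT
        exact hltT (by rw [← hx, ← hm]; exact hmT)
      rw [this]; exact finite_empty
    · exact (hT1 t ht (s n) hx).subset fun m hm => hm.1
  have h4 : {n | t n ∈ A ∪ T} ⊆ {n | t n ∈ A} ∪ (F ∪ ⋃ n ∈ F, {m | t m = s n ∧ t m ∈ T}) := by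
    intro m hm
    rcases hm with hm | hm
    · exact Or.inl hm
    · exact Or.inr (h2 hm)
  exact (h1.union h3).subset h4

private lemma sep_exists {X : Type*} {D : Set (ℕ → X)} {ℓ : (ℕ → X) → X}
    (hT1 : ∀ s ∈ D, ∀ x : X, x ≠ ℓ s → {n : ℕ | s n = x}.Finite)
    (hT2 : ∀ s ∈ D, ∀ t ∈ D, ℓ s ≠ ℓ t →
      ∃ F : Set ℕ, F.Finite ∧ ∀ n ∉ F, ∀ m ∉ F, s n ≠ t m)
    (e : ℕ → (ℕ → X)) (he : D = Set.range e)
    (E F : Set X) (hEF : E ∩ F = ∅) (hE : IsSmall D ℓ E) (hF : IsSmall D ℓ F) :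
    ∃ U V : Set X, E ⊆ U ∧ F ⊆ V ∧ U ∩ V = ∅ ∧
      (∀ s ∈ D, ℓ s ∈ U → {n : ℕ | s n ∉ U}.Finite) ∧
      (∀ s ∈ D, ℓ s ∈ V → {n : ℕ | s n ∉ V}.Finite) := by
  set Inv : Set X × Set X → Prop :=
    fun p => p.1 ∩ p.2 = ∅ ∧ IsSmall D ℓ p.1 ∧ IsSmall D ℓ p.2 with hInv
  have step : ∀ p : Set X × Set X, Inv p → ∀ i : ℕ,
      ∃ q : Set X × Set X, Inv q ∧ p.1 ⊆ q.1 ∧ p.2 ⊆ q.2 ∧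
        (ℓ (e i) ∈ p.1 → ∃ N, ∀ n, N ≤ n → e i n ∈ q.1) ∧
        (ℓ (e i) ∈ p.2 → ∃ N, ∀ n, N ≤ n → e i n ∈ q.2) := by
    rintro ⟨U, V⟩ ⟨hdisj, hU, hV⟩ i
    have hsD : e i ∈ D := he ▸ mem_range_self i
    by_cases h1 : ℓ (e i) ∈ U
    · have hlV : ℓ (e i) ∉ V := fun h => by
        have : ℓ (e i) ∈ U ∩ V := ⟨h1, h⟩
        rw [hdisj] at this; exact this
      have hfin : {n | e i n ∈ V}.Finite := hV (e i) hsD hlV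
      obtain ⟨N, hN⟩ : ∃ N, ∀ n, N ≤ n → e i n ∉ V := by
        obtain ⟨N, hN⟩ := hfin.bddAbove
        exact ⟨N + 1, fun n hn hmem => absurd (hN hmem) (by omega)⟩
      refine ⟨(U ∪ {x | ∃ n, N ≤ n ∧ e i n = x}, V), ⟨?_, ?_, hV⟩,
        subset_union_left, subset_rfl, fun _ => ⟨N, fun n hn => Or.inr ⟨n, hn, rfl⟩⟩,
        fun h => absurd h hlV⟩
      · ext x
        simp only [mem_inter_iff, mem_union, mem_setOf_eq, mem_empty_iff_false, iff_false,
          not_and]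
        rintro (hx | ⟨n, hn, rfl⟩)
        · intro hxV
          have : x ∈ U ∩ V := ⟨hx, hxV⟩
          rw [hdisj] at this; exact this
        · exact hN n hn
      · exact small_union_tail hT1 hT2 hU hsD h1 N
    · by_cases h2 : ℓ (e i) ∈ V
      · have hfin : {n | e i n ∈ U}.Finite := hU (e i) hsD h1
        obtain ⟨N, hN⟩ : ∃ N, ∀ n, N ≤ n → e i n ∉ U := by
          obtain ⟨N, hN⟩ := hfin.bddAbove
          exact ⟨N + 1, fun n hn hmem => absurd (hN hmem) (by omega)⟩
        refine ⟨(U, V ∪ {x | ∃ n, N ≤ n ∧ e i n = x}), ⟨?_, hU, ?_⟩,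
          subset_rfl, subset_union_left, fun h => absurd h h1,
          fun _ => ⟨N, fun n hn => Or.inr ⟨n, hn, rfl⟩⟩⟩
        · ext x
          simp only [mem_inter_iff, mem_union, mem_setOf_eq, mem_empty_iff_false, iff_false,
            not_and]
          intro hxU
          rintro (hx | ⟨n, hn, rfl⟩)
          · have : x ∈ U ∩ V := ⟨hxU, hx⟩
            rw [hdisj] at this; exact this
          · exact hN n hn hxU
        · exact small_union_tail hT1 hT2 hV hsD h2 N
      · exact ⟨(U, V), ⟨hdisj, hU, hV⟩, subset_rfl, subset_rfl,
          fun h => absurd h h1, fun h => absurd h h2⟩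
  choose q hq0 hq1 hq2 hq3 hq4 using step
  let seq : ℕ → {p : Set X × Set X // Inv p} := fun k =>
    Nat.rec ⟨(E, F), ⟨hEF, hE, hF⟩⟩
      (fun k p => ⟨q p.1 p.2 (Nat.unpair k).1, hq0 p.1 p.2 (Nat.unpair k).1⟩) k
  have hseq : ∀ k, seq (k + 1) =
      ⟨q (seq k).1 (seq k).2 (Nat.unpair k).1, hq0 (seq k).1 (seq k).2 (Nat.unpair k).1⟩ :=
    fun k => rfl
  have hmono1 : ∀ k, ((seq k).1).1 ⊆ ((seq (k + 1)).1).1 := by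
    intro k
    rw [hseq k]
    exact hq1 (seq k).1 (seq k).2 (Nat.unpair k).1
  have hmono2 : ∀ k, ((seq k).1).2 ⊆ ((seq (k + 1)).1).2 := by
    intro k
    rw [hseq k]
    exact hq2 (seq k).1 (seq k).2 (Nat.unpair k).1
  have hmono1' : ∀ a b, a ≤ b → ((seq a).1).1 ⊆ ((seq b).1).1 := by
    intro a b hab
    induction b, hab using Nat.le_induction with
    | base => exact subset_rfl
    | succ b hab ih => exact ih.trans (hmono1 b)
  have hmono2' : ∀ a b, a ≤ b → ((seq a).1).2 ⊆ ((seq b).1).2 := by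
    intro a b hab
    induction b, hab using Nat.le_induction with
    | base => exact subset_rfl
    | succ b hab ih => exact ih.trans (hmono2 b)
  refine ⟨⋃ k, ((seq k).1).1, ⋃ k, ((seq k).1).2, ?_, ?_, ?_, ?_, ?_⟩
  · exact subset_iUnion_of_subset 0 subset_rfl
  · exact subset_iUnion_of_subset 0 subset_rfl
  · ext x
    simp only [mem_inter_iff, mem_iUnion, mem_empty_iff_false, iff_false, not_and]
    rintro ⟨a, ha⟩ ⟨b, hb⟩
    have hx : x ∈ ((seq (max a b)).1).1 ∩ ((seq (max a b)).1).2 :=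
      ⟨hmono1' a _ (le_max_left a b) ha, hmono2' b _ (le_max_right a b) hb⟩
    rw [(seq (max a b)).2.1] at hx
    exact hx
  · intro s hsD hls
    rw [he] at hsD
    obtain ⟨i, rfl⟩ := hsD
    simp only [mem_iUnion] at hls
    obtain ⟨k, hk⟩ := hls
    set j := Nat.pair i k with hj
    have hkj : k ≤ j := Nat.right_le_pair i k
    have hlj : ℓ (e i) ∈ ((seq j).1).1 := hmono1' k j hkj hk
    have hui : (Nat.unpair j).1 = i := by rw [hj, Nat.unpair_pair]
    obtain ⟨N, hN⟩ := hq3 (seq j).1 (seq j).2 (Nat.unpair j).1 (by rw [hui]; exact hlj)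
    have hsub : {n : ℕ | e i n ∉ ⋃ k, ((seq k).1).1} ⊆ {n | n < N} := by
      intro n hn
      by_contra hnN
      simp only [mem_setOf_eq, not_lt] at hnN
      apply hn
      refine mem_iUnion.mpr ⟨j + 1, ?_⟩
      rw [hseq j, ← hui]
      exact hN n hnN
    exact (finite_Iio N).subset hsub
  · intro s hsD hls
    rw [he] at hsD
    obtain ⟨i, rfl⟩ := hsD
    simp only [mem_iUnion] at hls
    obtain ⟨k, hk⟩ := hls
    set j := Nat.pair i k with hj
    have hkj : k ≤ j := Nat.right_le_pair i k
    have hlj : ℓ (e i) ∈ ((seq j).1).2 := hmono2' k j hkj hk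
    have hui : (Nat.unpair j).1 = i := by rw [hj, Nat.unpair_pair]
    obtain ⟨N, hN⟩ := hq4 (seq j).1 (seq j).2 (Nat.unpair j).1 (by rw [hui]; exact hlj)
    have hsub : {n : ℕ | e i n ∉ ⋃ k, ((seq k).1).2} ⊆ {n | n < N} := by
      intro n hn
      by_contra hnN
      simp only [mem_setOf_eq, not_lt] at hnN
      apply hn
      refine mem_iUnion.mpr ⟨j + 1, ?_⟩
      rw [hseq j, ← hui]
      exact hN n hnN
    exact (finite_Iio N).subset hsub

/-- If `ℓ` is `T₂`-separating and `dom ℓ` is countable, then the topology `τ_ℓ` is Hausdorff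
and normal. -/
theorem stmt9 {X : Type*} (D : Set (ℕ → X)) (hD : D.Countable) (ℓ : (ℕ → X) → X)
    (hT1 : ∀ s ∈ D, ∀ x : X, x ≠ ℓ s → {n : ℕ | s n = x}.Finite)
    (hT2 : ∀ s ∈ D, ∀ t ∈ D, ℓ s ≠ ℓ t →
      ∃ F : Set ℕ, F.Finite ∧ ∀ n ∉ F, ∀ m ∉ F, s n ≠ t m)
    (τℓ : TopologicalSpace X)
    (hτℓ : ∀ U : Set X, τℓ.IsOpen U ↔ ∀ s ∈ D, ℓ s ∈ U → {n : ℕ | s n ∉ U}.Finite) :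
    @T2Space X τℓ ∧ @NormalSpace X τℓ := by
  letI := τℓ
  -- T₁: every singleton is closed, by `hT1`
  have hT1' : T1Space X := by
    refine ⟨fun x => ?_⟩
    rw [← isOpen_compl_iff]
    refine (hτℓ _).mpr ?_
    intro s hs hls
    have : {n : ℕ | s n ∉ ({x} : Set X)ᶜ} = {n : ℕ | s n = x} := by
      ext n; simp
    rw [this]
    exact hT1 s hs x ((by simpa using hls : ℓ s ≠ x).symm)
  rcases D.eq_empty_or_nonempty with hDe | hDne
  · -- degenerate case: every set is open
    have hall : ∀ U : Set X, IsOpen U := fun U => (hτℓ U).2 (by simp [hDe])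
    have hnorm : NormalSpace X := by
      refine ⟨fun s t _ _ hst => ⟨s, sᶜ, hall s, hall sᶜ, subset_rfl, ?_, disjoint_compl_right⟩⟩
      exact Set.disjoint_left.mp hst.symm
    haveI := hnorm
    haveI : T4Space X := ⟨⟩
    exact ⟨inferInstance, hnorm⟩
  · obtain ⟨e, he⟩ := hD.exists_eq_range hDne
    have closed_small : ∀ A : Set X, IsClosed A → IsSmall D ℓ A := by
      intro A hA s hs hls
      have := ((hτℓ Aᶜ).1 hA.isOpen_compl) s hs (by simpa using hls)
      simpa using this
    have hnorm : NormalSpace X := by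
      refine ⟨fun s t hs ht hst => ?_⟩
      obtain ⟨U, V, hsU, htV, hUV, hUopen, hVopen⟩ :=
        sep_exists hT1 hT2 e he s t (Set.disjoint_iff_inter_eq_empty.mp hst)
          (closed_small s hs) (closed_small t ht)
      exact ⟨U, V, (hτℓ U).2 hUopen, (hτℓ V).2 hVopen, hsU, htV,
        Set.disjoint_iff_inter_eq_empty.mpr hUV⟩
    haveI := hnorm
    haveI : T4Space X := ⟨⟩
    exact ⟨inferInstance, hnorm⟩
end

section
/- Let X be a set and ℓ : dom(ℓ) → X a function defined on a countable subset dom(ℓ) ⊆ X^ω. The following are equivalent: (1) X admits a metrizable topology in which every sequence s ∈ dom(ℓ) converges to ℓ(s); (2) X admits a Hausdorff topology in which every sequence s ∈ dom(ℓ) converges to ℓ(s); (3) for every s ∈ dom(ℓ) and x ≠ ℓ(s) the set {n : s_n = x} is finite, and for any s, t ∈ dom(ℓ) with ℓ(s) ≠ ℓ(t) there exists a finite F ⊆ ω such that s_n ≠ t_m for all n, m ∈ ω \ F. -/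
/-!
(2) ⇒ (3): a Hausdorff limit is unique, so a convergent sequence takes any other value only
finitely often, and disjoint neighbourhoods of distinct limits separate the tails.

(3) ⇒ (1): call `S` sequentially clopen if every `s ∈ D` lies eventually in `S` exactly when `ℓ s`
does. Countably many such sets separate the countably many points occurring as terms or limits;
sending a point to its membership pattern in them, and keeping the remaining points isolated,
embeds `X` into a metrizable space, and the induced topology works. To separate `x` from `y`,
enumerate `D` as `e 0, e 1, …` and cut each `e j` down to the terms that, unless equal to its
limit, avoid `x`, `y` and every earlier sequence with another limit (and that limit); by (3)
only finitely many terms go. The resulting cluster (limit plus remaining terms) meets earlier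
clusters only where they contain its limit, so the clusters, together with `{x}` and `{y}`, can be
2-coloured greedily with `x` and `y` in different colours, and a colour class is the set sought.
-/

open Filter

section

open Set Topology TopologicalSpace

variable {X : Type*}

def IsT2Separating (D : Set (ℕ → X)) (ℓ : (ℕ → X) → X) : Prop :=
  (∀ s ∈ D, ∀ x : X, x ≠ ℓ s → {n : ℕ | s n = x}.Finite) ∧
    ∀ s ∈ D, ∀ t ∈ D, ℓ s ≠ ℓ t → ∃ F : Set ℕ, F.Finite ∧ ∀ n ∉ F, ∀ m ∉ F, s n ≠ t m

def IsSeqClopen (D : Set (ℕ → X)) (ℓ : (ℕ → X) → X) (S : Set X) : Prop :=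
  ∀ s ∈ D, ∀ᶠ n in atTop, (s n ∈ S ↔ ℓ s ∈ S)

section Hausdorff

variable [TopologicalSpace X] {s t : ℕ → X} {a b : X}

lemma Filter.Tendsto.finite_setOf_eq [T1Space X] (hs : Tendsto s atTop (𝓝 a)) {x : X}
    (hx : x ≠ a) : {n | s n = x}.Finite := by
  have hev := hs.eventually (isOpen_compl_singleton.mem_nhds hx.symm)
  rw [← Nat.cofinite_eq_atTop, eventually_cofinite] at hev
  simpa using hev

lemma Filter.Tendsto.exists_finite_forall_ne [T2Space X] (hs : Tendsto s atTop (𝓝 a))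
    (ht : Tendsto t atTop (𝓝 b)) (hab : a ≠ b) :
    ∃ F : Set ℕ, F.Finite ∧ ∀ n ∉ F, ∀ m ∉ F, s n ≠ t m := by
  obtain ⟨U, hU, V, hV, hUV⟩ := Filter.disjoint_iff.1 (disjoint_nhds_nhds.2 hab)
  rw [← Nat.cofinite_eq_atTop] at hs ht
  refine ⟨(s ⁻¹' U)ᶜ ∪ (t ⁻¹' V)ᶜ, (mem_cofinite.1 (hs hU)).union (mem_cofinite.1 (ht hV)),
    fun n hn m hm => ?_⟩
  simp only [mem_union, mem_compl_iff, mem_preimage, not_or, not_not] at hn hm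
  exact hUV.ne_of_mem hn.1 hm.2

lemma isT2Separating_of_tendsto [T2Space X] {D : Set (ℕ → X)} {ℓ : (ℕ → X) → X}
    (h : ∀ s ∈ D, Tendsto s atTop (𝓝 (ℓ s))) : IsT2Separating D ℓ :=
  ⟨fun s hs _ hx => (h s hs).finite_setOf_eq hx,
    fun s hs t ht hst => (h s hs).exists_finite_forall_ne (h t ht) hst⟩

end Hausdorff

lemma exists_metrizableSpace_tendsto_of_separating {ι : Type*} [Countable ι] (S : ι → Set X)
    (C : Set X) (hsep : ∀ a ∈ C, ∀ b ∈ C, (∀ i, a ∈ S i ↔ b ∈ S i) → a = b) :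
    ∃ τ : TopologicalSpace X, @MetrizableSpace X τ ∧ ∀ (s : ℕ → X) (a : X), (∀ n, s n ∈ C) →
      a ∈ C → (∀ i, ∀ᶠ n in atTop, (s n ∈ S i ↔ a ∈ S i)) → Tendsto s atTop (@nhds X τ a) := by
  classical
  let _ : TopologicalSpace (Option X) := ⊥
  have : DiscreteTopology (Option X) := ⟨rfl⟩
  let φ : X → (ι → Bool) × Option X :=
    fun a => (fun i => decide (a ∈ S i), if a ∈ C then none else some a)
  have hφ : Function.Injective φ := by
    intro a b hab
    simp only [φ, Prod.mk.injEq, funext_iff, decide_eq_decide] at hab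
    by_cases ha : a ∈ C <;> by_cases hb : b ∈ C <;> simp_all
    exact hsep a ha b hb hab
  let τ : TopologicalSpace X := induced φ inferInstance
  refine ⟨τ, (IsEmbedding.induced hφ).metrizableSpace, fun s a hs ha hS => ?_⟩
  rw [nhds_induced, tendsto_comap_iff, Prod.tendsto_iff, tendsto_pi_nhds]
  simp only [φ, Function.comp_def, nhds_discrete, tendsto_pure, hs, ha, if_true,
    eventually_true, and_true, decide_eq_decide]
  exact hS

section Attach

variable (K : ℕ → Set X) (z : ℕ → X)

open Classical in
noncomputable def attachColor : ℕ → Bool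
  | j => if h : ∃ j' < j, z j ∈ K j' then attachColor h.choose else decide (j = 0)
decreasing_by exact h.choose_spec.1

variable {K z}

lemma attachColor_eq_of_lt (hattach : ∀ ⦃j j'⦄, j' < j → (K j ∩ K j').Nonempty → z j ∈ K j')
    {j j' : ℕ} (hj : j' < j) (h : (K j ∩ K j').Nonempty) :
    attachColor K z j = attachColor K z j' := by
  induction j using Nat.strong_induction_on generalizing j' with
  | _ j ih =>
  have hex : ∃ j' < j, z j ∈ K j' := ⟨j', hj, hattach hj h⟩
  rw [attachColor.eq_1, dif_pos hex]
  obtain ⟨hlt, hmem⟩ := hex.choose_spec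
  rcases lt_trichotomy hex.choose j' with hlt' | heq | hgt
  · exact (ih j' hj hlt' ⟨z j, hattach hj h, hmem⟩).symm
  · rw [heq]
  · exact ih _ hlt hgt ⟨z j, hmem, hattach hj h⟩

lemma attachColor_eq (hattach : ∀ ⦃j j'⦄, j' < j → (K j ∩ K j').Nonempty → z j ∈ K j')
    {j j' : ℕ} (h : (K j ∩ K j').Nonempty) : attachColor K z j = attachColor K z j' := by
  rcases lt_trichotomy j' j with hlt | rfl | hlt
  · exact attachColor_eq_of_lt hattach hlt h
  · rfl
  · exact (attachColor_eq_of_lt hattach hlt (inter_comm (K j) (K j') ▸ h)).symm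

lemma exists_saturated_of_attach
    (hattach : ∀ ⦃j j'⦄, j' < j → (K j ∩ K j').Nonempty → z j ∈ K j') (h01 : z 1 ∉ K 0) :
    ∃ S : Set X, K 0 ⊆ S ∧ Disjoint (K 1) S ∧ ∀ j, K j ⊆ S ∨ Disjoint (K j) S := by
  have hdisj : ∀ j, attachColor K z j = false →
      Disjoint (K j) (⋃ i ∈ {i | attachColor K z i}, K i) := by
    intro j hj
    simp only [disjoint_iUnion_right, mem_ofPred_eq]
    intro i hi
    rw [Set.disjoint_iff_inter_eq_empty, ← not_nonempty_iff_eq_empty]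
    intro hne
    rw [attachColor_eq hattach hne, hi] at hj
    exact Bool.noConfusion hj
  refine ⟨⋃ i ∈ {i | attachColor K z i}, K i, subset_biUnion_of_mem ?_, hdisj 1 ?_, fun j => ?_⟩
  · rw [mem_ofPred_eq, attachColor.eq_1]; simp
  · rw [attachColor.eq_1]; simp [h01]
  · cases hj : attachColor K z j
    · exact Or.inr (hdisj j hj)
    · exact Or.inl (subset_biUnion_of_mem (u := K) hj)

end Attach

section Tails

variable {s t : ℕ → X} {z : X}

lemma finite_preimage_sdiff_singleton (hs : ∀ w, w ≠ z → {n | s n = w}.Finite) {A : Set X}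
    (hA : A.Finite) : (s ⁻¹' (A \ {z})).Finite :=
  hA.sdiff.preimage' fun w hw => hs w hw.2

lemma finite_preimage_range_sdiff_singleton (hs : ∀ w, w ≠ z → {n | s n = w}.Finite)
    {F : Set ℕ} (hF : F.Finite) (hst : ∀ n ∉ F, ∀ m ∉ F, s n ≠ t m) :
    (s ⁻¹' (range t \ {z})).Finite := by
  refine (hF.union (finite_preimage_sdiff_singleton hs (hF.image t))).subset ?_
  rintro n ⟨⟨m, hm⟩, hnz⟩
  by_cases hn : n ∈ F
  · exact Or.inl hn
  by_cases hmF : m ∈ F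
  · exact Or.inr ⟨⟨m, hmF, hm⟩, hnz⟩
  · exact absurd hm.symm (hst n hn m hmF)

end Tails

namespace IsT2Separating

variable {ℓ : (ℕ → X) → X}

theorem exists_isSeqClopen_range {e : ℕ → ℕ → X} (h : IsT2Separating (range e) ℓ) {x y : X}
    (hxy : x ≠ y) : ∃ S, IsSeqClopen (range e) ℓ S ∧ x ∈ S ∧ y ∉ S := by
  set I : ℕ → Set ℕ := fun j => {j' | j' < j ∧ ℓ (e j') ≠ ℓ (e j)}
  have hI : ∀ j, (I j).Finite := fun j => (finite_lt_nat j).subset fun _ h => h.1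
  set W : ℕ → Set X := fun j =>
    ({x, y} ∪ (fun j' => ℓ (e j')) '' I j) ∪ ⋃ j' ∈ I j, range (e j')
  have hW : ∀ j, (e j ⁻¹' (W j \ {ℓ (e j)})).Finite := by
    intro j
    have hfin := h.1 (e j) (mem_range_self j)
    simp only [W, union_sdiff_distrib, iUnion_sdiff, preimage_union, preimage_iUnion]
    refine ((finite_preimage_sdiff_singleton hfin (toFinite _)).union
      (finite_preimage_sdiff_singleton hfin ((hI j).image _))).union
      ((hI j).biUnion fun j' hj' => ?_)
    obtain ⟨F, hF, hst⟩ := h.2 (e j) (mem_range_self j) (e j') (mem_range_self j') hj'.2.symm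
    exact finite_preimage_range_sdiff_singleton hfin hF hst
  -- clusters `0` and `1` stand for the points `x` and `y`
  let K : ℕ → Set X
    | 0 => {x}
    | 1 => {y}
    | j + 2 => insert (ℓ (e j)) (e j '' (e j ⁻¹' (W j \ {ℓ (e j)}))ᶜ)
  let z : ℕ → X
    | 0 => x
    | 1 => y
    | j + 2 => ℓ (e j)
  have hcluster : ∀ j, ∀ w ∈ K (j + 2), w ∈ W j → w = ℓ (e j) := by
    rintro j w (rfl | ⟨n, hn, rfl⟩) hwW
    · rfl
    · by_contra hne
      exact hn ⟨hwW, hne⟩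
  have hattach : ∀ ⦃j j'⦄, j' < j → (K j ∩ K j').Nonempty → z j ∈ K j' := by
    rintro (_ | _ | j) (_ | _ | j') hlt ⟨w, hwj, hwj'⟩ <;> try omega
    · exact hwj.symm.trans hwj'
    · obtain rfl : w = x := hwj'
      exact (hcluster j w hwj (by simp [W])).symm
    · obtain rfl : w = y := hwj'
      exact (hcluster j w hwj (by simp [W])).symm
    · show ℓ (e j) ∈ insert (ℓ (e j')) _
      by_cases hℓ : ℓ (e j') = ℓ (e j)
      · exact hℓ ▸ mem_insert _ _
      have hj' : j' ∈ I j := ⟨by omega, hℓ⟩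
      have hwW : w ∈ W j := by
        rcases hwj' with rfl | ⟨n, -, rfl⟩
        · exact Or.inl (Or.inr ⟨j', hj', rfl⟩)
        · exact Or.inr (mem_biUnion hj' (mem_range_self n))
      exact hcluster j w hwj hwW ▸ hwj'
  obtain ⟨S, hxS, hyS, hsat⟩ := exists_saturated_of_attach hattach (by simpa [K, z] using hxy.symm)
  refine ⟨S, ?_, hxS rfl, disjoint_left.1 hyS rfl⟩
  rintro _ ⟨j, rfl⟩
  rw [← Nat.cofinite_eq_atTop]
  filter_upwards [(hW j).eventually_cofinite_notMem] with n hn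
  have hn' : e j n ∈ K (j + 2) := mem_insert_of_mem _ ⟨n, hn, rfl⟩
  rcases hsat (j + 2) with hsub | hdisj
  · exact iff_of_true (hsub hn') (hsub (mem_insert _ _))
  · exact iff_of_false (disjoint_left.1 hdisj hn') (disjoint_left.1 hdisj (mem_insert _ _))

theorem exists_isSeqClopen {D : Set (ℕ → X)} (h : IsT2Separating D ℓ) (hD : D.Countable)
    {x y : X} (hxy : x ≠ y) : ∃ S, IsSeqClopen D ℓ S ∧ x ∈ S ∧ y ∉ S := by
  rcases D.eq_empty_or_nonempty with rfl | hne
  · exact ⟨{x}, fun s hs => absurd hs (notMem_empty s), rfl, hxy.symm⟩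
  · obtain ⟨e, rfl⟩ := hD.exists_eq_range hne
    exact h.exists_isSeqClopen_range hxy

theorem exists_metrizableSpace_tendsto {D : Set (ℕ → X)} (h : IsT2Separating D ℓ)
    (hD : D.Countable) : ∃ τ : TopologicalSpace X, @MetrizableSpace X τ ∧
      ∀ s ∈ D, Tendsto s atTop (@nhds X τ (ℓ s)) := by
  set C : Set X := (⋃ s ∈ D, range s) ∪ ℓ '' D
  have hC : C.Countable := (hD.biUnion fun s _ => countable_range s).union (hD.image ℓ)
  set P : Set (X × X) := {p | p.1 ∈ C ∧ p.2 ∈ C ∧ p.1 ≠ p.2}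
  have : Countable P := ((hC.prod hC).mono fun _ hp => (⟨hp.1, hp.2.1⟩ : _ ∧ _)).to_subtype
  choose S hS using fun p : P => h.exists_isSeqClopen hD p.2.2.2
  have hsep : ∀ a ∈ C, ∀ b ∈ C, (∀ p, a ∈ S p ↔ b ∈ S p) → a = b := by
    intro a ha b hb hab
    by_contra hne
    have hp := hS ⟨(a, b), ha, hb, hne⟩
    exact hp.2.2 ((hab _).1 hp.2.1)
  obtain ⟨τ, hτ, hconv⟩ := exists_metrizableSpace_tendsto_of_separating S C hsep
  exact ⟨τ, hτ, fun s hs => hconv s (ℓ s) (fun n => Or.inl (mem_biUnion hs (mem_range_self n)))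
    (Or.inr (mem_image_of_mem ℓ hs)) fun p => (hS p).1 s hs⟩

end IsT2Separating

end

/-- For a set `X` and a function `ℓ` on a countable set of sequences `D ⊆ X^ω`,
the following are equivalent:
(1) `X` admits a metrizable topology in which every `s ∈ D` converges to `ℓ s`;
(2) `X` admits a Hausdorff topology in which every `s ∈ D` converges to `ℓ s`;
(3) `ℓ` is `T₂`-separating. -/
theorem stmt10 {X : Type*} (D : Set (ℕ → X)) (hD : D.Countable) (ℓ : (ℕ → X) → X) :
    ((∃ τ : TopologicalSpace X, @TopologicalSpace.MetrizableSpace X τ ∧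
        ∀ s ∈ D, Tendsto s atTop (@nhds X τ (ℓ s))) ↔
      ((∀ s ∈ D, ∀ x : X, x ≠ ℓ s → {n : ℕ | s n = x}.Finite) ∧
       (∀ s ∈ D, ∀ t ∈ D, ℓ s ≠ ℓ t →
         ∃ F : Set ℕ, F.Finite ∧ ∀ n ∉ F, ∀ m ∉ F, s n ≠ t m))) ∧
    ((∃ τ : TopologicalSpace X, @T2Space X τ ∧
        ∀ s ∈ D, Tendsto s atTop (@nhds X τ (ℓ s))) ↔
      ((∀ s ∈ D, ∀ x : X, x ≠ ℓ s → {n : ℕ | s n = x}.Finite) ∧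
       (∀ s ∈ D, ∀ t ∈ D, ℓ s ≠ ℓ t →
         ∃ F : Set ℕ, F.Finite ∧ ∀ n ∉ F, ∀ m ∉ F, s n ≠ t m))) := by
  have metrizable_t2 : (∃ τ : TopologicalSpace X, @TopologicalSpace.MetrizableSpace X τ ∧
      ∀ s ∈ D, Tendsto s atTop (@nhds X τ (ℓ s))) →
      ∃ τ : TopologicalSpace X, @T2Space X τ ∧ ∀ s ∈ D, Tendsto s atTop (@nhds X τ (ℓ s)) :=
    fun ⟨τ, _, hτ⟩ => ⟨τ, inferInstance, hτ⟩
  have t2_separating : (∃ τ : TopologicalSpace X, @T2Space X τ ∧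
      ∀ s ∈ D, Tendsto s atTop (@nhds X τ (ℓ s))) → IsT2Separating D ℓ :=
    fun ⟨τ, hT2, hτ⟩ => @isT2Separating_of_tendsto _ τ hT2 _ _ hτ
  have separating_metrizable (h : IsT2Separating D ℓ) := h.exists_metrizableSpace_tendsto hD
  exact ⟨⟨t2_separating ∘ metrizable_t2, separating_metrizable⟩,
    ⟨t2_separating, metrizable_t2 ∘ separating_metrizable⟩⟩
end

section
/- There exists a T₂-separating function ℓ : dom(ℓ) → {0,1} ⊆ ω defined on a subset dom(ℓ) ⊆ ω^ω of cardinality ℵ₁ such that the largest ℓ-admissible topology τ_ℓ on ω is not Hausdorff. -/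
open Set Cardinal Ordinal

lemma one_add_not_le {a : ℕ} : ¬ (1 + a ≤ a) := by omega

/-- Stage lemma: given a countable a.d. family of functions, we can add one more
    function which moreover agrees with all but finitely many of them beyond any point. -/
lemma stageLemma (S : Set (ℕ → ℕ)) (hc : S.Countable)
    (hAD : ∀ g ∈ S, ∀ h ∈ S, g ≠ h → {m | g m = h m}.Finite) :
    ∃ f : ℕ → ℕ, (∀ g ∈ S, {m | f m = g m}.Finite) ∧
      ∀ n : ℕ, {g ∈ S | ∀ m, n ≤ m → f m ≠ g m}.Finite := by
  classical
  rcases Set.finite_or_infinite S with hfin | hinf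
  · refine ⟨fun p => 1 + hfin.toFinset.sup (fun g => g p), ?_, ?_⟩
    · intro g hg
      refine Set.Finite.subset finite_empty ?_
      intro p hp
      exfalso
      have hp' : 1 + hfin.toFinset.sup (fun g => g p) = g p := hp
      have hle : g p ≤ hfin.toFinset.sup (fun g => g p) :=
        Finset.le_sup (s := hfin.toFinset) (f := fun q : ℕ → ℕ => q p)
          (hfin.mem_toFinset.mpr hg)
      rw [← hp'] at hle
      exact one_add_not_le hle
    · intro n
      exact hfin.subset (sep_subset _ _)
  · -- S is countably infinite
    have : Nonempty (ℕ ≃ S) := by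
      haveI := hc.to_subtype
      haveI := hinf.to_subtype
      exact ⟨(nonempty_equiv_of_countable).some⟩
    obtain ⟨e⟩ := this
    set g : ℕ → ℕ → ℕ := fun i => (e i : ℕ → ℕ) with hg
    have ginj : Function.Injective g := fun i j h => by
      have : (e i : ℕ → ℕ) = (e j : ℕ → ℕ) := h
      exact e.injective (Subtype.ext this)
    have gmem : ∀ i, g i ∈ S := fun i => (e i).2
    have gsurj : ∀ h ∈ S, ∃ i, g i = h := fun h hh => ⟨e.symm ⟨h, hh⟩, by simp [hg]⟩
    -- bounds beyond which earlier functions pairwise disagree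
    have hb : ∀ i : ℕ, ∃ N : ℕ, ∀ j k, j < k → k ≤ i → ∀ p, N ≤ p → g j p ≠ g k p := by
      intro i
      have hA : {p | ∃ j k, j < k ∧ k ≤ i ∧ g j p = g k p}.Finite := by
        have : {p | ∃ j k, j < k ∧ k ≤ i ∧ g j p = g k p} ⊆
            ⋃ j ∈ Finset.range (i+1), ⋃ k ∈ Finset.range (i+1),
              {p | g j p = g k p ∧ j ≠ k} := by
          rintro p ⟨j, k, hjk, hki, hp⟩
          simp only [mem_iUnion, Finset.mem_range]
          exact ⟨j, by omega, k, by omega, hp, by omega⟩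
        refine (Set.Finite.biUnion (Finset.range (i+1)).finite_toSet fun j _ =>
          Set.Finite.biUnion (Finset.range (i+1)).finite_toSet fun k _ => ?_).subset this
        by_cases hjk : j = k
        · subst hjk; simp
        · exact (hAD (g j) (gmem j) (g k) (gmem k) (fun h => hjk (ginj h))).subset
            (fun p hp => hp.1)
      obtain ⟨N, hN⟩ := hA.bddAbove
      exact ⟨N + 1, fun j k hjk hki p hp h => by
        have : p ≤ N := hN ⟨j, k, hjk, hki, h⟩
        omega⟩
    set b : ℕ → ℕ := fun i => (hb i).choose with hbdef
    have hbspec : ∀ i, ∀ j k, j < k → k ≤ i → ∀ p, b i ≤ p → g j p ≠ g k p :=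
      fun i => (hb i).choose_spec
    -- increasing sequence of "marker" points
    set m : ℕ → ℕ := fun i =>
      Nat.rec (b 0) (fun i mi => max (mi + 1) (max (i + 1) (b (i + 1)))) i with hm
    have hmsucc : ∀ i, m (i + 1) = max (m i + 1) (max (i + 1) (b (i + 1))) := fun i => rfl
    have hmono : StrictMono m := strictMono_nat_of_lt_succ (fun i => by
      rw [hmsucc]; omega)
    have hmi : ∀ i, i ≤ m i := by
      intro i
      induction i with
      | zero => exact Nat.zero_le _
      | succ k ih => rw [hmsucc]; omega
    have hmb : ∀ i, b i ≤ m i := by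
      intro i
      cases i with
      | zero => exact le_rfl
      | succ k => rw [hmsucc]; omega
    -- the new function
    set f : ℕ → ℕ := fun p =>
      if h : ∃ i, m i = p then g h.choose p
      else 1 + (Finset.range (p + 1)).sup (fun j => g j p) with hf
    have hfm : ∀ i, f (m i) = g i (m i) := by
      intro i
      have h : ∃ i', m i' = m i := ⟨i, rfl⟩
      have : h.choose = i := hmono.injective h.choose_spec
      simp only [hf, dif_pos h, this]
    have hfoff : ∀ p, (¬ ∃ i, m i = p) → ∀ j ≤ p, f p ≠ g j p := by
      intro p hp j hj
      simp only [hf, dif_neg hp]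
      have h1 : g j p ≤ (Finset.range (p + 1)).sup (fun j => g j p) :=
        Finset.le_sup (s := Finset.range (p + 1)) (f := fun j => g j p)
          (Finset.mem_range.mpr (by omega))
      intro heq
      rw [← heq] at h1
      exact one_add_not_le h1
    refine ⟨f, ?_, ?_⟩
    · intro h hh
      obtain ⟨j, rfl⟩ := gsurj h hh
      have : {p | f p = g j p} ⊆ Iio j ∪ m '' Iic j := by
        intro p hp
        by_cases hpm : ∃ i, m i = p
        · obtain ⟨i, rfl⟩ := hpm
          rcases le_or_gt i j with h' | h'
          · exact Or.inr ⟨i, h', rfl⟩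
          · exfalso
            have h1 : f (m i) = g i (m i) := hfm i
            have h2 : g j (m i) ≠ g i (m i) := hbspec i j i h' le_rfl (m i) (hmb i)
            have := hp
            simp only [mem_setOf_eq] at this
            rw [h1] at this
            exact h2 this.symm
        · rcases lt_or_ge p j with h' | h'
          · exact Or.inl h'
          · exact absurd hp (hfoff p hpm j h')
      exact ((finite_Iio j).union ((finite_Iic j).image m)).subset this
    · intro n
      have : {h | h ∈ S ∧ ∀ p, n ≤ p → f p ≠ h p} ⊆ g '' Iio n := by
        rintro h ⟨hh, hprop⟩
        obtain ⟨j, rfl⟩ := gsurj h hh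
        refine ⟨j, ?_, rfl⟩
        by_contra hj
        simp only [mem_Iio, not_lt] at hj
        exact hprop (m j) (le_trans hj (hmi j)) (hfm j)
      exact ((finite_Iio n).image g).subset this

noncomputable abbrev WW : Type := ((aleph 1).ord.ToType)

open Classical in
noncomputable def lstep (S : Set (ℕ → ℕ)) : ℕ → ℕ :=
  if h : S.Countable ∧ (∀ g ∈ S, ∀ h' ∈ S, g ≠ h' → {m | g m = h' m}.Finite)
  then (stageLemma S h.1 h.2).choose else fun _ => 0

lemma lstep_spec (S : Set (ℕ → ℕ)) (h1 : S.Countable)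
    (h2 : ∀ g ∈ S, ∀ h' ∈ S, g ≠ h' → {m | g m = h' m}.Finite) :
    (∀ g ∈ S, {m | lstep S m = g m}.Finite) ∧
      ∀ n : ℕ, {g ∈ S | ∀ m, n ≤ m → lstep S m ≠ g m}.Finite := by
  rw [lstep, dif_pos (⟨h1, h2⟩ : _ ∧ _)]
  exact (stageLemma S h1 h2).choose_spec

noncomputable def FF : WW → ℕ → ℕ :=
  (IsWellFounded.wf (α := WW) (r := (· < ·))).fix
    (fun α ih => lstep {h | ∃ β : {β : WW // β < α}, ih β.1 β.2 = h})

lemma FF_eq (α : WW) : FF α = lstep (FF '' Set.Iio α) := by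
  have h0 : FF α = lstep {h | ∃ β : {β : WW // β < α}, FF β.1 = h} :=
    WellFounded.fix_eq _ _ α
  have hset : {h | ∃ β : {β : WW // β < α}, FF β.1 = h} = FF '' Set.Iio α := by
    ext h
    constructor
    · rintro ⟨⟨β, hβ⟩, rfl⟩; exact ⟨β, hβ, rfl⟩
    · rintro ⟨β, hβ, rfl⟩; exact ⟨⟨β, hβ⟩, rfl⟩
  rw [h0, hset]

lemma Iio_countable (α : WW) : (Set.Iio α).Countable := by
  rw [countable_iff_lt_aleph_one]
  exact mk_Iio_ord_toType α

lemma WW_uncountable : ¬ (Set.univ : Set WW).Countable := by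
  rw [countable_iff_lt_aleph_one, mk_univ, mk_toType, card_ord]
  exact lt_irrefl _

lemma FF_AD' (α : WW) : ∀ β, β < α → {m | FF α m = FF β m}.Finite := by
  refine (IsWellFounded.wf (α := WW) (r := (· < ·))).induction
    (C := fun α => ∀ β, β < α → {m | FF α m = FF β m}.Finite) α ?_
  intro α ih β hβ
  have hcount : (FF '' Set.Iio α).Countable := (Iio_countable α).image FF
  have hpair : ∀ g ∈ FF '' Set.Iio α, ∀ h' ∈ FF '' Set.Iio α, g ≠ h' →
      {m | g m = h' m}.Finite := by
    rintro g ⟨β1, hβ1, rfl⟩ h' ⟨β2, hβ2, rfl⟩ hne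
    rcases lt_trichotomy β1 β2 with h | h | h
    · have := ih β2 hβ2 β1 h
      refine this.subset ?_
      intro m hm; exact hm.symm
    · exact absurd (by rw [h]) hne
    · exact ih β1 hβ1 β2 h
  have spec := lstep_spec _ hcount hpair
  rw [FF_eq α]
  exact spec.1 (FF β) ⟨β, hβ, rfl⟩

lemma FF_AD {α β : WW} (h : α ≠ β) : {m | FF α m = FF β m}.Finite := by
  rcases lt_trichotomy α β with h' | h' | h'
  · exact (FF_AD' β α h').subset (fun m hm => hm.symm)
  · exact absurd h' h
  · exact FF_AD' α β h'

lemma FF_inj : Function.Injective FF := by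
  intro α β hαβ
  by_contra hne
  have := FF_AD hne
  rw [hαβ] at this
  have huniv : {m | FF β m = FF β m} = Set.univ := by ext m; simp
  rw [huniv] at this
  exact Set.infinite_univ this

lemma FF_Luzin (α : WW) (n : ℕ) :
    {β | β < α ∧ ∀ m, n ≤ m → FF α m ≠ FF β m}.Finite := by
  have hcount : (FF '' Set.Iio α).Countable := (Iio_countable α).image FF
  have hpair : ∀ g ∈ FF '' Set.Iio α, ∀ h' ∈ FF '' Set.Iio α, g ≠ h' →
      {m | g m = h' m}.Finite := by
    rintro g ⟨β1, _, rfl⟩ h' ⟨β2, _, rfl⟩ hne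
    exact FF_AD (fun h => hne (by rw [h]))
  have spec := (lstep_spec _ hcount hpair).2 n
  rw [← FF_eq α] at spec
  have hsub : {β | β < α ∧ ∀ m, n ≤ m → FF α m ≠ FF β m} ⊆
      FF ⁻¹' {g ∈ FF '' Set.Iio α | ∀ m, n ≤ m → FF α m ≠ g m} := by
    rintro β ⟨hβ, hprop⟩
    exact ⟨⟨β, hβ, rfl⟩, hprop⟩
  exact (spec.preimage FF_inj.injOn).subset hsub

noncomputable def sseq : WW → ℕ → ℕ := fun α m => Nat.pair m (FF α m)

lemma sseq_inj : Function.Injective sseq := by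
  intro α β h
  exact FF_inj (funext fun m => (Nat.pair_eq_pair.mp (congrFun h m)).2)

lemma exists_equiv_sum : Nonempty ((WW ⊕ WW) ≃ WW) := by
  rw [← Cardinal.eq]
  simp only [mk_sum, mk_toType, card_ord, Cardinal.lift_id]
  exact add_eq_self (aleph0_le_aleph 1)

lemma range_uncountable {f : WW → WW} (hf : Function.Injective f) :
    ¬ (Set.range f).Countable := by
  rw [countable_iff_lt_aleph_one, mk_range_eq f hf, mk_toType, card_ord]
  exact lt_irrefl _

lemma tail_of_finite {A : Set ℕ} (hA : A.Finite) : ∃ N, ∀ m, N ≤ m → m ∉ A := by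
  obtain ⟨b, hb⟩ := hA.bddAbove
  exact ⟨b + 1, fun m hm hmem => by have := hb hmem; omega⟩

/-- There exists a `T₂`-separating function `ℓ : dom ℓ → {0,1} ⊆ ω` defined on a set
`dom ℓ ⊆ ω^ω` of cardinality `ℵ₁` such that the largest `ℓ`-admissible topology `τ_ℓ` on `ω`
is not Hausdorff. -/
theorem stmt11 :
    ∃ (D : Set (ℕ → ℕ)) (ℓ : (ℕ → ℕ) → ℕ),
      (∀ s ∈ D, ℓ s ∈ ({0, 1} : Set ℕ)) ∧
      Cardinal.mk ↥D = Cardinal.aleph 1 ∧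
      (∀ s ∈ D, ∀ x : ℕ, x ≠ ℓ s → {n : ℕ | s n = x}.Finite) ∧
      (∀ s ∈ D, ∀ t ∈ D, ℓ s ≠ ℓ t →
        ∃ F : Set ℕ, F.Finite ∧ ∀ n ∉ F, ∀ m ∉ F, s n ≠ t m) ∧
      (∀ τℓ : TopologicalSpace ℕ,
        (∀ U : Set ℕ, τℓ.IsOpen U ↔ ∀ s ∈ D, ℓ s ∈ U → {n : ℕ | s n ∉ U}.Finite) →
        ¬ @T2Space ℕ τℓ) := by
  classical
  obtain ⟨e2⟩ := exists_equiv_sum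
  set S0 : Set WW := Set.range (fun w => e2 (Sum.inl w)) with hS0
  set S1 : Set WW := Set.range (fun w => e2 (Sum.inr w)) with hS1
  have hS01 : ∀ α, α ∈ S0 → α ∈ S1 → False := by
    rintro α ⟨w0, hw0⟩ ⟨w1, hw1⟩
    have := e2.injective (hw0.trans hw1.symm)
    simp at this
  have hS0unc : ¬ S0.Countable :=
    range_uncountable (fun a b h => Sum.inl_injective (e2.injective h))
  have hS1unc : ¬ S1.Countable :=
    range_uncountable (fun a b h => Sum.inr_injective (e2.injective h))
  set D : Set (ℕ → ℕ) := Set.range sseq with hD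
  set ℓ : (ℕ → ℕ) → ℕ := fun t => if t ∈ sseq '' S0 then 0 else 1 with hℓ
  have hℓ0 : ∀ α ∈ S0, ℓ (sseq α) = 0 := by
    intro α hα
    simp only [hℓ]
    rw [if_pos ⟨α, hα, rfl⟩]
  have hℓ1 : ∀ α ∈ S1, ℓ (sseq α) = 1 := by
    intro α hα
    simp only [hℓ]
    rw [if_neg]
    rintro ⟨α0, hα0, heq⟩
    exact hS01 α (sseq_inj heq ▸ hα0) hα
  refine ⟨D, ℓ, ?_, ?_, ?_, ?_, ?_⟩
  · intro t _
    simp only [hℓ]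
    split <;> simp
  · rw [hD, mk_range_eq sseq sseq_inj, mk_toType, card_ord]
  · rintro t ⟨α, rfl⟩ x hx
    refine Set.Subsingleton.finite ?_
    intro a ha b hb
    exact (Nat.pair_eq_pair.mp (ha.trans hb.symm)).1
  · rintro t ⟨α, rfl⟩ t' ⟨β, rfl⟩ hne
    have hαβ : α ≠ β := fun h => hne (by rw [h])
    refine ⟨{m | FF α m = FF β m}, FF_AD hαβ, ?_⟩
    intro n hn m hm heq
    obtain ⟨h1, h2⟩ := Nat.pair_eq_pair.mp heq
    exact hn (h1 ▸ h2)
  · intro τℓ hchar hT2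
    obtain ⟨U, V, hUopen, hVopen, hU0, hV1, hUV⟩ :=
      @t2_separation ℕ τℓ hT2 0 1 (by norm_num)
    -- choice of tail bounds
    have hexU : ∀ α ∈ S0, ∃ N, ∀ m, N ≤ m → sseq α m ∈ U := by
      intro α hα
      have := (hchar U).mp hUopen (sseq α) ⟨α, rfl⟩ (by rw [hℓ0 α hα]; exact hU0)
      obtain ⟨N, hN⟩ := tail_of_finite this
      exact ⟨N, fun m hm => by_contra fun hc => hN m hm hc⟩
    have hexV : ∀ β ∈ S1, ∃ N, ∀ m, N ≤ m → sseq β m ∈ V := by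
      intro β hβ
      have := (hchar V).mp hVopen (sseq β) ⟨β, rfl⟩ (by rw [hℓ1 β hβ]; exact hV1)
      obtain ⟨N, hN⟩ := tail_of_finite this
      exact ⟨N, fun m hm => by_contra fun hc => hN m hm hc⟩
    set n0 : WW → ℕ := fun α => if h : ∃ N, ∀ m, N ≤ m → sseq α m ∈ U
      then h.choose else 0 with hn0
    set n1 : WW → ℕ := fun α => if h : ∃ N, ∀ m, N ≤ m → sseq α m ∈ V
      then h.choose else 0 with hn1
    have hn0spec : ∀ α ∈ S0, ∀ m, n0 α ≤ m → sseq α m ∈ U := by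
      intro α hα
      have h := hexU α hα
      simp only [hn0, dif_pos h]
      exact h.choose_spec
    have hn1spec : ∀ β ∈ S1, ∀ m, n1 β ≤ m → sseq β m ∈ V := by
      intro β hβ
      have h := hexV β hβ
      simp only [hn1, dif_pos h]
      exact h.choose_spec
    -- pigeonhole: uniform bounds on uncountable subsets
    have hpigeon : ∀ (S : Set WW) (nf : WW → ℕ), ¬ S.Countable →
        ∃ N, ¬ {α ∈ S | nf α = N}.Countable := by
      intro S nf hS
      by_contra hc
      push_neg at hc
      apply hS
      have : S = ⋃ N : ℕ, {α ∈ S | nf α = N} := by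
        ext α
        simp only [Set.mem_iUnion, Set.mem_setOf_eq]
        exact ⟨fun h => ⟨nf α, h, rfl⟩, fun ⟨N, h, _⟩ => h⟩
      rw [this]
      exact Set.countable_iUnion hc
    obtain ⟨N0, hN0unc⟩ := hpigeon S0 n0 hS0unc
    obtain ⟨N1, hN1unc⟩ := hpigeon S1 n1 hS1unc
    set S0' : Set WW := {α ∈ S0 | n0 α = N0} with hS0'
    set S1' : Set WW := {α ∈ S1 | n1 α = N1} with hS1'
    set N : ℕ := max N0 N1 with hN
    -- countably infinite subset T of S0'
    have hS0'inf : S0'.Infinite := fun hfin => hN0unc hfin.countable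
    set T : Set WW := Set.range (fun k => ((Set.Infinite.natEmbedding _ hS0'inf) k : WW)) with hT
    have hTsub : T ⊆ S0' := by
      rintro t ⟨k, rfl⟩
      exact ((Set.Infinite.natEmbedding _ hS0'inf) k).2
    have hTcount : T.Countable := Set.countable_range _
    have hTinf : T.Infinite :=
      Set.infinite_range_of_injective
        (Subtype.coe_injective.comp (Set.Infinite.natEmbedding _ hS0'inf).injective)
    -- an upper bound γ for T
    have hBcount : (⋃ t ∈ T, Set.Iic t).Countable := by
      refine Set.Countable.biUnion hTcount (fun t _ => ?_)
      refine ((Iio_countable t).insert t).mono ?_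
      intro x hx
      rcases eq_or_lt_of_le (Set.mem_Iic.mp hx) with h | h
      · exact Set.mem_insert_iff.mpr (Or.inl h)
      · exact Set.mem_insert_iff.mpr (Or.inr h)
    have hBne : ∃ γ : WW, γ ∉ ⋃ t ∈ T, Set.Iic t := by
      by_contra hc
      push_neg at hc
      apply WW_uncountable
      exact hBcount.mono (fun γ _ => hc γ)
    obtain ⟨γ, hγ⟩ := hBne
    have hγgt : ∀ t ∈ T, t < γ := by
      intro t ht
      by_contra hc
      push_neg at hc
      exact hγ (Set.mem_biUnion ht (Set.mem_Iic.mpr hc))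
    -- pick β ∈ S1' above γ
    have hβex : ∃ β ∈ S1', γ ≤ β := by
      by_contra hc
      push_neg at hc
      apply hN1unc
      exact (Iio_countable γ).mono (fun β hβ => Set.mem_Iio.mpr (hc β hβ))
    obtain ⟨β, hβS1', hγβ⟩ := hβex
    -- Luzin property: find α ∈ T agreeing with β beyond N
    have hbad := FF_Luzin β N
    obtain ⟨α, hαT, hαbad⟩ := (hTinf.diff hbad).nonempty
    have hαβlt : α < β := lt_of_lt_of_le (hγgt α hαT) hγβ
    have : ¬ (α < β ∧ ∀ m, N ≤ m → FF β m ≠ FF α m) := hαbad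
    push_neg at this
    obtain ⟨m, hmN, hmagree⟩ := this hαβlt
    -- contradiction
    have hαS0' : α ∈ S0' := hTsub hαT
    have hU' : sseq α m ∈ U := by
      have := hn0spec α hαS0'.1 m (by rw [hαS0'.2]; omega)
      exact this
    have hV' : sseq β m ∈ V := by
      have := hn1spec β hβS1'.1 m (by rw [hβS1'.2]; omega)
      exact this
    have heq : sseq α m = sseq β m := by
      simp only [sseq]
      rw [hmagree]
    rw [heq] at hU'
    exact Set.disjoint_left.mp hUV hU' hV'
end

section
/- Let (X, 𝒜) be an act with 𝒜 ⊆ X^X a countable submonoid (under composition, containing the identity), and let ℓ : dom(ℓ) → X be a function on a countable dom(ℓ) ⊆ X^ω. The following are equivalent: (1) X admits a metrizable topology making every α ∈ 𝒜 continuous, in which every s ∈ dom(ℓ) converges to ℓ(s); (2) X admits a Hausdorff such topology; (3) (a) for any s ∈ dom(ℓ), α ∈ 𝒜, and x ∈ X with x ≠ α(ℓ(s)), the set {n : α(s_n) = x} is finite, and (b) for any s, t ∈ dom(ℓ) and α, β ∈ 𝒜 with α(ℓ(s)) ≠ β(ℓ(t)), there exists a finite F ⊆ ω with α(s_n) ≠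 β(t_m) for all n, m ∈ ω \ F. -/
/-!
Necessity: in a Hausdorff space `α ∘ s → α (ℓ s)`, so `α ∘ s` eventually avoids every other
point, and two such sequences with distinct limits eventually lie in disjoint neighbourhoods.

Sufficiency: index the sequences `α ∘ s` by `i`, with limits `L i`. Given thresholds `N k i`,
let `E k` be the equivalence relation generated by joining `L i` to the terms of sequence `i`
from index `N k i` on. A decreasing sequence of equivalence relations is a countable basis of an
ultrametric uniformity, in which every sequence converges to its limit. Conditions (a) and (b)
allow thresholds for which each point is joined to at most one point other than itself from a
different limit, and a given point eventually to none; the joining graph is then a forest whose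
roots are never identified, so the `E k` separate points. Choosing `N k' i ≥ N k j`, where `j`
indexes `α` applied to sequence `i`, diagonally over the countably many `α` makes every `α`
uniformly continuous.
-/

open Filter Topology Uniformity Relation

theorem Set.finite_setOf_eq_iff_eventually_ne {X : Type*} (u : ℕ → X) (x : X) :
    {n | u n = x}.Finite ↔ ∀ᶠ n in atTop, u n ≠ x := by
  rw [← Nat.cofinite_eq_atTop, eventually_cofinite]
  simp only [not_not]

theorem exists_finite_forall_notMem_iff_eventually (p : ℕ → ℕ → Prop) :
    (∃ F : Set ℕ, F.Finite ∧ ∀ n ∉ F, ∀ m ∉ F, p n m) ↔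
      ∀ᶠ q in atTop ×ˢ atTop, p q.1 q.2 := by
  rw [prod_atTop_atTop_eq, eventually_atTop_prod_self]
  constructor
  · rintro ⟨F, hF, h⟩
    obtain ⟨N, hN⟩ := hF.bddAbove
    exact ⟨N + 1, fun n m hn hm =>
      h n (fun hnF => by linarith [hN hnF]) m (fun hmF => by linarith [hN hmF])⟩
  · rintro ⟨N, h⟩
    exact ⟨Set.Iio N, Set.finite_Iio N, fun n hn m hm => h n m (not_lt.mp hn) (not_lt.mp hm)⟩

theorem Filter.Tendsto.eventually_prod_ne {X ι κ : Type*} [TopologicalSpace X] [T2Space X]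
    {l : Filter ι} {l' : Filter κ} {u : ι → X} {v : κ → X} {a b : X}
    (hu : Tendsto u l (𝓝 a)) (hv : Tendsto v l' (𝓝 b)) (hab : a ≠ b) :
    ∀ᶠ q in l ×ˢ l', u q.1 ≠ v q.2 :=
  (hu.comp tendsto_fst).prodMk_nhds (hv.comp tendsto_snd) |>.eventually
    (isClosed_diagonal.isOpen_compl.mem_nhds hab)

theorem exists_metrizable_of_antitone_setoids {X : Type*} (E : ℕ → Setoid X) (hE : Antitone E)
    (hsep : ∀ x y, x ≠ y → ∃ k, ¬E k x y) :
    ∃ τ : TopologicalSpace X, @TopologicalSpace.MetrizableSpace X τ ∧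
      (∀ f : X → X, (∀ k, ∃ k', E k' ≤ (E k).comap f) → @Continuous X X τ τ f) ∧
      ∀ (u : ℕ → X) (x : X), (∀ k, ∀ᶠ n in atTop, E k (u n) x) →
        Tendsto u atTop (@nhds X τ x) := by
  let V : ℕ → Set (X × X) := fun k => {p | E k p.1 p.2}
  have hV : (⨅ k, 𝓟 (V k)).HasBasis (fun _ => True) V :=
    hasBasis_iInf_principal (Antitone.directed_ge fun _ _ h _ hp => hE h hp)
  let _ : UniformSpace X := .ofCore <| .mk' _
    (fun _ hr x => (hV.mem_iff.mp hr).elim fun k ⟨_, hk⟩ => hk ((E k).refl x))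
    (fun _ hr => hV.mem_iff.mpr <| (hV.mem_iff.mp hr).imp fun k ⟨_, hk⟩ =>
      ⟨trivial, fun _ hp => hk ((E k).symm hp)⟩)
    (fun _ hr => (hV.mem_iff.mp hr).elim fun k ⟨_, hk⟩ =>
      ⟨V k, hV.mem_of_mem trivial, fun _ ⟨_, h₁, h₂⟩ => hk ((E k).trans h₁ h₂)⟩)
  have hU : (𝓤 X).HasBasis (fun _ => True) V := hV
  have : T0Space X := t0Space_iff_uniformity'.mpr fun x y hxy =>
    let ⟨k, hk⟩ := hsep x y hxy; ⟨V k, hU.mem_of_mem trivial, hk⟩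
  have := hU.isCountablyGenerated
  refine ⟨inferInstance, UniformSpace.metrizableSpace, fun f hf => ?_, fun u x hu => ?_⟩
  · exact UniformContinuous.continuous <| (hU.uniformContinuous_iff hU).mpr fun k _ =>
      (hf k).imp fun k' hk' => ⟨trivial, fun _ _ hxy => hk' hxy⟩
  · exact (nhds_basis_uniformity hU).tendsto_right_iff.mpr fun k _ => hu k

theorem Relation.EqvGen.eq_of_roots {X : Type*} {r : X → X → Prop}
    (hpred : ∀ a b z, r a z → r b z → a ≠ z → b ≠ z → a = b) {x y : X}
    (hx : ∀ w, r w x → w = x) (hy : ∀ w, r w y → w = y) (hxy : EqvGen r x y) : x = y := by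
  have hparent : ∀ z, ReflTransGen r x z → z = x ∨ ∃ w, ReflTransGen r x w ∧ w ≠ z ∧ r w z := by
    intro z hz
    induction hz with
    | refl => exact .inl rfl
    | @tail b c hb hbc ih =>
      by_cases h : b = c
      · exact h ▸ ih
      · exact .inr ⟨b, hb, h, hbc⟩
  have hclosed : ∀ a b, EqvGen r a b → (ReflTransGen r x a ↔ ReflTransGen r x b) := by
    intro a b hab
    induction hab with
    | rel a b hab =>
      refine ⟨fun ha => ha.tail hab, fun hb => ?_⟩
      by_cases hab' : a = b
      · exact hab' ▸ hb
      rcases hparent b hb with rfl | ⟨w, hw, hwb, hrw⟩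
      · exact hx a hab ▸ .refl
      · exact hpred a w b hab hrw hab' hwb ▸ hw
    | refl => exact .rfl
    | symm _ _ _ ih => exact ih.symm
    | trans _ _ _ _ _ ih₁ ih₂ => exact ih₁.trans ih₂
  rcases hparent y ((hclosed x y hxy).mp .refl) with rfl | ⟨w, -, hwy, hrw⟩
  · rfl
  · exact (hwy (hy w hrw)).elim

section Thresholds

variable {I : Type*}

noncomputable def diagonalThresholds (b : ℕ → I → ℕ) (σ : ℕ → I → I) : ℕ → I → ℕ
  | 0, i => b 0 i
  | k + 1, i => max (b (k + 1) i) (max (diagonalThresholds b σ k i)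
      ((Finset.range (k + 1)).sup fun a => diagonalThresholds b σ k (σ a i)))

variable (b : ℕ → I → ℕ) (σ : ℕ → I → I)

theorem le_diagonalThresholds (k : ℕ) (i : I) : b k i ≤ diagonalThresholds b σ k i := by
  cases k <;> simp [diagonalThresholds]

theorem monotone_diagonalThresholds (i : I) : Monotone (diagonalThresholds b σ · i) :=
  monotone_nat_of_le_succ fun _ => by simp [diagonalThresholds]

theorem diagonalThresholds_apply_le {a k : ℕ} (h : a ≤ k) (i : I) :
    diagonalThresholds b σ k (σ a i) ≤ diagonalThresholds b σ (k + 1) i := by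
  simp only [diagonalThresholds, le_max_iff]
  exact .inr <| .inr <| Finset.le_sup (f := fun a => diagonalThresholds b σ k (σ a i))
    (Finset.mem_range_succ_iff.mpr h)

end Thresholds

theorem exists_thresholds {I : Type*} (P : ℕ → I → ℕ → Prop)
    (hP : ∀ k i, ∀ᶠ n in atTop, P k i n) (σ : ℕ → I → I) :
    ∃ N : ℕ → I → ℕ, (∀ i, Monotone (N · i)) ∧ (∀ k i n, N k i ≤ n → P k i n) ∧
      ∀ a k, ∃ k', ∀ i, N k (σ a i) ≤ N k' i := by
  choose b hb using fun k i => eventually_atTop.mp (hP k i)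
  refine ⟨diagonalThresholds b σ, monotone_diagonalThresholds b σ,
    fun k i n hn => hb k i n ((le_diagonalThresholds b σ k i).trans hn),
    fun a k => ⟨max a k + 1, fun i => ?_⟩⟩
  exact (monotone_diagonalThresholds b σ _ (le_max_right a k)).trans
    (diagonalThresholds_apply_le b σ (le_max_left a k) i)

section LimitEdge

variable {X I : Type*} (u : I → ℕ → X) (L : I → X)

def limitEdge (N : I → ℕ) (a b : X) : Prop :=
  ∃ i m, N i ≤ m ∧ L i = a ∧ u i m = b

variable {u L}

theorem limitEdge.mono {N N' : I → ℕ} (h : N ≤ N') {a b : X} :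
    limitEdge u L N' a b → limitEdge u L N a b
  | ⟨i, m, hm, ha, hb⟩ => ⟨i, m, (h i).trans hm, ha, hb⟩

theorem limitEdge.map {f : X → X} {σ : I → I} (hu : ∀ i n, u (σ i) n = f (u i n))
    (hL : ∀ i, L (σ i) = f (L i)) {N N' : I → ℕ} (h : ∀ i, N (σ i) ≤ N' i) {a b : X} :
    limitEdge u L N' a b → limitEdge u L N (f a) (f b)
  | ⟨i, m, hm, ha, hb⟩ => ⟨σ i, m, (h i).trans hm, ha ▸ hL i, hb ▸ hu i m⟩

theorem limitEdge.unique_pred {N : I → ℕ} (c : I → ℕ)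
    (hN : ∀ i n, N i ≤ n → ∀ j, c j ≤ c i → L j ≠ L i → ∀ m, u j m = u i n → u i n = L i)
    {a b z : X} (ha : limitEdge u L N a z) (hb : limitEdge u L N b z) (haz : a ≠ z)
    (hbz : b ≠ z) : a = b := by
  obtain ⟨i, n, hn, rfl, rfl⟩ := ha
  obtain ⟨j, m, hm, rfl, hji⟩ := hb
  by_contra hij
  rcases le_total (c j) (c i) with h | h
  · exact haz (hN i n hn j h (Ne.symm hij) m hji).symm
  · exact hbz (hji ▸ hN j m hm i h hij n hji.symm).symm

theorem eventually_forall_apply_eq_imp_eq_lim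
    (ha : ∀ i x, x ≠ L i → ∀ᶠ n in atTop, u i n ≠ x)
    (hb : ∀ i j, L i ≠ L j → ∀ᶠ q in atTop ×ˢ atTop, u i q.1 ≠ u j q.2)
    (i : I) {J : Set I} (hJ : J.Finite) :
    ∀ᶠ n in atTop, ∀ j ∈ J, L j ≠ L i → ∀ m, u j m = u i n → u i n = L i := by
  refine hJ.eventually_all.mpr fun j _ => ?_
  by_cases hji : L j = L i
  · exact .of_forall fun _ h => (h hji).elim
  have hlate := hb j i hji
  rw [prod_atTop_atTop_eq, eventually_atTop_prod_self'] at hlate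
  obtain ⟨N, hN⟩ := hlate
  have hearly : ∀ᶠ n in atTop, ∀ m ∈ Set.Iio N, u j m ≠ L i → u i n ≠ u j m :=
    (Set.finite_Iio N).eventually_all.mpr fun m _ => by
      by_cases h : u j m = L i
      · exact .of_forall fun _ hne => (hne h).elim
      · exact (ha i _ h).mono fun _ hn _ => hn
  filter_upwards [eventually_ge_atTop N, hearly] with n hn hearly _ m hm
  by_contra hne
  rcases lt_or_ge m N with hmN | hmN
  · exact hearly m hmN (hm ▸ hne) hm.symm
  · exact hN m hmN n hn hm

theorem eventually_forall_mem_imp_eq_lim (ha : ∀ i x, x ≠ L i → ∀ᶠ n in atTop, u i n ≠ x)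
    (i : I) {S : Set (I × ℕ)} (hS : S.Finite) :
    ∀ᶠ n in atTop, ∀ p ∈ S, u p.1 p.2 = u i n → u i n = L i :=
  hS.eventually_all.mpr fun p _ => by
    by_cases h : u p.1 p.2 = L i
    · exact .of_forall fun _ hp => hp ▸ h
    · exact (ha i _ h).mono fun _ hn hp => (hn hp.symm).elim

theorem exists_antitone_setoids [Countable I]
    (ha : ∀ i x, x ≠ L i → ∀ᶠ n in atTop, u i n ≠ x)
    (hb : ∀ i j, L i ≠ L j → ∀ᶠ q in atTop ×ˢ atTop, u i q.1 ≠ u j q.2)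
    {f : ℕ → X → X} {σ : ℕ → I → I} (hu : ∀ a i n, u (σ a i) n = f a (u i n))
    (hL : ∀ a i, L (σ a i) = f a (L i)) :
    ∃ E : ℕ → Setoid X, Antitone E ∧ (∀ x y, x ≠ y → ∃ k, ¬E k x y) ∧
      (∀ a k, ∃ k', E k' ≤ (E k).comap (f a)) ∧ ∀ i k, ∀ᶠ n in atTop, E k (u i n) (L i) := by
  obtain ⟨c, hc⟩ := Countable.exists_injective_nat I
  have hfin : ∀ k, {j | c j ≤ k}.Finite := fun k => (Set.finite_Iic k).preimage hc.injOn
  -- The first clause makes predecessors unique, the second makes each point eventually a root.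
  obtain ⟨N, hNmono, hNP, hNσ⟩ := exists_thresholds (fun k i n =>
      (∀ j ∈ {j | c j ≤ c i}, L j ≠ L i → ∀ m, u j m = u i n → u i n = L i) ∧
      ∀ p ∈ {j | c j ≤ k} ×ˢ Set.Iic k, u p.1 p.2 = u i n → u i n = L i)
    (fun k i => (eventually_forall_apply_eq_imp_eq_lim ha hb i (hfin (c i))).and
      (eventually_forall_mem_imp_eq_lim ha i ((hfin k).prod (Set.finite_Iic k)))) σ
  have hroot : ∀ x, ∀ᶠ k in atTop, ∀ w, limitEdge u L (N k) w x → w = x := by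
    intro x
    by_cases hx : ∃ j m, u j m = x
    · obtain ⟨j, m, rfl⟩ := hx
      filter_upwards [eventually_ge_atTop (max (c j) m)] with k hk
      rintro w ⟨i, n, hn, rfl, hin⟩
      exact (hNP k i n hn).2 (j, m) ⟨le_of_max_le_left hk, le_of_max_le_right hk⟩ hin.symm ▸ hin
    · simp only [not_exists] at hx
      exact .of_forall fun k w ⟨i, n, _, _, h⟩ => (hx i n h).elim
  refine ⟨fun k => EqvGen.setoid (limitEdge u L (N k)),
    fun k k' h => Setoid.eqvGen_mono fun _ _ => limitEdge.mono fun i => hNmono i h,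
    fun x y hxy => ?_, fun a k => ?_, fun i k => ?_⟩
  · obtain ⟨k, hx, hy⟩ := ((hroot x).and (hroot y)).exists
    exact ⟨k, fun hE => hxy (EqvGen.eq_of_roots
      (fun _ _ _ => limitEdge.unique_pred c fun i n hn => (hNP k i n hn).1) hx hy hE)⟩
  · obtain ⟨k', hk'⟩ := hNσ a k
    exact ⟨k', Setoid.eqvGen_le fun _ _ h => EqvGen.rel _ _ (limitEdge.map (hu a) (hL a) hk' h)⟩
  · filter_upwards [eventually_ge_atTop (N k i)] with n hn
    exact EqvGen.symm _ _ (EqvGen.rel _ _ ⟨i, n, hn, rfl, rfl⟩)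

theorem exists_metrizable_of_limits [Countable I]
    (ha : ∀ i x, x ≠ L i → ∀ᶠ n in atTop, u i n ≠ x)
    (hb : ∀ i j, L i ≠ L j → ∀ᶠ q in atTop ×ˢ atTop, u i q.1 ≠ u j q.2)
    {f : ℕ → X → X} {σ : ℕ → I → I} (hu : ∀ a i n, u (σ a i) n = f a (u i n))
    (hL : ∀ a i, L (σ a i) = f a (L i)) :
    ∃ τ : TopologicalSpace X, @TopologicalSpace.MetrizableSpace X τ ∧
      (∀ a, @Continuous X X τ τ (f a)) ∧ ∀ i, Tendsto (u i) atTop (@nhds X τ (L i)) := by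
  obtain ⟨E, hE, hsep, hcont, hconv⟩ := exists_antitone_setoids ha hb hu hL
  obtain ⟨τ, hτ, hτcont, hτconv⟩ := exists_metrizable_of_antitone_setoids E hE hsep
  exact ⟨τ, hτ, fun a => hτcont _ (hcont a), fun i => hτconv _ _ (hconv i)⟩

end LimitEdge

section Act

variable {X : Type*} {A : Set (X → X)} {D : Set (ℕ → X)} {ℓ : (ℕ → X) → X}

theorem eventually_ne_of_t2Space [TopologicalSpace X] [T2Space X] (hcont : ∀ α ∈ A, Continuous α)
    (hconv : ∀ s ∈ D, Tendsto s atTop (𝓝 (ℓ s))) :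
    (∀ s ∈ D, ∀ α ∈ A, ∀ x, x ≠ α (ℓ s) → ∀ᶠ n in atTop, α (s n) ≠ x) ∧
      ∀ s ∈ D, ∀ t ∈ D, ∀ α ∈ A, ∀ β ∈ A, α (ℓ s) ≠ β (ℓ t) →
        ∀ᶠ q in atTop ×ˢ atTop, α (s q.1) ≠ β (t q.2) := by
  have h : ∀ s ∈ D, ∀ α ∈ A, Tendsto (α ∘ s) atTop (𝓝 (α (ℓ s))) :=
    fun s hs α hα => ((hcont α hα).tendsto _).comp (hconv s hs)
  exact ⟨fun s hs α hα x hx => (h s hs α hα).eventually_ne hx.symm,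
    fun s hs t ht α hα β hβ => (h s hs α hα).eventually_prod_ne (h t ht β hβ)⟩

theorem exists_metrizable_of_eventually_ne (hAc : A.Countable) (hid : id ∈ A)
    (hcomp : ∀ α ∈ A, ∀ β ∈ A, α ∘ β ∈ A) (hD : D.Countable)
    (ha : ∀ s ∈ D, ∀ α ∈ A, ∀ x, x ≠ α (ℓ s) → ∀ᶠ n in atTop, α (s n) ≠ x)
    (hb : ∀ s ∈ D, ∀ t ∈ D, ∀ α ∈ A, ∀ β ∈ A, α (ℓ s) ≠ β (ℓ t) →
        ∀ᶠ q in atTop ×ˢ atTop, α (s q.1) ≠ β (t q.2)) :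
    ∃ τ : TopologicalSpace X, @TopologicalSpace.MetrizableSpace X τ ∧
      (∀ α ∈ A, @Continuous X X τ τ α) ∧ ∀ s ∈ D, Tendsto s atTop (@nhds X τ (ℓ s)) := by
  have := hAc.to_subtype
  have := hD.to_subtype
  have : Nonempty A := ⟨⟨id, hid⟩⟩
  obtain ⟨g, hg⟩ := exists_surjective_nat A
  obtain ⟨τ, hτ, hcont, hconv⟩ := exists_metrizable_of_limits (I := A × D)
    (u := fun i n => i.1.1 (i.2.1 n)) (L := fun i => i.1.1 (ℓ i.2))
    (fun i x hx => ha _ i.2.2 _ i.1.2 x hx) (fun i j h => hb _ i.2.2 _ j.2.2 _ i.1.2 _ j.1.2 h)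
    (f := fun a => g a) (σ := fun a i => (⟨(g a).1 ∘ i.1.1, hcomp _ (g a).2 _ i.1.2⟩, i.2))
    (fun _ _ _ => rfl) (fun _ _ => rfl)
  refine ⟨τ, hτ, fun α hα => ?_, fun s hs => hconv (⟨id, hid⟩, ⟨s, hs⟩)⟩
  obtain ⟨a, ha⟩ := hg ⟨α, hα⟩
  have hga : (g a : X → X) = α := congrArg Subtype.val ha
  exact hga ▸ hcont a

end Act

/-- For an act `(X, 𝒜)` with a countable submonoid `𝒜 ⊆ X^X` and a function `ℓ` on a
countable set `D` of sequences, the existence of a metrizable (resp. Hausdorff)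
shift-continuous topology in which every `s ∈ D` converges to `ℓ s` is equivalent to the
separation conditions (3a) and (3b). -/
theorem stmt12 {X : Type*} (A : Set (X → X)) (hAc : A.Countable)
    (hid : id ∈ A) (hcomp : ∀ α ∈ A, ∀ β ∈ A, α ∘ β ∈ A)
    (D : Set (ℕ → X)) (hD : D.Countable) (ℓ : (ℕ → X) → X) :
    ((∃ τ : TopologicalSpace X, @TopologicalSpace.MetrizableSpace X τ ∧
        (∀ α ∈ A, @Continuous X X τ τ α) ∧
        ∀ s ∈ D, Tendsto s atTop (@nhds X τ (ℓ s))) ↔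
      ((∀ s ∈ D, ∀ α ∈ A, ∀ x : X, x ≠ α (ℓ s) → {n : ℕ | α (s n) = x}.Finite) ∧
       (∀ s ∈ D, ∀ t ∈ D, ∀ α ∈ A, ∀ β ∈ A, α (ℓ s) ≠ β (ℓ t) →
         ∃ F : Set ℕ, F.Finite ∧ ∀ n ∉ F, ∀ m ∉ F, α (s n) ≠ β (t m)))) ∧
    ((∃ τ : TopologicalSpace X, @T2Space X τ ∧
        (∀ α ∈ A, @Continuous X X τ τ α) ∧
        ∀ s ∈ D, Tendsto s atTop (@nhds X τ (ℓ s))) ↔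
      ((∀ s ∈ D, ∀ α ∈ A, ∀ x : X, x ≠ α (ℓ s) → {n : ℕ | α (s n) = x}.Finite) ∧
       (∀ s ∈ D, ∀ t ∈ D, ∀ α ∈ A, ∀ β ∈ A, α (ℓ s) ≠ β (ℓ t) →
         ∃ F : Set ℕ, F.Finite ∧ ∀ n ∉ F, ∀ m ∉ F, α (s n) ≠ β (t m)))) := by
  simp only [Set.finite_setOf_eq_iff_eventually_ne, exists_finite_forall_notMem_iff_eventually]
  have hsuff := fun h : _ ∧ _ =>
    exists_metrizable_of_eventually_ne (ℓ := ℓ) hAc hid hcomp hD h.1 h.2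
  refine ⟨⟨fun ⟨τ, _, hcont, hconv⟩ => eventually_ne_of_t2Space hcont hconv, hsuff⟩,
    ⟨fun ⟨τ, _, hcont, hconv⟩ => eventually_ne_of_t2Space hcont hconv, fun h => ?_⟩⟩
  obtain ⟨τ, _, hcont, hconv⟩ := hsuff h
  exact ⟨τ, inferInstance, hcont, hconv⟩
end

section
/- Let X be a countable semigroup and ℓ : dom(ℓ) → X a function on a countable dom(ℓ) ⊆ X^ω. The following are equivalent: (1) X admits a shift-continuous metrizable topology in which every s ∈ dom(ℓ) converges to ℓ(s); (2) X admits a shift-continuous Hausdorff such topology; (3) (a) for any s ∈ dom(ℓ), a, b ∈ X¹, and x ∈ X with x ≠ a·ℓ(s)·b, the set {n : a·s_n·b = x} is finite, and (b) for any s, t ∈ dom(ℓ) and a, b, c, d ∈ X¹ with a·ℓ(s)·b ≠ c·ℓ(t)·d, there exists a finite F ⊆ ω with a·s_n·b ≠ c·t_m·d for all n, m ∈ ω \ F. -/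
open Filter

/-- The two-sided shift `x ↦ a·x·b` on a semigroup `X`, where `a, b` range over
`X¹ = X` with an adjoined identity (encoded via `Option X`, `none` being the unit). -/
def sgShift {X : Type*} [Semigroup X] (a b : Option X) (x : X) : X :=
  (match a with | none => x | some a => a * x) |>
    fun y => match b with | none => y | some b => y * b

section Key

open scoped Classical

variable {X : Type*}

noncomputable def keyCol (U : ℕ → ℕ → X) (P : ℕ → X) (k : ℕ) (h : ℕ → Bool × ℕ) : Bool :=
  if k = 0 then true
  else if k = 1 then false
  else if hp : ∃ j, j < k ∧ P k ∈ insert (P j) {z | ∃ n, (h j).2 ≤ n ∧ U j n = z} then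
    (h hp.choose).1
  else true

noncomputable def keyN (U : ℕ → ℕ → X) (P : ℕ → X) (k : ℕ) (h : ℕ → Bool × ℕ) : ℕ :=
  if hN : ∃ N, ∀ n, N ≤ n → ∀ j, j < k → (h j).1 ≠ keyCol U P k h →
      U k n ∉ insert (P j) {z | ∃ n', (h j).2 ≤ n' ∧ U j n' = z} then hN.choose
  else 0

noncomputable def keyStep (U : ℕ → ℕ → X) (P : ℕ → X) (k : ℕ) (h : ℕ → Bool × ℕ) : Bool × ℕ :=
  (keyCol U P k h, keyN U P k h)

noncomputable def keyHist (U : ℕ → ℕ → X) (P : ℕ → X) : ℕ → ℕ → Bool × ℕ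
  | 0 => fun _ => (true, 0)
  | k + 1 => Function.update (keyHist U P k) k (keyStep U P k (keyHist U P k))

noncomputable def keyG (U : ℕ → ℕ → X) (P : ℕ → X) (k : ℕ) : Bool × ℕ :=
  keyStep U P k (keyHist U P k)

lemma keyHist_eq (U : ℕ → ℕ → X) (P : ℕ → X) :
    ∀ {k m : ℕ}, m < k → keyHist U P k m = keyG U P m := by
  intro k
  induction k with
  | zero => intro m hm; exact absurd hm (Nat.not_lt_zero m)
  | succ k ih =>
    intro m hm
    rcases Nat.lt_succ_iff_lt_or_eq.1 hm with h | rfl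
    · show Function.update (keyHist U P k) k (keyStep U P k (keyHist U P k)) m = _
      rw [Function.update_of_ne (by omega)]
      exact ih h
    · show Function.update (keyHist U P m) m (keyStep U P m (keyHist U P m)) m = _
      rw [Function.update_self]
      rfl

noncomputable def keyT (U : ℕ → ℕ → X) (P : ℕ → X) (k : ℕ) : Set X :=
  insert (P k) {z | ∃ n, (keyG U P k).2 ≤ n ∧ U k n = z}

theorem key_lemma (U : ℕ → ℕ → X) (P : ℕ → X)
    (ha : ∀ k z, z ≠ P k → {n | U k n = z}.Finite)
    (hb : ∀ j k, P j ≠ P k → ∃ F : Set ℕ, F.Finite ∧ ∀ n ∉ F, ∀ m ∉ F, U j n ≠ U k m)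
    (hU0 : ∀ n, U 0 n = P 0) (hxy : P 0 ≠ P 1) :
    ∃ c : X → Bool, c (P 0) = true ∧ c (P 1) = false ∧
      ∀ k, ∃ N, ∀ n, N ≤ n → c (U k n) = c (P k) := by
  have main : ∀ k j, j < k → (keyG U P j).1 ≠ (keyG U P k).1 →
      ∀ z, z ∈ keyT U P j → z ∈ keyT U P k → False := by
    intro k
    induction k using Nat.strong_induction_on with
    | _ k ih =>
    have pcons : ∀ j, j < k → P k ∈ keyT U P j → (keyG U P j).1 = (keyG U P k).1 := by
      intro j hj hmem
      rcases Nat.lt_or_ge k 2 with hk2 | hk2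
      · interval_cases k
        · omega
        · have hj0 : j = 0 := by omega
          subst hj0
          rcases Set.mem_insert_iff.1 hmem with h | ⟨n, _, h⟩
          · exact absurd h hxy.symm
          · rw [hU0 n] at h
            exact absurd h hxy
      · have hk0 : k ≠ 0 := by omega
        have hk1 : k ≠ 1 := by omega
        have hp : ∃ j', j' < k ∧
            P k ∈ insert (P j') {z | ∃ n, (keyHist U P k j').2 ≤ n ∧ U j' n = z} :=
          ⟨j, hj, by rw [keyHist_eq U P hj]; exact hmem⟩
        have hcolk : (keyG U P k).1 = (keyHist U P k hp.choose).1 := by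
          show keyCol U P k (keyHist U P k) = _
          rw [keyCol, if_neg hk0, if_neg hk1, dif_pos hp]
        obtain ⟨hj₀, hmem₀⟩ := hp.choose_spec
        rw [keyHist_eq U P hj₀] at hcolk hmem₀
        have hmem₀' : P k ∈ keyT U P hp.choose := hmem₀
        rcases eq_or_ne j hp.choose with heq | hne
        · rw [heq]; exact hcolk.symm
        · have hcc : (keyG U P j).1 = (keyG U P hp.choose).1 := by
            by_contra hcc
            rcases hne.lt_or_gt with h | h
            · exact ih hp.choose hj₀ j h hcc (P k) hmem hmem₀'
            · exact ih j hj hp.choose h (Ne.symm hcc) (P k) hmem₀' hmem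
          rw [hcc]; exact hcolk.symm
    have hfin : ∀ j, j < k → (keyG U P j).1 ≠ (keyG U P k).1 →
        {n | U k n ∈ keyT U P j}.Finite := by
      intro j hj hc
      have hPj : P j ≠ P k := by
        intro h
        exact hc (pcons j hj (h ▸ Set.mem_insert _ _))
      have h1 : {n | U k n = P j}.Finite := ha k (P j) hPj
      obtain ⟨F, hF, hdis⟩ := hb k j (fun h => hPj h.symm)
      have h2 : ∀ m, (keyG U P j).2 ≤ m → U j m ≠ P k := by
        intro m hm heq
        exact hc (pcons j hj (Set.mem_insert_iff.2 (Or.inr ⟨m, hm, heq⟩)))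
      have h3 : {n | U k n ∈ keyT U P j} ⊆
          ({n | U k n = P j} ∪ F) ∪ ⋃ m ∈ F ∩ {m | (keyG U P j).2 ≤ m}, {n | U k n = U j m} := by
        intro n hn
        rcases Set.mem_insert_iff.1 hn with h | ⟨m, hm, hUm⟩
        · exact Or.inl (Or.inl h)
        · by_cases hnF : n ∈ F
          · exact Or.inl (Or.inr hnF)
          · by_cases hmF : m ∈ F
            · exact Or.inr (Set.mem_biUnion ⟨hmF, hm⟩ hUm.symm)
            · exact absurd hUm.symm (hdis n hnF m hmF)
      refine Set.Finite.subset ?_ h3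
      refine (h1.union hF).union (Set.Finite.biUnion (hF.inter_of_left _) ?_)
      intro m hm
      exact ha k (U j m) (h2 m hm.2)
    have hNex : ∃ N, ∀ n, N ≤ n → ∀ j, j < k → (keyG U P j).1 ≠ (keyG U P k).1 →
        U k n ∉ keyT U P j := by
      have hBfin : (⋃ j ∈ Set.Iio k,
          {n | (keyG U P j).1 ≠ (keyG U P k).1 ∧ U k n ∈ keyT U P j}).Finite := by
        refine (Set.finite_Iio k).biUnion ?_
        intro j hj
        by_cases hc : (keyG U P j).1 ≠ (keyG U P k).1
        · exact (hfin j hj hc).subset fun n hn => hn.2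
        · exact Set.Finite.subset Set.finite_empty fun n hn => (hc hn.1).elim
      obtain ⟨N₀, hN₀⟩ := hBfin.bddAbove
      refine ⟨N₀ + 1, fun n hn j hj hc hmem => ?_⟩
      have hnB : n ∈ ⋃ j ∈ Set.Iio k,
          {n | (keyG U P j).1 ≠ (keyG U P k).1 ∧ U k n ∈ keyT U P j} :=
        Set.mem_biUnion hj ⟨hc, hmem⟩
      have := hN₀ hnB
      omega
    have Nspec : ∀ n, (keyG U P k).2 ≤ n → ∀ j, j < k →
        (keyG U P j).1 ≠ (keyG U P k).1 → U k n ∉ keyT U P j := by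
      have hN' : ∃ N, ∀ n, N ≤ n → ∀ j, j < k →
          (keyHist U P k j).1 ≠ keyCol U P k (keyHist U P k) →
          U k n ∉ insert (P j) {z | ∃ n', (keyHist U P k j).2 ≤ n' ∧ U j n' = z} := by
        obtain ⟨N, hN⟩ := hNex
        refine ⟨N, fun n hn j hj hc hm => ?_⟩
        rw [keyHist_eq U P hj] at hc hm
        exact hN n hn j hj hc hm
      have hNk : (keyG U P k).2 = hN'.choose := by
        show keyN U P k (keyHist U P k) = _
        rw [keyN, dif_pos hN']
      intro n hn j hj hc
      have h1 : (keyHist U P k j).1 ≠ keyCol U P k (keyHist U P k) := by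
        rw [keyHist_eq U P hj]; exact hc
      have h2 := hN'.choose_spec n (by rw [← hNk]; exact hn) j hj h1
      rw [keyHist_eq U P hj] at h2
      exact h2
    intro j hj hc z hzj hzk
    rcases Set.mem_insert_iff.1 hzk with rfl | ⟨n, hn, rfl⟩
    · exact hc (pcons j hj hzj)
    · exact Nspec n hn j hj hc hzj
  have pairw : ∀ i j z, z ∈ keyT U P i → z ∈ keyT U P j →
      (keyG U P i).1 = (keyG U P j).1 := by
    intro i j z hi hj
    rcases lt_trichotomy i j with h | rfl | h
    · by_contra hcon; exact main j i h hcon z hi hj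
    · rfl
    · by_contra hcon; exact main i j h (Ne.symm hcon) z hj hi
  have c_eq : ∀ j z, z ∈ keyT U P j →
      (if h : ∃ i, z ∈ keyT U P i then (keyG U P h.choose).1 else false) = (keyG U P j).1 := by
    intro j z hz
    have hex : ∃ i, z ∈ keyT U P i := ⟨j, hz⟩
    rw [dif_pos hex]
    exact pairw hex.choose j z hex.choose_spec hz
  have col0 : (keyG U P 0).1 = true := by
    show keyCol U P 0 (keyHist U P 0) = true
    rw [keyCol]; simp
  have col1 : (keyG U P 1).1 = false := by
    show keyCol U P 1 (keyHist U P 1) = false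
    rw [keyCol]; simp
  refine ⟨fun z => if h : ∃ i, z ∈ keyT U P i then (keyG U P h.choose).1 else false, ?_, ?_, ?_⟩
  · exact (c_eq 0 (P 0) (Set.mem_insert _ _)).trans col0
  · exact (c_eq 1 (P 1) (Set.mem_insert _ _)).trans col1
  · intro k
    refine ⟨(keyG U P k).2, fun n hn => ?_⟩
    exact (c_eq k (U k n) (Set.mem_insert_iff.2 (Or.inr ⟨n, hn, rfl⟩))).trans
      (c_eq k (P k) (Set.mem_insert _ _)).symm

end Key


def omul {X : Type*} [Semigroup X] : Option X → Option X → Option X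
  | none, b => b
  | some a, none => some a
  | some a, some b => some (a * b)

lemma sgShift_sgShift {X : Type*} [Semigroup X] (a b c d : Option X) (z : X) :
    sgShift a b (sgShift c d z) = sgShift (omul a c) (omul d b) z := by
  cases a <;> cases b <;> cases c <;> cases d <;>
    simp [sgShift, omul, mul_assoc]


theorem key_lemma' {X : Type*} (U : ℕ → ℕ → X) (P : ℕ → X)
    (ha : ∀ k z, z ≠ P k → {n | U k n = z}.Finite)
    (hb : ∀ j k, P j ≠ P k → ∃ F : Set ℕ, F.Finite ∧ ∀ n ∉ F, ∀ m ∉ F, U j n ≠ U k m)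
    (hU0 : ∀ n, U 0 n = P 0) (hxy : P 0 ≠ P 1) :
    ∃ c : X → Bool, c (P 0) = true ∧ c (P 1) = false ∧
      ∀ k, ∃ N, ∀ n, N ≤ n → c (U k n) = c (P k) :=
  key_lemma U P ha hb hU0 hxy

def comb {α : Type*} (p q : α) (v : ℕ → α) : ℕ → α
  | 0 => p
  | 1 => q
  | (k + 2) => v k

section Outer
variable {X : Type*} [Semigroup X] [Countable X]

noncomputable def famV {D : Set (ℕ → X)} (ℓ : (ℕ → X) → X) (x : X)
    (e : ℕ → Option (Option X × Option X × {s : ℕ → X // s ∈ D})) (k : ℕ) : (ℕ → X) × X :=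
  Option.elim (e k) ((fun _ => x : ℕ → X), x)
    (fun q => (fun n => sgShift q.1 q.2.1 (q.2.2.1 n), sgShift q.1 q.2.1 (ℓ q.2.2.1)))

theorem exists_separating (D : Set (ℕ → X)) (hD : D.Countable) (ℓ : (ℕ → X) → X)
    (h3a : ∀ s ∈ D, ∀ a b : Option X, ∀ x : X, x ≠ sgShift a b (ℓ s) →
      {n : ℕ | sgShift a b (s n) = x}.Finite)
    (h3b : ∀ s ∈ D, ∀ t ∈ D, ∀ a b c d : Option X,
      sgShift a b (ℓ s) ≠ sgShift c d (ℓ t) →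
      ∃ F : Set ℕ, F.Finite ∧ ∀ n ∉ F, ∀ m ∉ F, sgShift a b (s n) ≠ sgShift c d (t m))
    (x y : X) (hxy : x ≠ y) :
    ∃ c : X → Bool, c x = true ∧ c y = false ∧
      ∀ a b : Option X, ∀ s ∈ D, ∀ᶠ n in atTop,
        c (sgShift a b (s n)) = c (sgShift a b (ℓ s)) := by
  haveI := hD.to_subtype
  obtain ⟨e, he⟩ := exists_surjective_nat (Option (Option X × Option X × {s : ℕ → X // s ∈ D}))
  set W : ℕ → (ℕ → X) × X :=
    comb ((fun _ => x : ℕ → X), x) ((fun _ => y : ℕ → X), y) (famV ℓ x e) with hW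
  set U : ℕ → ℕ → X := fun k => (W k).1 with hU
  set P : ℕ → X := fun k => (W k).2 with hP
  have hshape : ∀ k, (∀ n, U k n = P k) ∨
      ∃ a b : Option X, ∃ s : ℕ → X, ∃ hs : s ∈ D,
        (∀ n, U k n = sgShift a b (s n)) ∧ P k = sgShift a b (ℓ s) := by
    intro k
    rcases k with (_ | (_ | k))
    · exact Or.inl fun n => rfl
    · exact Or.inl fun n => rfl
    · rcases he' : e k with (_ | ⟨a, b, s⟩)
      · have : W (k + 2) = ((fun _ => x : ℕ → X), x) := by
          rw [hW]; show famV ℓ x e k = _; rw [famV, he']; rfl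
        refine Or.inl fun n => ?_
        show (W (k + 2)).1 n = (W (k + 2)).2
        rw [this]
      · have : W (k + 2) = ((fun n => sgShift a b (s.1 n) : ℕ → X), sgShift a b (ℓ s.1)) := by
          rw [hW]; show famV ℓ x e k = _; rw [famV, he']; rfl
        refine Or.inr ⟨a, b, s.1, s.2, fun n => ?_, ?_⟩
        · show (W (k + 2)).1 n = _
          rw [this]
        · show (W (k + 2)).2 = _
          rw [this]
  have haC : ∀ k z, z ≠ P k → {n | U k n = z}.Finite := by
    intro k z hz
    rcases hshape k with hk | ⟨a, b, s, hs, hk1, hk2⟩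
    · refine Set.Finite.subset Set.finite_empty fun n hn => ?_
      rw [Set.mem_setOf_eq, hk n] at hn
      exact (hz hn.symm).elim
    · have := h3a s hs a b z (by rw [← hk2]; exact hz)
      refine this.subset fun n hn => ?_
      rw [Set.mem_setOf_eq, ← hk1 n]
      exact hn
  have hconst : ∀ j k, (∀ n, U j n = P j) → P j ≠ P k →
      ∃ F : Set ℕ, F.Finite ∧ ∀ n ∉ F, ∀ m ∉ F, U j n ≠ U k m := by
    intro j k hcj hne
    refine ⟨{m | U k m = P j}, haC k (P j) hne, fun n _ m hm => ?_⟩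
    rw [hcj n]
    exact fun h => hm h.symm
  have hbC : ∀ j k, P j ≠ P k → ∃ F : Set ℕ, F.Finite ∧ ∀ n ∉ F, ∀ m ∉ F, U j n ≠ U k m := by
    intro j k hne
    rcases hshape j with hj | ⟨a, b, s, hs, hj1, hj2⟩
    · exact hconst j k hj hne
    rcases hshape k with hk | ⟨c, d, t, ht, hk1, hk2⟩
    · obtain ⟨F, h1, h2⟩ := hconst k j hk hne.symm
      exact ⟨F, h1, fun n hn m hm => (h2 m hm n hn).symm⟩
    · obtain ⟨F, hF, hFd⟩ := h3b s hs t ht a b c d (by rw [← hj2, ← hk2]; exact hne)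
      refine ⟨F, hF, fun n hn m hm => ?_⟩
      rw [hj1 n, hk1 m]
      exact hFd n hn m hm
  obtain ⟨c, hc0, hc1, hcv⟩ := key_lemma' U P haC hbC (fun n => rfl) hxy
  refine ⟨c, hc0, hc1, ?_⟩
  intro a b s hs
  obtain ⟨k, hk⟩ := he (some (a, b, ⟨s, hs⟩))
  obtain ⟨N, hN⟩ := hcv (k + 2)
  have hW2 : W (k + 2) = ((fun n => sgShift a b (s n) : ℕ → X), sgShift a b (ℓ s)) := by
    rw [hW]; show famV ℓ x e k = _; rw [famV, hk]; rfl
  rw [eventually_atTop]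
  refine ⟨N, fun n hn => ?_⟩
  have h1 : U (k + 2) n = sgShift a b (s n) := by
    show (W (k + 2)).1 n = _
    rw [hW2]
  have h2 : P (k + 2) = sgShift a b (ℓ s) := by
    show (W (k + 2)).2 = _
    rw [hW2]
  rw [← h1, ← h2]
  exact hN n hn

end Outer

section Main
variable {X : Type*} [Semigroup X] [Countable X]

theorem construct_top (D : Set (ℕ → X)) (hD : D.Countable) (ℓ : (ℕ → X) → X)
    (h3a : ∀ s ∈ D, ∀ a b : Option X, ∀ x : X, x ≠ sgShift a b (ℓ s) →
      {n : ℕ | sgShift a b (s n) = x}.Finite)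
    (h3b : ∀ s ∈ D, ∀ t ∈ D, ∀ a b c d : Option X,
      sgShift a b (ℓ s) ≠ sgShift c d (ℓ t) →
      ∃ F : Set ℕ, F.Finite ∧ ∀ n ∉ F, ∀ m ∉ F, sgShift a b (s n) ≠ sgShift c d (t m)) :
    ∃ τ : TopologicalSpace X, @TopologicalSpace.MetrizableSpace X τ ∧
      (∀ a b : Option X, @Continuous X X τ τ (sgShift a b)) ∧
      ∀ s ∈ D, Tendsto s atTop (@nhds X τ (ℓ s)) := by
  have H : ∀ x y : X, ∃ c : X → Bool, (x ≠ y → c x = true ∧ c y = false) ∧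
      ∀ a b : Option X, ∀ s ∈ D, ∀ᶠ n in atTop,
        c (sgShift a b (s n)) = c (sgShift a b (ℓ s)) := by
    intro x y
    by_cases hxy : x = y
    · exact ⟨fun _ => true, fun h => absurd hxy h,
        fun a b s hs => Eventually.of_forall fun n => rfl⟩
    · obtain ⟨c, h1, h2, h3⟩ := exists_separating D hD ℓ h3a h3b x y hxy
      exact ⟨c, fun _ => ⟨h1, h2⟩, h3⟩
  choose C hC1 hC2 using H
  set Φ : X → (X × X × Option X × Option X) → Bool :=
    fun z q => C q.1 q.2.1 (sgShift q.2.2.1 q.2.2.2 z) with hΦ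
  letI τ : TopologicalSpace X := TopologicalSpace.induced Φ inferInstance
  refine ⟨τ, ?_, ?_, ?_⟩
  · have hinj : Function.Injective Φ := by
      intro z w h
      by_contra hzw
      have h' := congrFun h (z, w, none, none)
      have hz : Φ z (z, w, none, none) = C z w z := rfl
      have hw : Φ w (z, w, none, none) = C z w w := rfl
      rw [hz, hw, (hC1 z w hzw).1, (hC1 z w hzw).2] at h'
      exact Bool.noConfusion h'
    have hemb : Topology.IsEmbedding Φ := ⟨⟨rfl⟩, hinj⟩
    exact hemb.metrizableSpace
  · intro a b
    refine continuous_induced_rng.2 ?_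
    refine continuous_pi fun q => ?_
    have heq : (fun z => Φ (sgShift a b z) q) =
        fun z => Φ z (q.1, q.2.1, omul q.2.2.1 a, omul b q.2.2.2) := by
      funext z
      show C q.1 q.2.1 (sgShift q.2.2.1 q.2.2.2 (sgShift a b z)) =
        C q.1 q.2.1 (sgShift (omul q.2.2.1 a) (omul b q.2.2.2) z)
      rw [sgShift_sgShift]
    show Continuous fun z => Φ (sgShift a b z) q
    rw [heq]
    show Continuous ((fun f : (X × X × Option X × Option X) → Bool =>
      f (q.1, q.2.1, omul q.2.2.1 a, omul b q.2.2.2)) ∘ Φ)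
    exact Continuous.comp (continuous_apply _) continuous_induced_dom
  · intro s hs
    rw [nhds_induced, tendsto_comap_iff, tendsto_pi_nhds]
    intro q
    rw [nhds_discrete, tendsto_pure]
    filter_upwards [hC2 q.1 q.2.1 q.2.2.1 q.2.2.2 s hs] with n hn
    exact hn

omit [Countable X] in
theorem easy_dir (D : Set (ℕ → X)) (ℓ : (ℕ → X) → X) (τ : TopologicalSpace X)
    (ht2 : @T2Space X τ)
    (hcont : ∀ a b : Option X, @Continuous X X τ τ (sgShift a b))
    (hconv : ∀ s ∈ D, Tendsto s atTop (@nhds X τ (ℓ s))) :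
    (∀ s ∈ D, ∀ a b : Option X, ∀ x : X, x ≠ sgShift a b (ℓ s) →
      {n : ℕ | sgShift a b (s n) = x}.Finite) ∧
    (∀ s ∈ D, ∀ t ∈ D, ∀ a b c d : Option X,
      sgShift a b (ℓ s) ≠ sgShift c d (ℓ t) →
      ∃ F : Set ℕ, F.Finite ∧ ∀ n ∉ F, ∀ m ∉ F,
        sgShift a b (s n) ≠ sgShift c d (t m)) := by
  letI := τ
  haveI := ht2
  constructor
  · intro s hs a b x hx
    have h1 : Tendsto (fun n => sgShift a b (s n)) atTop (nhds (sgShift a b (ℓ s))) :=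
      ((hcont a b).tendsto (ℓ s)).comp (hconv s hs)
    have h2 : ∀ᶠ n in atTop, sgShift a b (s n) ∈ ({x}ᶜ : Set X) :=
      h1 (compl_singleton_mem_nhds (Ne.symm hx))
    rw [eventually_atTop] at h2
    obtain ⟨N, hN⟩ := h2
    refine (Set.finite_Iio N).subset fun n hn => ?_
    rw [Set.mem_Iio]
    by_contra hcon
    exact hN n (by omega) hn
  · intro s hs t ht a b c d hne
    obtain ⟨u, v, hu, hv, hpu, hqv, huv⟩ := t2_separation hne
    have h1 : Tendsto (fun n => sgShift a b (s n)) atTop (nhds (sgShift a b (ℓ s))) :=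
      ((hcont a b).tendsto (ℓ s)).comp (hconv s hs)
    have h2 : Tendsto (fun n => sgShift c d (t n)) atTop (nhds (sgShift c d (ℓ t))) :=
      ((hcont c d).tendsto (ℓ t)).comp (hconv t ht)
    obtain ⟨N₁, hN₁⟩ := eventually_atTop.1 (h1 (hu.mem_nhds hpu))
    obtain ⟨N₂, hN₂⟩ := eventually_atTop.1 (h2 (hv.mem_nhds hqv))
    refine ⟨Set.Iio (max N₁ N₂), Set.finite_Iio _, fun n hn m hm heq => ?_⟩
    rw [Set.mem_Iio, not_lt] at hn hm
    have hnu : sgShift a b (s n) ∈ u := hN₁ n (le_trans (le_max_left _ _) hn)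
    have hmv : sgShift c d (t m) ∈ v := hN₂ m (le_trans (le_max_right _ _) hm)
    rw [heq] at hnu
    exact Set.disjoint_left.1 huv hnu hmv

theorem stmt13' (D : Set (ℕ → X)) (hD : D.Countable) (ℓ : (ℕ → X) → X) :
    ((∃ τ : TopologicalSpace X, @TopologicalSpace.MetrizableSpace X τ ∧
        (∀ a b : Option X, @Continuous X X τ τ (sgShift a b)) ∧
        ∀ s ∈ D, Tendsto s atTop (@nhds X τ (ℓ s))) ↔
      ((∀ s ∈ D, ∀ a b : Option X, ∀ x : X, x ≠ sgShift a b (ℓ s) →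
          {n : ℕ | sgShift a b (s n) = x}.Finite) ∧
       (∀ s ∈ D, ∀ t ∈ D, ∀ a b c d : Option X,
          sgShift a b (ℓ s) ≠ sgShift c d (ℓ t) →
          ∃ F : Set ℕ, F.Finite ∧ ∀ n ∉ F, ∀ m ∉ F,
            sgShift a b (s n) ≠ sgShift c d (t m)))) ∧
    ((∃ τ : TopologicalSpace X, @T2Space X τ ∧
        (∀ a b : Option X, @Continuous X X τ τ (sgShift a b)) ∧
        ∀ s ∈ D, Tendsto s atTop (@nhds X τ (ℓ s))) ↔
      ((∀ s ∈ D, ∀ a b : Option X, ∀ x : X, x ≠ sgShift a b (ℓ s) →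
          {n : ℕ | sgShift a b (s n) = x}.Finite) ∧
       (∀ s ∈ D, ∀ t ∈ D, ∀ a b c d : Option X,
          sgShift a b (ℓ s) ≠ sgShift c d (ℓ t) →
          ∃ F : Set ℕ, F.Finite ∧ ∀ n ∉ F, ∀ m ∉ F,
            sgShift a b (s n) ≠ sgShift c d (t m)))) := by
  constructor
  · constructor
    · rintro ⟨τ, hmet, hcont, hconv⟩
      exact easy_dir D ℓ τ (@TopologicalSpace.t2Space_of_metrizableSpace X τ hmet) hcont hconv
    · intro hc
      exact construct_top D hD ℓ hc.1 hc.2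
  · constructor
    · rintro ⟨τ, ht2, hcont, hconv⟩
      exact easy_dir D ℓ τ ht2 hcont hconv
    · intro hc
      obtain ⟨τ, hmet, h1, h2⟩ := construct_top D hD ℓ hc.1 hc.2
      exact ⟨τ, @TopologicalSpace.t2Space_of_metrizableSpace X τ hmet, h1, h2⟩

end Main

/-- For a countable semigroup `X` and a function `ℓ` on a countable set `D` of sequences,
the existence of a shift-continuous metrizable (resp. Hausdorff) topology in which every
`s ∈ D` converges to `ℓ s` is equivalent to conditions (3a), (3b) with `a, b, c, d ∈ X¹`. -/
theorem stmt13 {X : Type*} [Semigroup X] [Countable X]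
    (D : Set (ℕ → X)) (hD : D.Countable) (ℓ : (ℕ → X) → X) :
    ((∃ τ : TopologicalSpace X, @TopologicalSpace.MetrizableSpace X τ ∧
        (∀ a b : Option X, @Continuous X X τ τ (sgShift a b)) ∧
        ∀ s ∈ D, Tendsto s atTop (@nhds X τ (ℓ s))) ↔
      ((∀ s ∈ D, ∀ a b : Option X, ∀ x : X, x ≠ sgShift a b (ℓ s) →
          {n : ℕ | sgShift a b (s n) = x}.Finite) ∧
       (∀ s ∈ D, ∀ t ∈ D, ∀ a b c d : Option X,
          sgShift a b (ℓ s) ≠ sgShift c d (ℓ t) →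
          ∃ F : Set ℕ, F.Finite ∧ ∀ n ∉ F, ∀ m ∉ F,
            sgShift a b (s n) ≠ sgShift c d (t m)))) ∧
    ((∃ τ : TopologicalSpace X, @T2Space X τ ∧
        (∀ a b : Option X, @Continuous X X τ τ (sgShift a b)) ∧
        ∀ s ∈ D, Tendsto s atTop (@nhds X τ (ℓ s))) ↔
      ((∀ s ∈ D, ∀ a b : Option X, ∀ x : X, x ≠ sgShift a b (ℓ s) →
          {n : ℕ | sgShift a b (s n) = x}.Finite) ∧
       (∀ s ∈ D, ∀ t ∈ D, ∀ a b c d : Option X,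
          sgShift a b (ℓ s) ≠ sgShift c d (ℓ t) →
          ∃ F : Set ℕ, F.Finite ∧ ∀ n ∉ F, ∀ m ∉ F,
            sgShift a b (s n) ≠ sgShift c d (t m)))) :=
  stmt13' D hD ℓ
end

section
/- Let X be a countable semilattice and ℓ : dom(ℓ) → X a function on a countable dom(ℓ) ⊆ X^ω. The following are equivalent: (1) X admits a shift-continuous metrizable topology in which every s ∈ dom(ℓ) converges to ℓ(s); (2) X admits a shift-continuous Hausdorff such topology; (3) (a) for any s ∈ dom(ℓ) and a, x ∈ X with x ≠ a·ℓ(s), the set {n : a·s_n = x} is finite, and (b) for any s, t ∈ dom(ℓ) and a, b ∈ X with a·ℓ(s) ≠ b·ℓ(t), there exists a finite F ⊆ ω with a·s_n ≠ b·t_m for all n, m ∈ ω \ F. -/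
open Filter Set Topology

namespace Stmt14Aux

/-! ### A separation lemma for countable families of convergent sequences

Given a countable family `C` of pairs (sequence, limit) in an arbitrary type `Y` such that
each sequence takes any value other than its limit only finitely often, and any two
sequences with distinct limits are eventually disjoint, we construct for any two distinct
points `x ≠ y` a "`C`-clopen" set containing `x` and not `y`. -/

section Sep

variable {Y : Type*}

/-- The region built after `k` stages on side `b` (`true` = the `x`-side). -/
def reg (f : ℕ → (ℕ → Y) × Y) (x y : Y) (σ : ℕ → Bool × ℕ) (b : Bool) (k : ℕ) : Set Y :=
  {z | (z = bif b then x else y) ∨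
    ∃ j, j < k ∧ (σ j).1 = b ∧ ((f j).2 = z ∨ ∃ n, (σ j).2 ≤ n ∧ (f j).1 n = z)}

/-- The full region on side `b`. -/
def regInf (f : ℕ → (ℕ → Y) × Y) (x y : Y) (σ : ℕ → Bool × ℕ) (b : Bool) : Set Y :=
  {z | (z = bif b then x else y) ∨
    ∃ j, (σ j).1 = b ∧ ((f j).2 = z ∨ ∃ n, (σ j).2 ≤ n ∧ (f j).1 n = z)}

open Classical in
/-- Which side the `k`-th sequence is assigned to. -/
noncomputable def stepSide (f : ℕ → (ℕ → Y) × Y) (x y : Y) (σ : ℕ → Bool × ℕ) (k : ℕ) : Bool :=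
  if (f k).2 ∈ reg f x y σ true k then true else false

open Classical in
/-- Where the committed tail of the `k`-th sequence starts. -/
noncomputable def stepN (f : ℕ → (ℕ → Y) × Y) (x y : Y) (σ : ℕ → Bool × ℕ) (k : ℕ) : ℕ :=
  sInf {N | ∀ n, N ≤ n → (f k).1 n ∉ reg f x y σ (!stepSide f x y σ k) k}

/-- Approximations to the assignment function. -/
noncomputable def approx (f : ℕ → (ℕ → Y) × Y) (x y : Y) : ℕ → ℕ → Bool × ℕ
  | 0 => fun _ => (true, 0)
  | (k+1) => fun j =>
      if j = k then (stepSide f x y (approx f x y k) k, stepN f x y (approx f x y k) k)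
      else approx f x y k j

/-- The assignment function: to each sequence a side and a tail start. -/
noncomputable def sig (f : ℕ → (ℕ → Y) × Y) (x y : Y) (k : ℕ) : Bool × ℕ :=
  approx f x y (k+1) k

variable (f : ℕ → (ℕ → Y) × Y) (x y : Y)

lemma reg_congr {σ σ' : ℕ → Bool × ℕ} {b : Bool} {k : ℕ} (h : ∀ j, j < k → σ j = σ' j) :
    reg f x y σ b k = reg f x y σ' b k := by
  ext z
  simp only [reg, mem_setOf_eq]
  refine or_congr Iff.rfl ⟨?_, ?_⟩ <;> rintro ⟨j, hj, h1, h2⟩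
  · refine ⟨j, hj, ?_⟩
    rw [← h j hj]
    exact ⟨h1, h2⟩
  · refine ⟨j, hj, ?_⟩
    rw [h j hj]
    exact ⟨h1, h2⟩

lemma stepSide_congr {σ σ' : ℕ → Bool × ℕ} {k : ℕ} (h : ∀ j, j < k → σ j = σ' j) :
    stepSide f x y σ k = stepSide f x y σ' k := by
  unfold stepSide
  rw [reg_congr f x y h]

lemma stepN_congr {σ σ' : ℕ → Bool × ℕ} {k : ℕ} (h : ∀ j, j < k → σ j = σ' j) :
    stepN f x y σ k = stepN f x y σ' k := by
  unfold stepN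
  rw [stepSide_congr f x y h, reg_congr f x y h]

lemma approx_eq_sig : ∀ k j, j < k → approx f x y k j = sig f x y j := by
  intro k
  induction k with
  | zero => intro j hj; omega
  | succ k ih =>
    intro j hj
    rcases Nat.lt_succ_iff_lt_or_eq.1 hj with h | h
    · have h1 : approx f x y (k+1) j = approx f x y k j := by
        simp only [approx]
        rw [if_neg (by omega)]
      rw [h1, ih j h]
    · subst h; rfl

lemma sig_eq (k : ℕ) :
    sig f x y k = (stepSide f x y (sig f x y) k, stepN f x y (sig f x y) k) := by
  have hagree : ∀ j, j < k → approx f x y k j = sig f x y j := approx_eq_sig f x y k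
  show approx f x y (k+1) k = _
  simp only [approx]
  rw [if_pos trivial]
  rw [stepSide_congr f x y hagree, stepN_congr f x y hagree]

lemma sig_fst (k : ℕ) : (sig f x y k).1 = stepSide f x y (sig f x y) k := by
  rw [sig_eq]

lemma sig_snd (k : ℕ) : (sig f x y k).2 = stepN f x y (sig f x y) k := by
  rw [sig_eq]

lemma side_true {k : ℕ} (h : (sig f x y k).1 = true) :
    (f k).2 ∈ reg f x y (sig f x y) true k := by
  rw [sig_fst] at h
  unfold stepSide at h
  by_cases hm : (f k).2 ∈ reg f x y (sig f x y) true k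
  · exact hm
  · rw [if_neg hm] at h; exact absurd h (by simp)

lemma side_false {k : ℕ} (h : (sig f x y k).1 = false) :
    (f k).2 ∉ reg f x y (sig f x y) true k := by
  rw [sig_fst] at h
  unfold stepSide at h
  by_cases hm : (f k).2 ∈ reg f x y (sig f x y) true k
  · rw [if_pos hm] at h; exact absurd h (by simp)
  · exact hm

/-- Points in the region opposite to the side of the `k`-th sequence differ from its limit. -/
lemma ne_head {k : ℕ}
    (hD : ∀ z, z ∈ reg f x y (sig f x y) true k → z ∈ reg f x y (sig f x y) false k → False)
    {z : Y} (hz : z ∈ reg f x y (sig f x y) (!(sig f x y k).1) k) : z ≠ (f k).2 := by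
  cases hs : (sig f x y k).1 with
  | false =>
    rw [hs, Bool.not_false] at hz
    intro he
    rw [he] at hz
    exact side_false f x y hs hz
  | true =>
    rw [hs, Bool.not_true] at hz
    intro he
    rw [he] at hz
    exact hD _ (side_true f x y hs) hz

variable (hP1 : ∀ k z, z ≠ (f k).2 → {n | (f k).1 n = z}.Finite)
variable (hP2 : ∀ k l, (f k).2 ≠ (f l).2 →
  ∃ F : Set ℕ, F.Finite ∧ ∀ n ∉ F, ∀ m ∉ F, (f k).1 n ≠ (f l).1 m)

include hP1 hP2 in
lemma hits_fin {k : ℕ}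
    (hD : ∀ z, z ∈ reg f x y (sig f x y) true k → z ∈ reg f x y (sig f x y) false k → False) :
    {n | (f k).1 n ∈ reg f x y (sig f x y) (!(sig f x y k).1) k}.Finite := by
  set σ := sig f x y with hσ
  set c := !(σ k).1 with hc
  have hne : ∀ z, z ∈ reg f x y σ c k → z ≠ (f k).2 := fun z hz => ne_head f x y hD hz
  have hbase : (bif c then x else y) ∈ reg f x y σ c k := Or.inl rfl
  have hsub : {n | (f k).1 n ∈ reg f x y σ c k} ⊆
      {n | (f k).1 n = (bif c then x else y)} ∪
      ⋃ j ∈ Finset.range k,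
        {n | (σ j).1 = c ∧ ((f j).2 = (f k).1 n ∨ ∃ m, (σ j).2 ≤ m ∧ (f j).1 m = (f k).1 n)} := by
    intro n hn
    rcases hn with h0 | ⟨j, hj, h1, h2⟩
    · exact Or.inl h0
    · refine Or.inr ?_
      simp only [mem_iUnion, Finset.mem_range, exists_prop]
      exact ⟨j, hj, h1, h2⟩
  refine Set.Finite.subset (Set.Finite.union ?_ ?_) hsub
  · exact hP1 k _ (hne _ hbase)
  · refine Set.Finite.biUnion (Finset.range k).finite_toSet (fun j hj => ?_)
    by_cases hsj : (σ j).1 = c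
    · have hjk : j < k := Finset.mem_range.1 hj
      have hpj : (f j).2 ∈ reg f x y σ c k := Or.inr ⟨j, hjk, hsj, Or.inl rfl⟩
      have hpjne : (f j).2 ≠ (f k).2 := hne _ hpj
      obtain ⟨F, hFfin, hF⟩ := hP2 k j (Ne.symm hpjne)
      have hT1 : {n | (f k).1 n = (f j).2}.Finite := hP1 k _ hpjne
      have hT2 : (⋃ m ∈ F, {n | (σ j).2 ≤ m ∧ (f k).1 n = (f j).1 m}).Finite := by
        refine Set.Finite.biUnion hFfin (fun m hm => ?_)
        by_cases hmN : (σ j).2 ≤ m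
        · have hz : (f j).1 m ∈ reg f x y σ c k := Or.inr ⟨j, hjk, hsj, Or.inr ⟨m, hmN, rfl⟩⟩
          exact Set.Finite.subset (hP1 k _ (hne _ hz)) (fun n hn => hn.2)
        · exact Set.Finite.subset finite_empty (fun n hn => absurd hn.1 hmN)
      refine Set.Finite.subset (hT1.union (hFfin.union hT2)) ?_
      rintro n ⟨-, h | ⟨m, hm1, hm2⟩⟩
      · exact Or.inl h.symm
      · by_cases hnF : n ∈ F
        · exact Or.inr (Or.inl hnF)
        · by_cases hmF : m ∈ F
          · refine Or.inr (Or.inr ?_)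
            simp only [mem_iUnion, exists_prop]
            exact ⟨m, hmF, hm1, hm2.symm⟩
          · exact absurd hm2.symm (hF n hnF m hmF)
    · exact Set.Finite.subset finite_empty (fun n hn => absurd hn.1 hsj)

include hP1 hP2 in
lemma tail_good {k : ℕ}
    (hD : ∀ z, z ∈ reg f x y (sig f x y) true k → z ∈ reg f x y (sig f x y) false k → False) :
    ∀ n, (sig f x y k).2 ≤ n →
      (f k).1 n ∉ reg f x y (sig f x y) (!(sig f x y k).1) k := by
  have hfin := hits_fin f x y hP1 hP2 hD
  obtain ⟨M, hM⟩ := hfin.bddAbove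
  have hmem : (M+1) ∈
      {N | ∀ n, N ≤ n → (f k).1 n ∉ reg f x y (sig f x y) (!(sig f x y k).1) k} := by
    intro n hn hmem'
    have : n ≤ M := hM hmem'
    omega
  have h2 : (sig f x y k).2 =
      sInf {N | ∀ n, N ≤ n → (f k).1 n ∉ reg f x y (sig f x y) (!(sig f x y k).1) k} := by
    rw [sig_snd]
    unfold stepN
    rw [← sig_fst]
  rw [h2]
  exact Nat.sInf_mem ⟨M+1, hmem⟩

include hP1 hP2 in
lemma disj (hxy : x ≠ y) : ∀ k, ∀ z,
    z ∈ reg f x y (sig f x y) true k → z ∈ reg f x y (sig f x y) false k → False := by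
  intro k
  induction k with
  | zero =>
    intro z h1 h2
    rcases h1 with h1 | ⟨j, hj, -⟩
    · rcases h2 with h2 | ⟨j, hj, -⟩
      · simp only [Bool.cond_true] at h1
        simp only [Bool.cond_false] at h2
        exact hxy (h1.symm.trans h2)
      · omega
    · omega
  | succ k ih =>
    have htail := tail_good f x y hP1 hP2 ih
    have hne : ∀ z, z ∈ reg f x y (sig f x y) (!(sig f x y k).1) k → z ≠ (f k).2 :=
      fun z hz => ne_head f x y ih hz
    intro z h1 h2
    have hsplit : ∀ b, z ∈ reg f x y (sig f x y) b (k+1) →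
        z ∈ reg f x y (sig f x y) b k ∨
        ((sig f x y k).1 = b ∧ ((f k).2 = z ∨ ∃ n, (sig f x y k).2 ≤ n ∧ (f k).1 n = z)) := by
      intro b h
      rcases h with h0 | ⟨j, hj, hb, hz⟩
      · exact Or.inl (Or.inl h0)
      · rcases Nat.lt_succ_iff_lt_or_eq.1 hj with hj' | hj'
        · exact Or.inl (Or.inr ⟨j, hj', hb, hz⟩)
        · subst hj'; exact Or.inr ⟨hb, hz⟩
    rcases hsplit true h1 with h1' | ⟨hb1, hz1⟩ <;> rcases hsplit false h2 with h2' | ⟨hb2, hz2⟩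
    · exact ih z h1' h2'
    · -- new on the false side, old on the true side
      have hcast : z ∈ reg f x y (sig f x y) (!(sig f x y k).1) k := by
        rw [hb2, Bool.not_false]; exact h1'
      rcases hz2 with hz | ⟨n, hn1, hn2⟩
      · exact hne z hcast hz.symm
      · exact (hn2 ▸ htail n hn1) hcast
    · have hcast : z ∈ reg f x y (sig f x y) (!(sig f x y k).1) k := by
        rw [hb1, Bool.not_true]; exact h2'
      rcases hz1 with hz | ⟨n, hn1, hn2⟩
      · exact hne z hcast hz.symm
      · exact (hn2 ▸ htail n hn1) hcast
    · rw [hb1] at hb2; exact absurd hb2 (by simp)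

lemma reg_subset_regInf (b : Bool) (k : ℕ) :
    reg f x y (sig f x y) b k ⊆ regInf f x y (sig f x y) b := by
  rintro z (h0 | ⟨j, -, h1, h2⟩)
  · exact Or.inl h0
  · exact Or.inr ⟨j, h1, h2⟩

lemma mem_regInf_exists {b : Bool} {z : Y} (h : z ∈ regInf f x y (sig f x y) b) :
    ∃ k, z ∈ reg f x y (sig f x y) b k := by
  rcases h with h0 | ⟨j, h1, h2⟩
  · exact ⟨0, Or.inl h0⟩
  · exact ⟨j+1, Or.inr ⟨j, Nat.lt_succ_self j, h1, h2⟩⟩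

lemma reg_mono {b : Bool} {k k' : ℕ} (hk : k ≤ k') :
    reg f x y (sig f x y) b k ⊆ reg f x y (sig f x y) b k' := by
  rintro z (h0 | ⟨j, hj, h1, h2⟩)
  · exact Or.inl h0
  · exact Or.inr ⟨j, by omega, h1, h2⟩

include hP1 hP2 in
lemma disjInf (hxy : x ≠ y) : ∀ z,
    z ∈ regInf f x y (sig f x y) true → z ∈ regInf f x y (sig f x y) false → False := by
  intro z h1 h2
  obtain ⟨k1, hk1⟩ := mem_regInf_exists f x y h1
  obtain ⟨k2, hk2⟩ := mem_regInf_exists f x y h2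
  exact disj f x y hP1 hP2 hxy (max k1 k2) z
    (reg_mono f x y (le_max_left k1 k2) hk1)
    (reg_mono f x y (le_max_right k1 k2) hk2)

end Sep

/-- The separation lemma: for a countable, suitably coherent family `C` of convergent
sequences with limits, any two distinct points can be separated by a `C`-clopen set. -/
theorem sep {Y : Type*} {C : Set ((ℕ → Y) × Y)} (hC : C.Countable)
    (hP1 : ∀ c ∈ C, ∀ z, z ≠ c.2 → {n | c.1 n = z}.Finite)
    (hP2 : ∀ c ∈ C, ∀ c' ∈ C, c.2 ≠ c'.2 →
      ∃ F : Set ℕ, F.Finite ∧ ∀ n ∉ F, ∀ m ∉ F, c.1 n ≠ c'.1 m)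
    {x y : Y} (hxy : x ≠ y) :
    ∃ A : Set Y, x ∈ A ∧ y ∉ A ∧ ∀ c ∈ C,
      (c.2 ∈ A → ∀ᶠ n in atTop, c.1 n ∈ A) ∧ (c.2 ∉ A → ∀ᶠ n in atTop, c.1 n ∉ A) := by
  classical
  obtain ⟨f, hf⟩ : ∃ f : ℕ → (ℕ → Y) × Y, insert ((fun _ => x), x) C = range f :=
    (hC.insert _).exists_eq_range (insert_nonempty _ _)
  have hfm : ∀ k, f k = ((fun _ => x), x) ∨ f k ∈ C := by
    intro k
    have : f k ∈ insert ((fun _ => x), x) C := hf ▸ mem_range_self k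
    simpa using this
  have hCf : ∀ c ∈ C, ∃ k, f k = c := by
    intro c hc
    have : c ∈ range f := hf ▸ mem_insert_of_mem _ hc
    exact this
  have hP1' : ∀ k z, z ≠ (f k).2 → {n | (f k).1 n = z}.Finite := by
    intro k z hz
    rcases hfm k with h | h
    · rw [h] at hz ⊢
      exact Set.Finite.subset finite_empty (fun n hn => (hz (Eq.symm hn)).elim)
    · exact hP1 _ h z hz
  have hP2' : ∀ k l, (f k).2 ≠ (f l).2 →
      ∃ F : Set ℕ, F.Finite ∧ ∀ n ∉ F, ∀ m ∉ F, (f k).1 n ≠ (f l).1 m := by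
    intro k l hne
    rcases hfm k with hk | hk <;> rcases hfm l with hl | hl
    · rw [hk, hl] at hne; exact absurd rfl hne
    · rw [hk] at hne
      refine ⟨{m | (f l).1 m = x}, hP1' l x hne, fun n hn m hm => ?_⟩
      rw [hk]
      exact fun h => hm h.symm
    · rw [hl] at hne
      refine ⟨{n | (f k).1 n = x}, hP1' k x (Ne.symm hne), fun n hn m hm => ?_⟩
      rw [hl]
      exact fun h => hn h
    · exact hP2 _ hk _ hl hne
  refine ⟨regInf f x y (sig f x y) true, Or.inl rfl, ?_, ?_⟩
  · intro hy
    exact disjInf f x y hP1' hP2' hxy y hy (Or.inl rfl)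
  · intro c hc
    obtain ⟨k, hk⟩ := hCf c hc
    subst hk
    constructor
    · intro hmem
      have hs : (sig f x y k).1 = true := by
        cases hs : (sig f x y k).1
        · exact absurd (Or.inr ⟨k, hs, Or.inl rfl⟩ :
            (f k).2 ∈ regInf f x y (sig f x y) false)
            (fun h => disjInf f x y hP1' hP2' hxy _ hmem h)
        · rfl
      exact eventually_atTop.2
        ⟨(sig f x y k).2, fun n hn => Or.inr ⟨k, hs, Or.inr ⟨n, hn, rfl⟩⟩⟩
    · intro hmem
      have hs : (sig f x y k).1 = false := by
        cases hs : (sig f x y k).1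
        · rfl
        · exact absurd (reg_subset_regInf f x y true k (side_true f x y hs)) hmem
      exact eventually_atTop.2
        ⟨(sig f x y k).2, fun n hn hmem' =>
          disjInf f x y hP1' hP2' hxy _ hmem' (Or.inr ⟨k, hs, Or.inr ⟨n, hn, rfl⟩⟩)⟩

/-! ### Semilattice specific constructions -/

section Main

variable {X : Type*} [CommSemigroup X]

/-- Multiplication by an optional element (`none` acts as an identity). -/
def mulo : Option X → X → X
  | none, z => z
  | some a, z => a * z

/-- Composition bookkeeping for `mulo`. -/
def opush (o : Option X) (b : X) : X :=
  match o with
  | none => b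
  | some a => a * b

lemma mulo_mul (o : Option X) (a z : X) : mulo o (a * z) = opush o a * z := by
  cases o with
  | none => rfl
  | some b => exact (mul_assoc b a z).symm

lemma mul_mulo (c : X) (o : Option X) (z : X) : c * mulo o z = opush o c * z := by
  cases o with
  | none => rfl
  | some a => show c * (a * z) = a * c * z; rw [← mul_assoc, mul_comm c a]

theorem necessity {D : Set (ℕ → X)} {ℓ : (ℕ → X) → X} (τ : TopologicalSpace X)
    (ht2 : @T2Space X τ) (hcont : ∀ a : X, @Continuous X X τ τ (fun x => a * x))
    (hconv : ∀ s ∈ D, Tendsto s atTop (@nhds X τ (ℓ s))) :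
    ((∀ s ∈ D, ∀ a x : X, x ≠ a * ℓ s → {n : ℕ | a * s n = x}.Finite) ∧
     (∀ s ∈ D, ∀ t ∈ D, ∀ a b : X, a * ℓ s ≠ b * ℓ t →
       ∃ F : Set ℕ, F.Finite ∧ ∀ n ∉ F, ∀ m ∉ F, a * s n ≠ b * t m)) := by
  letI := τ
  haveI := ht2
  constructor
  · intro s hs a x hx
    by_contra hfin
    have hfreq : ∃ᶠ n in atTop, a * s n = x :=
      Nat.frequently_atTop_iff_infinite.2 hfin
    have h1 : Tendsto (fun n => a * s n) atTop (𝓝 (a * ℓ s)) :=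
      ((hcont a).tendsto (ℓ s)).comp (hconv s hs)
    have := tendsto_nhds_unique_of_frequently_eq h1 tendsto_const_nhds hfreq
    exact hx this.symm
  · intro s hs t ht a b hne
    obtain ⟨U, V, hU, hV, hUm, hVm, hUV⟩ := t2_separation hne
    have h1 : ∀ᶠ n in atTop, a * s n ∈ U :=
      (((hcont a).tendsto (ℓ s)).comp (hconv s hs)).eventually_mem (hU.mem_nhds hUm)
    have h2 : ∀ᶠ m in atTop, b * t m ∈ V :=
      (((hcont b).tendsto (ℓ t)).comp (hconv t ht)).eventually_mem (hV.mem_nhds hVm)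
    obtain ⟨N1, hN1⟩ := eventually_atTop.1 h1
    obtain ⟨N2, hN2⟩ := eventually_atTop.1 h2
    refine ⟨{n | n < max N1 N2}, Set.finite_lt_nat _, fun n hn m hm he => ?_⟩
    simp only [mem_setOf_eq, not_lt] at hn hm
    exact Set.disjoint_left.1 hUV (hN1 n (le_trans (le_max_left _ _) hn))
      (he ▸ hN2 m (le_trans (le_max_right _ _) hm))

theorem construct [Countable X] (idem : ∀ x : X, x * x = x) (D : Set (ℕ → X))
    (hD : D.Countable) (ℓ : (ℕ → X) → X)
    (h3a : ∀ s ∈ D, ∀ a x : X, x ≠ a * ℓ s → {n : ℕ | a * s n = x}.Finite)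
    (h3b : ∀ s ∈ D, ∀ t ∈ D, ∀ a b : X, a * ℓ s ≠ b * ℓ t →
      ∃ F : Set ℕ, F.Finite ∧ ∀ n ∉ F, ∀ m ∉ F, a * s n ≠ b * t m) :
    ∃ τ : TopologicalSpace X, @TopologicalSpace.MetrizableSpace X τ ∧
      (∀ a : X, @Continuous X X τ τ (fun x => a * x)) ∧
      ∀ s ∈ D, Tendsto s atTop (@nhds X τ (ℓ s)) := by
  classical
  set C : Set ((ℕ → X) × X) :=
    ⋃ o : Option X, (fun s : ℕ → X => ((fun n => mulo o (s n)), mulo o (ℓ s))) '' D with hCdef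
  have hC : C.Countable := countable_iUnion fun o => hD.image _
  have hmemC : ∀ {c}, c ∈ C ↔
      ∃ o : Option X, ∃ s ∈ D, ((fun n => mulo o (s n)), mulo o (ℓ s)) = c := by
    intro c
    simp only [hCdef, mem_iUnion, mem_image]
  have hP1plain : ∀ s ∈ D, ∀ z, z ≠ ℓ s → {n | s n = z}.Finite := by
    intro s hs z hz
    by_cases h : ℓ s * z = ℓ s
    · have hz' : z ≠ z * ℓ s := by rw [mul_comm z (ℓ s), h]; exact hz
      refine (h3a s hs z z hz').subset (fun n hn => ?_)
      simp only [mem_setOf_eq] at hn ⊢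
      rw [hn, idem]
    · have h' : ℓ s * z ≠ ℓ s * ℓ s := by rw [idem]; exact h
      refine (h3a s hs (ℓ s) (ℓ s * z) h').subset (fun n hn => ?_)
      simp only [mem_setOf_eq] at hn ⊢
      rw [hn]
  have hCP1 : ∀ c ∈ C, ∀ z, z ≠ c.2 → {n | c.1 n = z}.Finite := by
    intro c hc z hz
    obtain ⟨o, s, hs, rfl⟩ := hmemC.1 hc
    cases o with
    | none => exact hP1plain s hs z hz
    | some a => exact h3a s hs a z hz
  have hsepmul : ∀ p q : X, p ≠ q → ∃ c : X, c * p ≠ c * q := by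
    intro p q hpq
    by_cases h : p * q = p
    · refine ⟨q, ?_⟩
      rw [mul_comm q p, h, idem]
      exact hpq
    · refine ⟨p, ?_⟩
      rw [idem]
      exact fun he => h he.symm
  have hCP2 : ∀ c ∈ C, ∀ c' ∈ C, c.2 ≠ c'.2 →
      ∃ F : Set ℕ, F.Finite ∧ ∀ n ∉ F, ∀ m ∉ F, c.1 n ≠ c'.1 m := by
    intro c hc c' hc' hne
    obtain ⟨o₁, s, hs, rfl⟩ := hmemC.1 hc
    obtain ⟨o₂, t, ht, rfl⟩ := hmemC.1 hc'
    obtain ⟨c0, hc0⟩ := hsepmul _ _ hne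
    rw [mul_mulo, mul_mulo] at hc0
    obtain ⟨F, hFfin, hF⟩ := h3b s hs t ht _ _ hc0
    refine ⟨F, hFfin, fun n hn m hm he => ?_⟩
    have h2 := congrArg (fun w => c0 * w) he
    simp only at h2
    rw [mul_mulo, mul_mulo] at h2
    exact hF n hn m hm h2
  have hsep : ∀ x y : X, ∃ A : Set X, (x ≠ y → x ∈ A ∧ y ∉ A) ∧ ∀ c ∈ C,
      (c.2 ∈ A → ∀ᶠ n in atTop, c.1 n ∈ A) ∧ (c.2 ∉ A → ∀ᶠ n in atTop, c.1 n ∉ A) := by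
    intro x y
    by_cases hxy : x = y
    · exact ⟨univ, fun h => absurd hxy h,
        fun c hc => ⟨fun _ => Eventually.of_forall fun n => mem_univ _,
          fun h => absurd (mem_univ _) h⟩⟩
    · obtain ⟨A, h1, h2, h3⟩ := Stmt14Aux.sep hC hCP1 hCP2 hxy
      exact ⟨A, fun _ => ⟨h1, h2⟩, h3⟩
  choose B hBsep hBclop using hsep
  have hCshift : ∀ c ∈ C, ∀ a : X, ((fun n => a * c.1 n), a * c.2) ∈ C := by
    intro c hc a
    obtain ⟨o, s, hs, rfl⟩ := hmemC.1 hc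
    refine hmemC.2 ⟨some (opush o a), s, hs, ?_⟩
    refine Prod.ext ?_ ?_
    · funext n
      exact (mul_mulo a o (s n)).symm
    · exact (mul_mulo a o (ℓ s)).symm
  set clopC : Set X → Prop := fun S => ∀ c ∈ C,
    (c.2 ∈ S → ∀ᶠ n in atTop, c.1 n ∈ S) ∧ (c.2 ∉ S → ∀ᶠ n in atTop, c.1 n ∉ S) with hclopdef
  have hclop_shift : ∀ S, clopC S → ∀ a : X, clopC ((fun z => a * z) ⁻¹' S) := by
    intro S hS a c hc
    have hc' := hS _ (hCshift c hc a)
    exact ⟨fun h => hc'.1 h, fun h => hc'.2 h⟩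
  have hclop_mulo : ∀ (o : Option X) (p q : X), clopC ((fun z => mulo o z) ⁻¹' B p q) := by
    intro o p q
    cases o with
    | none => exact hBclop p q
    | some a => exact hclop_shift _ (hBclop p q) a
  set A : Option X × X × X → Set X :=
    fun i => (fun z => mulo i.1 z) ⁻¹' B i.2.1 i.2.2 with hAdef
  have hAclop : ∀ i, clopC (A i) := fun i => hclop_mulo i.1 i.2.1 i.2.2
  set e : X → (Option X × X × X) → ℝ := fun z i => if z ∈ A i then 1 else 0 with hedef
  set τ : TopologicalSpace X := TopologicalSpace.induced e inferInstance with hτdef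
  have hind : @IsInducing X ((Option X × X × X) → ℝ) τ _ e := @IsInducing.mk _ _ τ _ e rfl
  have hinj : Function.Injective e := by
    intro a b hab
    by_contra hne
    have hsepab := hBsep a b hne
    have h1 : e a (none, a, b) = 1 := if_pos hsepab.1
    have h2 : e b (none, a, b) = 0 := if_neg hsepab.2
    rw [hab] at h1
    exact one_ne_zero (h1.symm.trans h2)
  have hemb : @IsEmbedding X ((Option X × X × X) → ℝ) τ _ e := ⟨hind, hinj⟩
  refine ⟨τ, ?_, ?_, ?_⟩
  · exact @IsEmbedding.metrizableSpace X ((Option X × X × X) → ℝ) τ _ _ e hemb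
  · intro a
    letI : TopologicalSpace X := τ
    refine continuous_induced_rng.2 ?_
    refine continuous_pi (fun i => ?_)
    have hcoord : (fun z => (e ∘ fun w => a * w) z i) =
        fun z => e z (some (opush i.1 a), i.2.1, i.2.2) := by
      funext z
      show (if a * z ∈ A i then (1:ℝ) else 0) =
        if z ∈ A (some (opush i.1 a), i.2.1, i.2.2) then 1 else 0
      have hmemeq : (a * z ∈ A i) = (z ∈ A (some (opush i.1 a), i.2.1, i.2.2)) := by
        show (mulo i.1 (a * z) ∈ B i.2.1 i.2.2) =
          (mulo (some (opush i.1 a)) z ∈ B i.2.1 i.2.2)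
        rw [mulo_mul]
        rfl
      rw [hmemeq]
    show Continuous fun z => (e ∘ fun w => a * w) z i
    rw [hcoord]
    have he_cont : Continuous e := continuous_induced_dom
    exact (continuous_apply _).comp he_cont
  · intro s hs
    letI : TopologicalSpace X := τ
    rw [hind.tendsto_nhds_iff]
    rw [tendsto_pi_nhds]
    intro i
    have hsC : ((fun n => s n : ℕ → X), ℓ s) ∈ C := hmemC.2 ⟨none, s, hs, rfl⟩
    have hclop := hAclop i _ hsC
    by_cases h : ℓ s ∈ A i
    · have hev : ∀ᶠ n in atTop, s n ∈ A i := hclop.1 h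
      have heq : ∀ᶠ n in atTop, (e ∘ s) n i = e (ℓ s) i := by
        refine hev.mono (fun n hn => ?_)
        show (if s n ∈ A i then (1:ℝ) else 0) = if ℓ s ∈ A i then 1 else 0
        rw [if_pos hn, if_pos h]
      exact Tendsto.congr' (heq.mono fun n hn => hn.symm) tendsto_const_nhds
    · have hev : ∀ᶠ n in atTop, s n ∉ A i := hclop.2 h
      have heq : ∀ᶠ n in atTop, (e ∘ s) n i = e (ℓ s) i := by
        refine hev.mono (fun n hn => ?_)
        show (if s n ∈ A i then (1:ℝ) else 0) = if ℓ s ∈ A i then 1 else 0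
        rw [if_neg hn, if_neg h]
      exact Tendsto.congr' (heq.mono fun n hn => hn.symm) tendsto_const_nhds

end Main

end Stmt14Aux

/-- For a countable semilattice `X` (commutative idempotent semigroup) and a function `ℓ` on
a countable set `D` of sequences, the existence of a shift-continuous metrizable
(resp. Hausdorff) topology in which every `s ∈ D` converges to `ℓ s` is equivalent to the
separation conditions (3a), (3b) with `a, b ∈ X`. -/
theorem stmt14 {X : Type*} [CommSemigroup X] [Countable X]
    (idem : ∀ x : X, x * x = x)
    (D : Set (ℕ → X)) (hD : D.Countable) (ℓ : (ℕ → X) → X) :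
    ((∃ τ : TopologicalSpace X, @TopologicalSpace.MetrizableSpace X τ ∧
        (∀ a : X, @Continuous X X τ τ (fun x => a * x)) ∧
        ∀ s ∈ D, Tendsto s atTop (@nhds X τ (ℓ s))) ↔
      ((∀ s ∈ D, ∀ a x : X, x ≠ a * ℓ s → {n : ℕ | a * s n = x}.Finite) ∧
       (∀ s ∈ D, ∀ t ∈ D, ∀ a b : X, a * ℓ s ≠ b * ℓ t →
         ∃ F : Set ℕ, F.Finite ∧ ∀ n ∉ F, ∀ m ∉ F, a * s n ≠ b * t m))) ∧
    ((∃ τ : TopologicalSpace X, @T2Space X τ ∧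
        (∀ a : X, @Continuous X X τ τ (fun x => a * x)) ∧
        ∀ s ∈ D, Tendsto s atTop (@nhds X τ (ℓ s))) ↔
      ((∀ s ∈ D, ∀ a x : X, x ≠ a * ℓ s → {n : ℕ | a * s n = x}.Finite) ∧
       (∀ s ∈ D, ∀ t ∈ D, ∀ a b : X, a * ℓ s ≠ b * ℓ t →
         ∃ F : Set ℕ, F.Finite ∧ ∀ n ∉ F, ∀ m ∉ F, a * s n ≠ b * t m))) := by
  constructor
  · constructor
    · rintro ⟨τ, hmet, hcont, hconv⟩
      have ht2 : @T2Space X τ := by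
        letI := τ
        haveI := hmet
        infer_instance
      exact Stmt14Aux.necessity τ ht2 hcont hconv
    · rintro ⟨h3a, h3b⟩
      exact Stmt14Aux.construct idem D hD ℓ h3a h3b
  · constructor
    · rintro ⟨τ, ht2, hcont, hconv⟩
      exact Stmt14Aux.necessity τ ht2 hcont hconv
    · rintro ⟨h3a, h3b⟩
      obtain ⟨τ, hmet, hcont, hconv⟩ := Stmt14Aux.construct idem D hD ℓ h3a h3b
      refine ⟨τ, ?_, hcont, hconv⟩
      letI := τ
      haveI := hmet
      infer_instance
end

section
/- Let X be the subsemilattice of {0,1,2}^ω (with coordinatewise minimum) consisting of all functions f : ω → {0,1,2} with nonempty finite support supp(f) = f⁻¹({0,1}). For n ∈ ω let 𝟎_n, 𝟏_n ∈ X be defined by 𝟎_n(n) = 0, 𝟏_n(n) = 1 and 𝟎_n(i) = 𝟏_n(i) = 2 for i ≠ n. Then X admits a metrizable shift-continuous topology τ such that the set {(𝟎_n, 𝟏_n) : n ∈ ℕ} is dense in X × X; consequently the partial order P = {(x,y) : xy = x} of the semitopological semilattice (X, τ) is dense and non-closed in X × X. -/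
/-- Elements of `{0,1,2}^ω` with finite nonempty support `f⁻¹({0,1}) = {i | f i ≠ 2}`. -/
def SL : Type :=
  {f : ℕ → Fin 3 // {i : ℕ | f i ≠ 2}.Finite ∧ {i : ℕ | f i ≠ 2}.Nonempty}

private lemma min_eq_two_iff : ∀ x y : Fin 3, min x y = 2 ↔ x = 2 ∧ y = 2 := by decide

/-- Coordinatewise minimum on `SL`. -/
def SLmul (f g : SL) : SL :=
  ⟨fun i => min (f.1 i) (g.1 i), by
    constructor
    · apply (f.2.1.union g.2.1).subset
      intro i hi
      simp only [Set.mem_setOf_eq, Set.mem_union] at hi ⊢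
      by_contra h
      push_neg at h
      exact hi ((min_eq_two_iff _ _).2 ⟨h.1, h.2⟩)
    · obtain ⟨i, hi⟩ := f.2.2
      exact ⟨i, fun h => hi ((min_eq_two_iff _ _).1 h).1⟩⟩

/-- The element `𝟎_n` taking value `0` at `n` and `2` elsewhere. -/
def zeroEl (n : ℕ) : SL :=
  ⟨fun i => if i = n then 0 else 2, by
    have h : {i : ℕ | (if i = n then (0 : Fin 3) else 2) ≠ 2} = {n} := by
      ext i
      by_cases hi : i = n <;> simp [hi]
    constructor
    · rw [h]; exact Set.finite_singleton n
    · rw [h]; exact ⟨n, rfl⟩⟩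

/-- The element `𝟏_n` taking value `1` at `n` and `2` elsewhere. -/
def oneEl (n : ℕ) : SL :=
  ⟨fun i => if i = n then 1 else 2, by
    have h : {i : ℕ | (if i = n then (1 : Fin 3) else 2) ≠ 2} = {n} := by
      ext i
      by_cases hi : i = n <;> simp [hi]
    constructor
    · rw [h]; exact Set.finite_singleton n
    · rw [h]; exact ⟨n, rfl⟩⟩


/-!
The topology comes from a forest structure on `SL`. An element `z` of level
`m = max supp z ≥ 1` has as parent the meet of `z`, with its top coordinate erased, and an entry
of the `m`-th term of an enumeration of `SL × SL` in which every pair recurs at infinitely many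
indices exceeding the levels of its entries: the first entry if `z m = 0`, the second if
`z m = 1`. So `𝟎_n` and `𝟏_n` are children of the two entries of the `n`-th pair.

The distance of two points is the largest weight `2⁻ˡᵉᵛᵉˡ` on the symmetric difference of their
chains of ancestors, so a child of level `n` lies within `2⁻ⁿ` of its parent: this makes the pairs
`(𝟎_n, 𝟏_n)` dense. Left multiplication by `a` commutes with the parent map above level
`max supp a` and preserves levels there, hence does not increase distances below
`2^(-max supp a)`: this is shift-continuity. The order `P` contains the dense set of pairs but
misses `(𝟏_0, 𝟎_0)`, so it is dense and not closed.
-/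

open Filter
open scoped NNReal

structure GradedForest (α : Type*) where
  parent : α → α
  level : α → ℕ
  level_parent_lt : ∀ z, level z ≠ 0 → level (parent z) < level z
  parent_eq_self : ∀ z, level z = 0 → parent z = z

namespace GradedForest

variable {α : Type*} (F : GradedForest α)

theorem level_iterate_le (z : α) (k : ℕ) : F.level (F.parent^[k] z) ≤ F.level z - k := by
  induction k with
  | zero => simp
  | succ k ih =>
    rw [Function.iterate_succ_apply']
    by_cases h : F.level (F.parent^[k] z) = 0
    · rw [F.parent_eq_self _ h, h]
      exact Nat.zero_le _
    · have := F.level_parent_lt _ h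
      omega

theorem iterate_eq_iterate_level (z : α) {k : ℕ} (hk : F.level z ≤ k) :
    F.parent^[k] z = F.parent^[F.level z] z := by
  induction k, hk using Nat.le_induction with
  | base => rfl
  | succ k _ ih =>
    have := F.level_iterate_le z (F.level z)
    rw [Function.iterate_succ_apply', ih, F.parent_eq_self _ (by omega)]

noncomputable def weight (z : α) : ℝ≥0 := 2⁻¹ ^ F.level z

variable [DecidableEq α]

def ancestors (z : α) : Finset α :=
  (Finset.range (F.level z + 1)).image (F.parent^[·] z)

theorem mem_ancestors {w z : α} : w ∈ F.ancestors z ↔ ∃ k, F.parent^[k] z = w := by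
  refine ⟨fun h => ?_, fun ⟨k, hk⟩ => Finset.mem_image.2 ?_⟩
  · obtain ⟨k, -, hk⟩ := Finset.mem_image.1 h
    exact ⟨k, hk⟩
  · rcases le_or_gt k (F.level z) with hkz | hkz
    · exact ⟨k, Finset.mem_range.2 (by omega), hk⟩
    · exact ⟨F.level z, by simp, by rw [← hk, F.iterate_eq_iterate_level z hkz.le]⟩

theorem self_mem_ancestors (z : α) : z ∈ F.ancestors z :=
  F.mem_ancestors.2 ⟨0, rfl⟩

theorem ancestors_eq_insert (z : α) : F.ancestors z = insert z (F.ancestors (F.parent z)) := by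
  ext w
  simp only [Finset.mem_insert, mem_ancestors]
  constructor
  · rintro ⟨_ | k, rfl⟩
    · exact Or.inl rfl
    · exact Or.inr ⟨k, (Function.iterate_succ_apply _ _ _).symm⟩
  · rintro (rfl | ⟨k, rfl⟩)
    · exact ⟨0, rfl⟩
    · exact ⟨k + 1, Function.iterate_succ_apply _ _ _⟩

theorem eq_or_level_lt_of_mem_ancestors {w z : α} (h : w ∈ F.ancestors z) :
    w = z ∨ F.level w < F.level z := by
  obtain ⟨_ | k, rfl⟩ := F.mem_ancestors.1 h
  · exact Or.inl rfl
  · by_cases hz : F.level z = 0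
    · exact Or.inl (Function.iterate_fixed (F.parent_eq_self z hz) _)
    · have := F.level_iterate_le z (k + 1)
      exact Or.inr (by omega)

theorem eq_of_mem_ancestors_of_mem_ancestors {u v : α} (hu : u ∈ F.ancestors v)
    (hv : v ∈ F.ancestors u) : u = v := by
  rcases F.eq_or_level_lt_of_mem_ancestors hu with h | h
  · exact h
  rcases F.eq_or_level_lt_of_mem_ancestors hv with h' | h'
  · exact h'.symm
  omega

noncomputable def treeDist (u v : α) : ℝ≥0 :=
  (symmDiff (F.ancestors u) (F.ancestors v)).sup F.weight

theorem treeDist_self (u : α) : F.treeDist u u = 0 := by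
  simp [treeDist]

theorem treeDist_comm (u v : α) : F.treeDist u v = F.treeDist v u := by
  rw [treeDist, treeDist, symmDiff_comm]

theorem treeDist_triangle (u v w : α) : F.treeDist u w ≤ F.treeDist u v + F.treeDist v w :=
  calc F.treeDist u w
      ≤ (symmDiff (F.ancestors u) (F.ancestors v) ∪
          symmDiff (F.ancestors v) (F.ancestors w)).sup F.weight :=
        Finset.sup_mono (symmDiff_triangle _ _ _)
    _ = F.treeDist u v ⊔ F.treeDist v w := Finset.sup_union
    _ ≤ F.treeDist u v + F.treeDist v w := sup_le le_self_add le_add_self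

theorem eq_of_treeDist_eq_zero {u v : α} (h : F.treeDist u v = 0) : u = v := by
  have hanc : F.ancestors u = F.ancestors v := by
    rw [← symmDiff_eq_bot, Finset.bot_eq_empty, Finset.eq_empty_iff_forall_notMem]
    intro z hz
    exact pow_ne_zero _ (by norm_num) ((Finset.sup_eq_bot_iff _ _).1 h z hz)
  exact F.eq_of_mem_ancestors_of_mem_ancestors (hanc ▸ F.self_mem_ancestors u)
    (hanc ▸ F.self_mem_ancestors v)

theorem treeDist_le_weight_sup (u v : α) :
    F.treeDist u v ≤ F.weight u ⊔ F.treeDist (F.parent u) v := by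
  calc F.treeDist u v
      ≤ (insert u (symmDiff (F.ancestors (F.parent u)) (F.ancestors v))).sup F.weight := by
        rw [treeDist, F.ancestors_eq_insert u]
        refine Finset.sup_mono fun z hz => ?_
        rw [Finset.mem_insert, Finset.mem_symmDiff, Finset.mem_insert] at *
        tauto
    _ = F.weight u ⊔ F.treeDist (F.parent u) v := Finset.sup_insert

theorem treeDist_eq_weight_sup {u v : α} (hu : u ∉ F.ancestors v) :
    F.treeDist u v = F.weight u ⊔ F.treeDist (F.parent u) v := by
  refine (F.treeDist_le_weight_sup u v).antisymm (sup_le ?_ ?_)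
  · exact Finset.le_sup (Finset.mem_symmDiff.2 (Or.inl ⟨F.self_mem_ancestors u, hu⟩))
  · refine Finset.sup_mono fun z hz => ?_
    rw [F.ancestors_eq_insert u, Finset.mem_symmDiff, Finset.mem_insert] at *
    rcases eq_or_ne z u with rfl | hzu <;> tauto

theorem treeDist_parent_le (z : α) : F.treeDist z (F.parent z) ≤ F.weight z := by
  simpa [F.treeDist_self] using F.treeDist_le_weight_sup z (F.parent z)

theorem lt_level_of_notMem_ancestors {u v : α} {m : ℕ} (hu : u ∉ F.ancestors v)
    (h : F.treeDist u v < 2⁻¹ ^ m) : m < F.level u := by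
  have hw : F.weight u < 2⁻¹ ^ m :=
    (le_sup_left.trans (F.treeDist_eq_weight_sup hu).ge).trans_lt h
  exact (pow_lt_pow_iff_right_of_lt_one₀ (by norm_num) (by norm_num)).1 hw

theorem treeDist_map_le {f : α → α} {m : ℕ}
    (hparent : ∀ z, m < F.level z → F.parent (f z) = f (F.parent z))
    (hlevel : ∀ z, m < F.level z → F.level (f z) = F.level z) (u v : α)
    (h : F.treeDist u v < 2⁻¹ ^ m) : F.treeDist (f u) (f v) ≤ F.treeDist u v := by
  induction hn : F.level u + F.level v using Nat.strong_induction_on generalizing u v with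
  | _ n ih =>
    have step : ∀ u v, u ∉ F.ancestors v → F.level u + F.level v = n →
        F.treeDist u v < 2⁻¹ ^ m → F.treeDist (f u) (f v) ≤ F.treeDist u v := by
      intro u v hu hn h
      have hm := F.lt_level_of_notMem_ancestors hu h
      have hlt := F.level_parent_lt u (by omega)
      rw [F.treeDist_eq_weight_sup hu] at h ⊢
      calc F.treeDist (f u) (f v) ≤ F.weight (f u) ⊔ F.treeDist (F.parent (f u)) (f v) :=
            F.treeDist_le_weight_sup _ _
        _ = F.weight u ⊔ F.treeDist (f (F.parent u)) (f v) := by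
            rw [weight, weight, hlevel u hm, hparent u hm]
        _ ≤ F.weight u ⊔ F.treeDist (F.parent u) v :=
            sup_le_sup_left (ih _ (by omega) _ _ (sup_lt_iff.1 h).2 rfl) _
    by_cases hu : u ∈ F.ancestors v
    · by_cases hv : v ∈ F.ancestors u
      · rw [F.eq_of_mem_ancestors_of_mem_ancestors hu hv, F.treeDist_self, F.treeDist_self]
      · rw [F.treeDist_comm] at h
        rw [F.treeDist_comm, F.treeDist_comm u]
        exact step v u hv (by omega) h
    · exact step u v hu hn h

noncomputable abbrev toMetricSpace : MetricSpace α where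
  dist u v := F.treeDist u v
  dist_self u := by simp [F.treeDist_self]
  dist_comm u v := by rw [F.treeDist_comm]
  dist_triangle u v w := by exact_mod_cast F.treeDist_triangle u v w
  eq_of_dist_eq_zero h := F.eq_of_treeDist_eq_zero (NNReal.coe_eq_zero.1 h)

theorem continuous_of_commute_parent {f : α → α} {m : ℕ}
    (hparent : ∀ z, m < F.level z → F.parent (f z) = f (F.parent z))
    (hlevel : ∀ z, m < F.level z → F.level (f z) = F.level z) :
    letI := F.toMetricSpace; Continuous f := by
  let := F.toMetricSpace
  refine Metric.continuous_iff.2 fun v ε hε =>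
    ⟨min ε (2⁻¹ ^ m), by positivity, fun u hu => ?_⟩
  rw [lt_min_iff] at hu
  have hm : F.treeDist u v < 2⁻¹ ^ m := by exact_mod_cast hu.2
  exact lt_of_le_of_lt (NNReal.coe_le_coe.2 (F.treeDist_map_le hparent hlevel u v hm)) hu.1

theorem dense_of_forall_exists_parent_eq {S : Set (α × α)}
    (hS : ∀ x y : α, ∀ N : ℕ, ∃ a b, (a, b) ∈ S ∧ F.parent a = x ∧ F.parent b = y ∧
      N ≤ F.level a ∧ N ≤ F.level b) :
    letI := F.toMetricSpace; Dense S := by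
  let := F.toMetricSpace
  have hdist : ∀ {N : ℕ} {z : α}, N ≤ F.level z →
      dist z (F.parent z) ≤ (2⁻¹ : ℝ) ^ N := by
    intro N z hz
    calc dist z (F.parent z) ≤ ((2⁻¹ : ℝ≥0) ^ F.level z : ℝ≥0) :=
          NNReal.coe_le_coe.2 (F.treeDist_parent_le z)
      _ ≤ (2⁻¹ : ℝ) ^ N := by
          push_cast
          exact pow_le_pow_of_le_one (by norm_num) (by norm_num) hz
  refine Metric.dense_iff.2 fun ⟨x, y⟩ ε hε => ?_
  obtain ⟨N, hN⟩ := exists_pow_lt_of_lt_one hε (by norm_num : (2⁻¹ : ℝ) < 1)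
  obtain ⟨a, b, hab, rfl, rfl, ha, hb⟩ := hS x y N
  refine ⟨(a, b), ?_, hab⟩
  rw [Metric.mem_ball, Prod.dist_eq, max_lt_iff]
  exact ⟨(hdist ha).trans_lt hN, (hdist hb).trans_lt hN⟩

end GradedForest

theorem exists_seq_frequently_eq {β : Type*} [Countable β] (size : β → ℕ) (b₀ : β) :
    ∃ e : ℕ → β, (∀ n, size (e n) < n ∨ e n = b₀) ∧
      ∀ b, ∃ᶠ n in atTop, e n = b := by
  have : Nonempty β := ⟨b₀⟩
  obtain ⟨s, hs⟩ := exists_surjective_nat β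
  refine ⟨fun n => if size (s n.unpair.1) < n then s n.unpair.1 else b₀, fun n => ?_,
    fun b => ?_⟩
  · dsimp only
    split_ifs with h
    exacts [Or.inl h, Or.inr rfl]
  · obtain ⟨k, rfl⟩ := hs b
    refine frequently_atTop.2 fun N => ?_
    have hle := Nat.right_le_pair k (N + size (s k) + 1)
    refine ⟨Nat.pair k (N + size (s k) + 1), by omega, ?_⟩
    simp only [Nat.unpair_pair]
    rw [if_pos (by omega)]

namespace SL

theorem min_ne_two_iff : ∀ x y : Fin 3, min x y ≠ 2 ↔ x ≠ 2 ∨ y ≠ 2 := by decide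

theorem two_min : ∀ x : Fin 3, min 2 x = x := by decide

theorem mul_apply (f g : SL) (i : ℕ) : (SLmul f g).1 i = min (f.1 i) (g.1 i) := rfl

theorem zeroEl_apply (n i : ℕ) : (zeroEl n).1 i = if i = n then 0 else 2 := rfl

theorem oneEl_apply (n i : ℕ) : (oneEl n).1 i = if i = n then 1 else 2 := rfl

theorem zeroEl_apply_of_ne {n i : ℕ} (h : i ≠ n) : (zeroEl n).1 i = 2 := if_neg h

theorem oneEl_apply_of_ne {n i : ℕ} (h : i ≠ n) : (oneEl n).1 i = 2 := if_neg h

theorem zeroEl_mul_oneEl (n : ℕ) : SLmul (zeroEl n) (oneEl n) = zeroEl n := by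
  apply Subtype.ext
  funext i
  rw [mul_apply, zeroEl_apply, oneEl_apply]
  split_ifs <;> rfl

theorem oneEl_mul_zeroEl_ne (n : ℕ) : SLmul (oneEl n) (zeroEl n) ≠ oneEl n := fun h => by
  have := congrFun (congrArg Subtype.val h) n
  rw [mul_apply, zeroEl_apply, oneEl_apply, if_pos rfl, if_pos rfl] at this
  exact absurd this (by decide)

instance : Countable SL := by
  let graph (f : SL) : Finset (ℕ × Fin 3) := f.2.1.toFinset.image fun i => (i, f.1 i)
  have apply_eq_of_graph_eq : ∀ {f g : SL} {i : ℕ}, graph f = graph g → f.1 i ≠ 2 →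
      g.1 i = f.1 i := by
    intro f g i h hi
    have : (i, f.1 i) ∈ graph g := h ▸ Finset.mem_image_of_mem _ (by simpa using hi)
    obtain ⟨j, -, hj⟩ := Finset.mem_image.1 this
    obtain ⟨rfl, hj⟩ := Prod.mk.inj hj
    exact hj
  refine Function.Injective.countable (f := graph) fun f g h => Subtype.ext (funext fun i => ?_)
  by_cases hf : f.1 i = 2
  · by_cases hg : g.1 i = 2
    · rw [hf, hg]
    · exact apply_eq_of_graph_eq h.symm hg
  · exact (apply_eq_of_graph_eq h hf).symm

noncomputable def maxSupp (f : SL) : ℕ := sSup {i | f.1 i ≠ 2}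

theorem le_maxSupp {f : SL} {i : ℕ} (h : f.1 i ≠ 2) : i ≤ f.maxSupp :=
  le_csSup f.2.1.bddAbove h

theorem apply_maxSupp_ne_two (f : SL) : f.1 f.maxSupp ≠ 2 :=
  Nat.sSup_mem f.2.2 f.2.1.bddAbove

theorem apply_eq_two_of_maxSupp_lt {f : SL} {i : ℕ} (h : f.maxSupp < i) : f.1 i = 2 := by
  by_contra hi
  exact h.not_ge (le_maxSupp hi)

theorem maxSupp_eq {f : SL} {n : ℕ} (h : ∀ i ≠ n, f.1 i = 2) : f.maxSupp = n := by
  by_contra hne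
  exact f.apply_maxSupp_ne_two (h _ hne)

theorem maxSupp_zeroEl (n : ℕ) : (zeroEl n).maxSupp = n :=
  maxSupp_eq fun _ => zeroEl_apply_of_ne

theorem maxSupp_oneEl (n : ℕ) : (oneEl n).maxSupp = n :=
  maxSupp_eq fun _ => oneEl_apply_of_ne

theorem mul_apply_of_maxSupp_lt {b : SL} (z : SL) {i : ℕ} (h : b.maxSupp < i) :
    (SLmul b z).1 i = z.1 i := by
  rw [mul_apply, apply_eq_two_of_maxSupp_lt h, two_min]

theorem maxSupp_mul_of_lt {b z : SL} (h : b.maxSupp < z.maxSupp) :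
    (SLmul b z).maxSupp = z.maxSupp := by
  apply le_antisymm
  · by_contra! hlt
    apply apply_maxSupp_ne_two (SLmul b z)
    rw [mul_apply_of_maxSupp_lt _ (h.trans hlt), apply_eq_two_of_maxSupp_lt hlt]
  · exact le_maxSupp (by rw [mul_apply_of_maxSupp_lt _ h]; exact apply_maxSupp_ne_two z)

theorem exists_pairSeq : ∃ e : ℕ → SL × SL,
    (∀ n, max (e n).1.maxSupp (e n).2.maxSupp < n ∨ e n = (zeroEl 0, zeroEl 0)) ∧
      ∀ p, ∃ᶠ n in atTop, e n = p :=
  exists_seq_frequently_eq (fun p : SL × SL => max p.1.maxSupp p.2.maxSupp) _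

noncomputable def pairSeq : ℕ → SL × SL := exists_pairSeq.choose

theorem maxSupp_pairSeq_lt {n : ℕ} (hn : n ≠ 0) :
    (pairSeq n).1.maxSupp < n ∧ (pairSeq n).2.maxSupp < n := by
  rcases exists_pairSeq.choose_spec.1 n with h | h
  · exact max_lt_iff.1 h
  · rw [pairSeq, h, maxSupp_zeroEl]
    omega

theorem frequently_pairSeq_eq (p : SL × SL) : ∃ᶠ n in atTop, pairSeq n = p :=
  exists_pairSeq.choose_spec.2 p

noncomputable def target (z : SL) : SL :=
  if z.1 z.maxSupp = 0 then (pairSeq z.maxSupp).1 else (pairSeq z.maxSupp).2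

theorem maxSupp_target_lt {z : SL} (h : z.maxSupp ≠ 0) : z.target.maxSupp < z.maxSupp := by
  unfold target
  split_ifs
  exacts [(maxSupp_pairSeq_lt h).1, (maxSupp_pairSeq_lt h).2]

theorem target_zeroEl (n : ℕ) : (zeroEl n).target = (pairSeq n).1 := by
  rw [target, maxSupp_zeroEl, zeroEl_apply, if_pos rfl, if_pos rfl]

theorem target_oneEl (n : ℕ) : (oneEl n).target = (pairSeq n).2 := by
  rw [target, maxSupp_oneEl, oneEl_apply, if_pos rfl, if_neg (by decide)]

theorem target_mul {b z : SL} (h : b.maxSupp < z.maxSupp) : (SLmul b z).target = z.target := by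
  rw [target, target, maxSupp_mul_of_lt h, mul_apply_of_maxSupp_lt _ h]

noncomputable def parent (z : SL) : SL :=
  if h : z.maxSupp = 0 then z else
    ⟨fun i => if i = z.maxSupp then 2 else min (z.1 i) (z.target.1 i), by
      refine ⟨(z.2.1.union z.target.2.1).subset fun i hi => ?_,
        ⟨z.target.maxSupp, ?_⟩⟩
      · simp only [Set.mem_ofPred_eq] at hi
        split_ifs at hi
        · exact absurd rfl hi
        · exact (min_ne_two_iff _ _).1 hi
      · simp only [Set.mem_ofPred_eq, if_neg (maxSupp_target_lt h).ne]
        exact (min_ne_two_iff _ _).2 (Or.inr z.target.apply_maxSupp_ne_two)⟩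

theorem parent_apply {z : SL} (h : z.maxSupp ≠ 0) (i : ℕ) :
    (parent z).1 i = if i = z.maxSupp then 2 else min (z.1 i) (z.target.1 i) := by
  rw [show parent z = _ from dif_neg h]

theorem maxSupp_parent_lt {z : SL} (h : z.maxSupp ≠ 0) : (parent z).maxSupp < z.maxSupp := by
  have hj := apply_maxSupp_ne_two (parent z)
  rw [parent_apply h] at hj
  split_ifs at hj with hjm
  · exact absurd rfl hj
  · rcases (min_ne_two_iff _ _).1 hj with hz | ht
    · exact lt_of_le_of_ne (le_maxSupp hz) hjm
    · exact (le_maxSupp ht).trans_lt (maxSupp_target_lt h)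

theorem parent_mul {b z : SL} (h : b.maxSupp < z.maxSupp) :
    parent (SLmul b z) = SLmul b (parent z) := by
  have hz : z.maxSupp ≠ 0 := by omega
  have hbz := maxSupp_mul_of_lt h
  apply Subtype.ext
  funext i
  rw [parent_apply (hbz ▸ hz), mul_apply b (parent z), parent_apply hz, target_mul h, hbz,
    mul_apply]
  split_ifs with hi
  · rw [hi, apply_eq_two_of_maxSupp_lt h, two_min]
  · rw [min_assoc]

theorem parent_eq_target {z : SL} (hz : ∀ i ≠ z.maxSupp, z.1 i = 2) (h : z.maxSupp ≠ 0) :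
    parent z = z.target := by
  apply Subtype.ext
  funext i
  rw [parent_apply h]
  split_ifs with hi
  · rw [apply_eq_two_of_maxSupp_lt (hi ▸ maxSupp_target_lt h)]
  · rw [hz i hi, two_min]

theorem parent_zeroEl {n : ℕ} (hn : n ≠ 0) : parent (zeroEl n) = (pairSeq n).1 := by
  rw [← target_zeroEl]
  exact parent_eq_target (by rw [maxSupp_zeroEl]; exact fun _ => zeroEl_apply_of_ne)
    (by rwa [maxSupp_zeroEl])

theorem parent_oneEl {n : ℕ} (hn : n ≠ 0) : parent (oneEl n) = (pairSeq n).2 := by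
  rw [← target_oneEl]
  exact parent_eq_target (by rw [maxSupp_oneEl]; exact fun _ => oneEl_apply_of_ne)
    (by rwa [maxSupp_oneEl])

noncomputable instance : DecidableEq SL := Classical.decEq _

noncomputable def forest : GradedForest SL where
  parent := parent
  level := maxSupp
  level_parent_lt _ := maxSupp_parent_lt
  parent_eq_self _ h := dif_pos h

theorem continuous_SLmul (a : SL) : letI := forest.toMetricSpace; Continuous (SLmul a) :=
  forest.continuous_of_commute_parent (m := a.maxSupp) (fun _ => parent_mul)
    (fun _ => maxSupp_mul_of_lt)

theorem dense_zeroEl_oneEl :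
    letI := forest.toMetricSpace; Dense {p : SL × SL | ∃ n, p = (zeroEl n, oneEl n)} := by
  refine forest.dense_of_forall_exists_parent_eq fun x y N => ?_
  obtain ⟨n, hxy, hn⟩ :=
    ((frequently_pairSeq_eq (x, y)).and_eventually (eventually_gt_atTop N)).exists
  have hn0 : n ≠ 0 := by omega
  refine ⟨zeroEl n, oneEl n, ⟨n, rfl⟩, ?_, ?_, ?_, ?_⟩
  · exact (parent_zeroEl hn0).trans (congrArg Prod.fst hxy)
  · exact (parent_oneEl hn0).trans (congrArg Prod.snd hxy)
  · exact (maxSupp_zeroEl n).ge.trans' hn.le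
  · exact (maxSupp_oneEl n).ge.trans' hn.le

end SL

/-- The semilattice `SL` of functions `ω → {0,1,2}` with finite nonempty support admits a
metrizable shift-continuous topology `τ` in which `{(𝟎_n, 𝟏_n) : n ∈ ω}` is dense in
`SL × SL`; consequently the partial order `P = {(x,y) | x·y = x}` is dense and non-closed
in `SL × SL`. -/
theorem stmt16 :
    ∃ τ : TopologicalSpace SL,
      @TopologicalSpace.MetrizableSpace SL τ ∧
      (∀ a : SL, @Continuous SL SL τ τ (SLmul a)) ∧
      @Dense (SL × SL) (@instTopologicalSpaceProd SL SL τ τ)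
        {p : SL × SL | ∃ n : ℕ, p = (zeroEl n, oneEl n)} ∧
      @Dense (SL × SL) (@instTopologicalSpaceProd SL SL τ τ)
        {p : SL × SL | SLmul p.1 p.2 = p.1} ∧
      ¬ @IsClosed (SL × SL) (@instTopologicalSpaceProd SL SL τ τ)
        {p : SL × SL | SLmul p.1 p.2 = p.1} := by
  let := SL.forest.toMetricSpace
  have hP : Dense {p : SL × SL | SLmul p.1 p.2 = p.1} :=
    SL.dense_zeroEl_oneEl.mono <| by
      rintro _ ⟨n, rfl⟩
      exact SL.zeroEl_mul_oneEl n
  refine ⟨inferInstance, inferInstance, SL.continuous_SLmul, SL.dense_zeroEl_oneEl, hP,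
    fun hclosed => ?_⟩
  have hmem : (oneEl 0, zeroEl 0) ∈ {p : SL × SL | SLmul p.1 p.2 = p.1} := by
    rw [← hclosed.closure_eq, hP.closure_eq]
    trivial
  exact SL.oneEl_mul_zeroEl_ne 0 hmem
end

section
/- Let X be the semilattice of all functions f : ω → {0,1,2} with nonempty finite support f⁻¹({0,1}), under coordinatewise minimum. For any a, b ∈ X and any sequence s in X of the form s_n = 𝟎_{2^k 3^n} or s_n = 𝟏_{2^k 3^n} (k fixed), the set {n ∈ ω : a·s_n = b} is finite. -/
namespace SL

def support (f : SL) : Set ℕ := {i | f.1 i ≠ 2}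

theorem support_zeroEl (n : ℕ) : (zeroEl n).support = {n} := by
  ext i
  by_cases hi : i = n <;> simp [support, zeroEl, hi]

theorem support_oneEl (n : ℕ) : (oneEl n).support = {n} := by
  ext i
  by_cases hi : i = n <;> simp [support, oneEl, hi]

theorem mem_support_of_SLmul_eq {a s t : SL} {i j : ℕ} (hs : s.support = {i})
    (ht : t.support = {j}) (hij : i ≠ j) (h : SLmul a s = SLmul a t) : i ∈ a.support := by
  have hsi : s.1 i ≠ 2 := (Set.ext_iff.1 hs i).2 rfl
  have hti : t.1 i = 2 := by simpa [support] using (Set.ext_iff.1 ht i).not.2 hij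
  have hval : min (a.1 i) (s.1 i) = min (a.1 i) (t.1 i) := congrArg (fun f : SL => f.1 i) h
  have min_two : ∀ x y z : Fin 3, y ≠ 2 → z = 2 → min x y = min x z → x ≠ 2 := by decide
  exact min_two _ _ _ hsi hti hval

/-- At most one solution `n` has `p n ∉ a.support`, and `p` injective makes the others finite. -/
theorem finite_setOf_SLmul_eq (a b : SL) {s : ℕ → SL} {p : ℕ → ℕ} (hp : p.Injective)
    (hs : ∀ n, (s n).support = {p n}) : {n | SLmul a (s n) = b}.Finite := by
  set S := {n | SLmul a (s n) = b}
  have hin : (S ∩ p ⁻¹' a.support).Finite :=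
    (a.2.1.preimage hp.injOn).subset Set.inter_subset_right
  have hout : (S \ p ⁻¹' a.support).Subsingleton := by
    rintro n ⟨hn, hna⟩ m ⟨hm, -⟩
    by_contra hnm
    exact hna (mem_support_of_SLmul_eq (hs n) (hs m) (hp.ne hnm) (hn.trans hm.symm))
  simpa only [Set.inter_union_sdiff] using hin.union hout.finite

end SL

/-- In the semilattice `SL`, for any `a b : SL` and any sequence `s` of the form
`s n = 𝟎_{2^k 3^n}` or `s n = 𝟏_{2^k 3^n}` (for a fixed `k`), the set
`{n | a · s n = b}` is finite. -/
theorem stmt17 (a b : SL) (k : ℕ) (s : ℕ → SL)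
    (hs : (∀ n : ℕ, s n = zeroEl (2 ^ k * 3 ^ n)) ∨
          (∀ n : ℕ, s n = oneEl (2 ^ k * 3 ^ n))) :
    {n : ℕ | SLmul a (s n) = b}.Finite := by
  have hp : (fun n : ℕ => 2 ^ k * 3 ^ n).Injective :=
    (mul_right_injective₀ (by positivity)).comp (Nat.pow_right_injective (by norm_num))
  refine SL.finite_setOf_SLmul_eq a b hp fun n => ?_
  rcases hs with hs | hs <;> rw [hs n]
  exacts [SL.support_zeroEl _, SL.support_oneEl _]
end

section
/- There exists a countable semilattice X, sequences s, t ∈ X^ω, and points ℓ(s), ℓ(t) ∈ X such that X admits a shift-continuous metrizable topology in which s converges to ℓ(s) and t converges to ℓ(t), but X admits no Lawson Hausdorff topology (one with a base of open subsemilattices) in which s converges to ℓ(s) and t converges to ℓ(t). -/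
/-!
Take for `X` the clopen subsets of the Cantor space `ℕ → Bool` under `⊓`, with the metric
`d(A, B) = μ (A ∆ B)` for the coin-tossing measure `μ`; every translation `A ↦ a ⊓ A` is
`1`-Lipschitz. Let `s` run through the complements of the `2 ^ L` cylinders of length `L`, for
`L = 0, 1, 2, …`. Then `d(s k, ⊤) = 2 ^ (-L) → 0`, while the complements of any one level meet
in `⊥`. In a Hausdorff topology with a base of open subsemilattices, an open subsemilattice
around `⊤` missing `⊥` would contain a tail of `s`, hence a whole level, hence `⊥`.
-/

open Filter Topology MeasureTheory TopologicalSpace PiNat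
open scoped symmDiff

theorem not_tendsto_of_mem_infClosure_tail {X : Type*} [SemilatticeInf X] [TopologicalSpace X]
    [T2Space X]
    (hbase : ∀ x (U : Set X), IsOpen U → x ∈ U → ∃ V, IsOpen V ∧ x ∈ V ∧ V ⊆ U ∧ InfClosed V)
    {s : ℕ → X} {x y : X} (hxy : x ≠ y) (hy : ∀ N, y ∈ infClosure (s '' Set.Ici N)) :
    ¬ Tendsto s atTop (𝓝 x) := by
  intro hs
  obtain ⟨U, W, hU, -, hxU, hyW, hUW⟩ := t2_separation hxy
  obtain ⟨V, hV, hxV, hVU, hVinf⟩ := hbase x U hU hxU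
  obtain ⟨N, hN⟩ := eventually_atTop.1 (hs.eventually (hV.mem_nhds hxV))
  have hyV : y ∈ V := infClosure_min (Set.image_subset_iff.2 hN) hVinf (hy N)
  exact Set.disjoint_left.1 hUW (hVU hyV) hyW

namespace TopologicalSpace.Clopens

variable {α : Type*} [TopologicalSpace α]

instance [Nonempty α] : Nontrivial (Clopens α) :=
  ⟨⟨⊤, ⊥, fun h => Set.univ_nonempty.ne_empty (congrArg SetLike.coe h)⟩⟩

variable [MeasurableSpace α] (μ : Measure α) [IsFiniteMeasure μ] [μ.IsOpenPosMeasure]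

noncomputable abbrev measureMetric : MetricSpace (Clopens α) where
  dist A B := μ.real ((A : Set α) ∆ B)
  dist_self A := by simp
  dist_comm A B := by simp only [symmDiff_comm]
  dist_triangle A B C := measureReal_symmDiff_le _
  eq_of_dist_eq_zero {A B} h := by
    have hopen : IsOpen ((A : Set α) ∆ B) := by
      rw [Set.symmDiff_def]
      exact ((A.isClopen.diff B.isClopen).union (B.isClopen.diff A.isClopen)).isOpen
    have hAB : (A : Set α) ∆ B = ∅ :=
      (hopen.measure_eq_zero_iff μ).1 ((measureReal_eq_zero_iff).1 h)
    exact SetLike.coe_injective (symmDiff_eq_bot.1 hAB)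

theorem continuous_inf_left (a : Clopens α) :
    letI := measureMetric μ; Continuous (a ⊓ ·) := by
  let := measureMetric μ
  refine (LipschitzWith.of_dist_le' (K := 1) fun A B => ?_).continuous
  change μ.real (↑(a ⊓ A) ∆ ↑(a ⊓ B)) ≤ 1 * μ.real (↑A ∆ ↑B)
  rw [one_mul, coe_inf, coe_inf, ← Set.inter_symmDiff_distrib_left]
  exact measureReal_mono Set.inter_subset_right

theorem tendsto_measureMetric_iff {ι : Type*} {l : Filter ι} {s : ι → Clopens α}
    {A : Clopens α} :
    letI := measureMetric μ
    Tendsto s l (𝓝 A) ↔ Tendsto (fun i => μ.real (↑(s i) ∆ ↑A)) l (𝓝 0) :=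
  let := measureMetric μ
  tendsto_iff_dist_tendsto_zero

end TopologicalSpace.Clopens

theorem PiNat.isClopen_cylinder {E : ℕ → Type*} [∀ n, TopologicalSpace (E n)]
    [∀ n, DiscreteTopology (E n)] (x : ∀ n, E n) (n : ℕ) : IsClopen (cylinder x n) :=
  ⟨cylinder_eq_pi x n ▸ isClosed_set_pi fun _ _ => isClosed_discrete _, isOpen_cylinder E x n⟩

noncomputable def cantorMeasure : Measure (ℕ → Bool) :=
  Measure.infinitePi fun _ => (PMF.uniformOfFintype Bool).toMeasure

instance : IsProbabilityMeasure cantorMeasure := by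
  unfold cantorMeasure; infer_instance

theorem cantorMeasure_cylinder (x : ℕ → Bool) (n : ℕ) :
    cantorMeasure (cylinder x n) = 2⁻¹ ^ n := by
  rw [cylinder_eq_pi, cantorMeasure, Measure.infinitePi_pi _ fun _ _ => measurableSet_singleton _]
  simp

instance : cantorMeasure.IsOpenPosMeasure where
  open_pos U hU := by
    rintro ⟨x, hx⟩
    obtain ⟨_, ⟨y, n, rfl⟩, -, hcU⟩ :=
      (isTopologicalBasis_cylinders _).exists_subset_of_mem_open hx hU
    exact ne_bot_of_le_ne_bot (by simp [cantorMeasure_cylinder]) (measure_mono hcU)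

theorem Nat.exists_lt_two_pow_forall_testBit_eq (p : ℕ → Bool) (L : ℕ) :
    ∃ r < 2 ^ L, ∀ i < L, r.testBit i = p i := by
  induction L generalizing p with
  | zero => exact ⟨0, by simp, by simp⟩
  | succ L ih =>
    obtain ⟨r, hr, hbits⟩ := ih fun i => p (i + 1)
    refine ⟨Nat.bit (p 0) r, Nat.bit_lt_two_pow_succ_iff.2 hr, fun i hi => ?_⟩
    cases i with
    | zero => exact Nat.testBit_bit_zero _ _
    | succ i => rw [Nat.testBit_bit_succ]; exact hbits i (by omega)

/-- As `k` runs through `[2 ^ L, 2 ^ (L + 1))`, its `L` lowest binary digits run through all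
patterns of length `L`. -/
noncomputable def cantorSeq (k : ℕ) : Clopens (ℕ → Bool) :=
  (⟨cylinder k.testBit (Nat.log 2 k), isClopen_cylinder _ _⟩ : Clopens _)ᶜ

theorem coe_cantorSeq (k : ℕ) :
    (cantorSeq k : Set (ℕ → Bool)) = (cylinder k.testBit (Nat.log 2 k))ᶜ := rfl

theorem bot_mem_infClosure_cantorSeq_image_Ici (N : ℕ) :
    ⊥ ∈ infClosure (cantorSeq '' Set.Ici N) := by
  have hne : (Finset.Ico (2 ^ N) (2 ^ (N + 1))).Nonempty := ⟨2 ^ N, by simp [pow_succ]⟩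
  convert finsetInf'_mem_infClosure hne (f := cantorSeq) fun k hk => Set.mem_image_of_mem _ ?_
  · refine (eq_bot_iff.2 fun p hp => ?_).symm
    obtain ⟨r, hr, hbits⟩ := Nat.exists_lt_two_pow_forall_testBit_eq p N
    have hk : 2 ^ N + r ∈ Finset.Ico (2 ^ N) (2 ^ (N + 1)) := by
      rw [Finset.mem_Ico, pow_succ]; omega
    have hlog : Nat.log 2 (2 ^ N + r) = N :=
      Nat.log_eq_of_pow_le_of_lt_pow (by omega) (by rw [pow_succ]; omega)
    have hpk : p ∈ (cantorSeq (2 ^ N + r) : Set (ℕ → Bool)) := Finset.inf'_le cantorSeq hk hp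
    rw [coe_cantorSeq, hlog] at hpk
    exact hpk (mem_cylinder_iff.2 fun i hi => by rw [Nat.testBit_two_pow_add_gt hi, hbits i hi])
  · exact Nat.lt_two_pow_self.le.trans (Finset.mem_Ico.1 hk).1

theorem tendsto_measureReal_cantorSeq_symmDiff_top :
    Tendsto (fun k => cantorMeasure.real (↑(cantorSeq k) ∆ ↑(⊤ : Clopens (ℕ → Bool)))) atTop
      (𝓝 0) := by
  have hlog : Tendsto (Nat.log 2) atTop atTop :=
    tendsto_atTop_atTop.2 fun L => ⟨2 ^ L, fun k hk => Nat.le_log_of_pow_le one_lt_two hk⟩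
  have hdist : ∀ k, cantorMeasure.real (↑(cantorSeq k) ∆ ↑(⊤ : Clopens (ℕ → Bool)))
      = 2⁻¹ ^ Nat.log 2 k := by
    intro k
    rw [coe_cantorSeq, Clopens.coe_top, ← Set.top_eq_univ, symmDiff_top, hnot_eq_compl,
      compl_compl, measureReal_def, cantorMeasure_cylinder]
    simp
  simp_rw [hdist]
  exact (tendsto_pow_atTop_nhds_zero_of_lt_one (by norm_num) (by norm_num)).comp hlog

/-- There is a countable semilattice `X`, sequences `s, t` and points `ls, lt` such that `X`
admits a shift-continuous metrizable topology in which `s → ls` and `t → lt`, but `X` admits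
no Lawson Hausdorff topology (one with a base of open subsemilattices) in which `s → ls` and
`t → lt`. -/
theorem stmt18 :
    ∃ (X : Type) (m : X → X → X),
      Countable X ∧
      (∀ x y z : X, m (m x y) z = m x (m y z)) ∧
      (∀ x y : X, m x y = m y x) ∧
      (∀ x : X, m x x = x) ∧
      ∃ (s t : ℕ → X) (ls lt : X),
        (∃ τ : TopologicalSpace X, @TopologicalSpace.MetrizableSpace X τ ∧
          (∀ a : X, @Continuous X X τ τ (m a)) ∧
          Tendsto s atTop (@nhds X τ ls) ∧ Tendsto t atTop (@nhds X τ lt)) ∧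
        ¬ ∃ τ : TopologicalSpace X, @T2Space X τ ∧
          (∀ x : X, ∀ U : Set X, τ.IsOpen U → x ∈ U →
            ∃ V : Set X, τ.IsOpen V ∧ x ∈ V ∧ V ⊆ U ∧
              ∀ a ∈ V, ∀ b ∈ V, m a b ∈ V) ∧
          Tendsto s atTop (@nhds X τ ls) ∧ Tendsto t atTop (@nhds X τ lt) := by
  refine ⟨Clopens (ℕ → Bool), (· ⊓ ·), Clopens.countable_iff_secondCountable.2 inferInstance,
    inf_assoc, inf_comm, inf_idem, cantorSeq, fun _ => ⊥, ⊤, ⊥, ?_, ?_⟩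
  · let := Clopens.measureMetric cantorMeasure
    exact ⟨_, inferInstance, Clopens.continuous_inf_left _,
      (Clopens.tendsto_measureMetric_iff _).2 tendsto_measureReal_cantorSeq_symmDiff_top,
      tendsto_const_nhds⟩
  · rintro ⟨τ, hT2, hbase, hs, -⟩
    exact not_tendsto_of_mem_infClosure_tail hbase top_ne_bot
      bot_mem_infClosure_cantorSeq_image_Ici hs
end

section
/- If a topological space X is generated (as a k_ω-space) by a countable increasing family (K_n) of compact Hausdorff closed subspaces (i.e., U ⊆ X is open iff U ∩ K_n is open in K_n for all n), then X is normal. -/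
open Set Topology

lemma sep_aux {X : Type*} [TopologicalSpace X] {Kn : Set X}
    (hc : IsCompact Kn) (h2 : T2Space ↥Kn) (hcl : IsClosed Kn)
    {C D : Set X} (hC : IsClosed C) (hD : IsClosed D)
    (hCK : C ⊆ Kn) (hDK : D ⊆ Kn) (hdis : Disjoint C D) :
    ∃ U V : Set X, (∃ O, IsOpen O ∧ U = O ∩ Kn) ∧ (∃ O, IsOpen O ∧ V = O ∩ Kn) ∧
      C ⊆ U ∧ D ⊆ V ∧ Disjoint (closure U) (closure V) := by
  haveI : CompactSpace ↥Kn := isCompact_iff_compactSpace.mp hc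
  haveI := h2
  haveI : NormalSpace ↥Kn := inferInstance
  set C' : Set ↥Kn := Subtype.val ⁻¹' C with hC'def
  set D' : Set ↥Kn := Subtype.val ⁻¹' D with hD'def
  have hC' : IsClosed C' := hC.preimage continuous_subtype_val
  have hD' : IsClosed D' := hD.preimage continuous_subtype_val
  have hdis' : Disjoint C' D' := hdis.preimage _
  have h1 : C' ⊆ D'ᶜ := fun x hx hx' => hdis'.ne_of_mem hx hx' rfl
  obtain ⟨u, hu, hCu, hcu⟩ := normal_exists_closure_subset hC' hD'.isOpen_compl h1
  have h2' : D' ⊆ (closure u)ᶜ := fun x hx hx' => (hcu hx') hx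
  obtain ⟨v, hv, hDv, hcv⟩ := normal_exists_closure_subset hD' isClosed_closure.isOpen_compl h2'
  have hdisj : Disjoint (closure u) (closure v) :=
    Set.disjoint_left.mpr fun x hx hx' => (hcv hx') hx
  have hemb : Topology.IsClosedEmbedding ((↑) : ↥Kn → X) := Topology.IsClosedEmbedding.subtypeVal hcl
  refine ⟨Subtype.val '' u, Subtype.val '' v, ?_, ?_, ?_, ?_, ?_⟩
  · obtain ⟨O, hO, hOu⟩ := isOpen_induced_iff.mp hu
    exact ⟨O, hO, by rw [← hOu, Subtype.image_preimage_coe, Set.inter_comm]⟩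
  · obtain ⟨O, hO, hOv⟩ := isOpen_induced_iff.mp hv
    exact ⟨O, hO, by rw [← hOv, Subtype.image_preimage_coe, Set.inter_comm]⟩
  · intro x hx
    exact ⟨⟨x, hCK hx⟩, hCu hx, rfl⟩
  · intro x hx
    exact ⟨⟨x, hDK hx⟩, hDv hx, rfl⟩
  · rw [hemb.closure_image_eq, hemb.closure_image_eq]
    exact Set.disjoint_image_of_injective Subtype.val_injective hdisj

/-- If a topological space `X` is generated (as a `k_ω`-space) by a countable increasing
family `(K n)` of compact Hausdorff closed subspaces covering `X`, then `X` is normal. -/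
theorem stmt19 {X : Type*} [TopologicalSpace X] (K : ℕ → Set X)
    (hmono : ∀ n, K n ⊆ K (n + 1))
    (hcomp : ∀ n, IsCompact (K n))
    (hT2 : ∀ n, T2Space ↥(K n))
    (hclosed : ∀ n, IsClosed (K n))
    (hcover : (⋃ n, K n) = Set.univ)
    (hgen : ∀ U : Set X, IsOpen U ↔ ∀ n, IsOpen (Subtype.val ⁻¹' U : Set ↥(K n))) :
    NormalSpace X := by
  have hKmono : ∀ {m n : ℕ}, m ≤ n → K m ⊆ K n := by
    intro m n h
    induction h with
    | refl => exact le_refl _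
    | step h ih => exact ih.trans (hmono _)
  constructor
  intro A B hA hB hAB
  -- the invariant
  set Inv : ℕ → Set X × Set X → Prop := fun n p =>
    (∃ O, IsOpen O ∧ p.1 = O ∩ K n) ∧ (∃ O, IsOpen O ∧ p.2 = O ∩ K n) ∧
    A ∩ K n ⊆ p.1 ∧ B ∩ K n ⊆ p.2 ∧ Disjoint (closure p.1) (closure p.2) with hInv
  have hclK : ∀ n (S : Set X), S ⊆ K n → closure S ⊆ K n := fun n S hS =>
    (closure_minimal hS (hclosed n))
  have hsub1 : ∀ n p, Inv n p → p.1 ⊆ K n := by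
    rintro n p ⟨⟨O, _, hO⟩, _⟩; rw [hO]; exact Set.inter_subset_right
  have hsub2 : ∀ n p, Inv n p → p.2 ⊆ K n := by
    rintro n p ⟨_, ⟨O, _, hO⟩, _⟩; rw [hO]; exact Set.inter_subset_right
  have base : ∃ p : Set X × Set X, Inv 0 p := by
    obtain ⟨U, V, h1, h2, h3, h4, h5⟩ := sep_aux (hcomp 0) (hT2 0) (hclosed 0)
      (hA.inter (hclosed 0)) (hB.inter (hclosed 0))
      Set.inter_subset_right Set.inter_subset_right
      (hAB.mono Set.inter_subset_left Set.inter_subset_left)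
    exact ⟨(U, V), h1, h2, h3, h4, h5⟩
  have step : ∀ n (p : Set X × Set X), Inv n p →
      ∃ q : Set X × Set X, Inv (n+1) q ∧ p.1 ⊆ q.1 ∧ p.2 ⊆ q.2 := by
    intro n p hp
    obtain ⟨hrel1, hrel2, hAp, hBp, hdis⟩ := hp
    have hp1K : closure p.1 ⊆ K n := hclK n _ (hsub1 n p ⟨hrel1, hrel2, hAp, hBp, hdis⟩)
    have hp2K : closure p.2 ⊆ K n := hclK n _ (hsub2 n p ⟨hrel1, hrel2, hAp, hBp, hdis⟩)
    have hCcl : IsClosed ((A ∩ K (n+1)) ∪ closure p.1) :=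
      (hA.inter (hclosed (n+1))).union isClosed_closure
    have hDcl : IsClosed ((B ∩ K (n+1)) ∪ closure p.2) :=
      (hB.inter (hclosed (n+1))).union isClosed_closure
    have hCK : (A ∩ K (n+1)) ∪ closure p.1 ⊆ K (n+1) :=
      Set.union_subset Set.inter_subset_right (hp1K.trans (hmono n))
    have hDK : (B ∩ K (n+1)) ∪ closure p.2 ⊆ K (n+1) :=
      Set.union_subset Set.inter_subset_right (hp2K.trans (hmono n))
    have hdisCD : Disjoint ((A ∩ K (n+1)) ∪ closure p.1) ((B ∩ K (n+1)) ∪ closure p.2) := by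
      rw [Set.disjoint_union_left]
      constructor
      · rw [Set.disjoint_union_right]
        refine ⟨hAB.mono Set.inter_subset_left Set.inter_subset_left, ?_⟩
        -- A ∩ K (n+1) disjoint from closure p.2
        refine Set.disjoint_left.mpr fun x hx hx' => ?_
        have hxKn : x ∈ K n := hp2K hx'
        have hx1 : x ∈ p.1 := hAp ⟨hx.1, hxKn⟩
        exact Set.disjoint_left.mp hdis (subset_closure hx1) hx'
      · rw [Set.disjoint_union_right]
        refine ⟨?_, hdis⟩
        refine Set.disjoint_left.mpr fun x hx hx' => ?_
        have hxKn : x ∈ K n := hp1K hx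
        have hx2 : x ∈ p.2 := hBp ⟨hx'.1, hxKn⟩
        exact Set.disjoint_left.mp hdis hx (subset_closure hx2)
    obtain ⟨U, V, h1, h2, h3, h4, h5⟩ := sep_aux (hcomp (n+1)) (hT2 (n+1)) (hclosed (n+1))
      hCcl hDcl hCK hDK hdisCD
    refine ⟨(U, V), ⟨h1, h2, ?_, ?_, h5⟩, ?_, ?_⟩
    · exact (Set.subset_union_left).trans h3
    · exact (Set.subset_union_left).trans h4
    · exact (subset_closure.trans (Set.subset_union_right)).trans h3
    · exact (subset_closure.trans (Set.subset_union_right)).trans h4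
  -- build the sequence
  choose f hf1 hf2 hf3 using step
  obtain ⟨p0, hp0⟩ := base
  let g : (n : ℕ) → {p : Set X × Set X // Inv n p} := fun n =>
    Nat.rec ⟨p0, hp0⟩ (fun n ih => ⟨f n ih.1 ih.2, hf1 n ih.1 ih.2⟩) n
  have hg : ∀ n, Inv n (g n).1 := fun n => (g n).2
  have hgmono1 : ∀ n, (g n).1.1 ⊆ (g (n+1)).1.1 := fun n => hf2 n (g n).1 (g n).2
  have hgmono2 : ∀ n, (g n).1.2 ⊆ (g (n+1)).1.2 := fun n => hf3 n (g n).1 (g n).2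
  have hmonoU : ∀ {m n : ℕ}, m ≤ n → (g m).1.1 ⊆ (g n).1.1 := by
    intro m n h
    induction h with
    | refl => exact le_refl _
    | step h ih => exact ih.trans (hgmono1 _)
  have hmonoV : ∀ {m n : ℕ}, m ≤ n → (g m).1.2 ⊆ (g n).1.2 := by
    intro m n h
    induction h with
    | refl => exact le_refl _
    | step h ih => exact ih.trans (hgmono2 _)
  refine ⟨⋃ n, (g n).1.1, ⋃ n, (g n).1.2, ?_, ?_, ?_, ?_, ?_⟩
  · -- open
    rw [hgen]
    intro n
    have heq : (⋃ m, (g m).1.1) = ⋃ m, (g (n + m)).1.1 := by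
      apply Set.Subset.antisymm
      · exact Set.iUnion_subset fun m => (hmonoU (Nat.le_add_left m n)).trans
          (Set.subset_iUnion (fun m => (g (n + m)).1.1) m)
      · exact Set.iUnion_subset fun m => Set.subset_iUnion (fun m => (g m).1.1) (n + m)
    rw [heq, Set.preimage_iUnion]
    apply isOpen_iUnion
    intro m
    obtain ⟨O, hO, hOeq⟩ := (hg (n + m)).1
    have : (Subtype.val ⁻¹' (g (n + m)).1.1 : Set ↥(K n)) = Subtype.val ⁻¹' O := by
      rw [hOeq]
      ext ⟨x, hx⟩
      simp only [Set.mem_preimage, Set.mem_inter_iff]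
      exact ⟨fun h => h.1, fun h => ⟨h, hKmono (Nat.le_add_right n m) hx⟩⟩
    rw [this]
    exact hO.preimage continuous_subtype_val
  · rw [hgen]
    intro n
    have heq : (⋃ m, (g m).1.2) = ⋃ m, (g (n + m)).1.2 := by
      apply Set.Subset.antisymm
      · exact Set.iUnion_subset fun m => (hmonoV (Nat.le_add_left m n)).trans
          (Set.subset_iUnion (fun m => (g (n + m)).1.2) m)
      · exact Set.iUnion_subset fun m => Set.subset_iUnion (fun m => (g m).1.2) (n + m)
    rw [heq, Set.preimage_iUnion]
    apply isOpen_iUnion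
    intro m
    obtain ⟨O, hO, hOeq⟩ := (hg (n + m)).2.1
    have : (Subtype.val ⁻¹' (g (n + m)).1.2 : Set ↥(K n)) = Subtype.val ⁻¹' O := by
      rw [hOeq]
      ext ⟨x, hx⟩
      simp only [Set.mem_preimage, Set.mem_inter_iff]
      exact ⟨fun h => h.1, fun h => ⟨h, hKmono (Nat.le_add_right n m) hx⟩⟩
    rw [this]
    exact hO.preimage continuous_subtype_val
  · -- A ⊆ U
    intro x hx
    have : x ∈ ⋃ n, K n := by rw [hcover]; trivial
    obtain ⟨_, ⟨n, rfl⟩, hxn⟩ := this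
    exact Set.mem_iUnion.mpr ⟨n, (hg n).2.2.1 ⟨hx, hxn⟩⟩
  · intro x hx
    have : x ∈ ⋃ n, K n := by rw [hcover]; trivial
    obtain ⟨_, ⟨n, rfl⟩, hxn⟩ := this
    exact Set.mem_iUnion.mpr ⟨n, (hg n).2.2.2.1 ⟨hx, hxn⟩⟩
  · -- disjoint
    rw [Set.disjoint_left]
    rintro x hx hx'
    obtain ⟨_, ⟨m, rfl⟩, hxm⟩ := hx
    obtain ⟨_, ⟨n, rfl⟩, hxn⟩ := hx'
    have h1 : x ∈ (g (max m n)).1.1 := hmonoU (le_max_left m n) hxm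
    have h2 : x ∈ (g (max m n)).1.2 := hmonoV (le_max_right m n) hxn
    exact Set.disjoint_left.mp (hg (max m n)).2.2.2.2 (subset_closure h1) (subset_closure h2)
end
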